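/- arXiv:1707.06467 — 9 statements merged into one kernel-verified Lean document; each statement's English description precedes it below -/
import Mathlib

section
/- Let 1 ≤ r < n, write x = (x₁, x₀) ∈ ℝʳ × ℝ^{n−r}, let B be an n×n real symmetric matrix, b ∈ ℝⁿ, k ∈ ℝ, Q(x) := xᵀBx + 2bᵀx − k, X := {x : Q(x) = 0}, X_≤ := {x : Q(x) ≤ 0} nonempty, and X₀,≤ := {x₀ ∈ ℝ^{n−r} : Q(0_r, x₀) ≤ 0}. (1) If X₀,≤ is nonempty, then inf{‖x₁‖² : x ∈ X_≤} = 0 and the set of minimisers of ‖x₁‖² over X_≤ is exactly {(0_r, x₀) : x₀ ∈ X₀,≤}. (2) If X₀,≤ is empty, then X is nonempty, inf{‖x₁‖² : x ∈ X_≤} = inf{‖x₁‖² : x ∈ X}, and the set of minimisers of ‖x₁‖² over X_≤ equals the set of minimisers of ‖x₁‖² over X. -/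
/-!
Every value of `‖x₁‖²` is `≥ 0`, and `0` is attained on `X_≤` exactly at the feasible points
with `x₁ = 0`; this gives (1). In case (2) `Q > 0` on `{x₁ = 0}`, so for `Q x < 0` the path
`t ↦ (t x₁, x₀)`, `t ∈ [0, 1]`, runs from `Q > 0` to `Q < 0` and by the intermediate value
theorem meets `X` at some `t < 1`, where `‖x₁‖²` has been multiplied by `t² < 1`. Hence points
of `X_≤ \ X` are strictly beaten by points of `X`, which forces both the infima and the sets of
minimisers over `X_≤` and over `X` to agree.
-/

open Matrix

section Minimisers

variable {α β : Type*} {f : α → β} {X Y : Set α}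

lemma sep_forall_le_eq_of_isLeast [PartialOrder β] {a : β} (h : IsLeast (f '' Y) a) :
    {x ∈ Y | ∀ y ∈ Y, f x ≤ f y} = {x ∈ Y | f x = a} := by
  ext x
  refine and_congr_right fun hx => ⟨fun hmin => ?_, fun hfx y hy => hfx ▸ h.2 ⟨y, hy, rfl⟩⟩
  obtain ⟨z, hz, rfl⟩ := h.1
  exact le_antisymm (hmin z hz) (h.2 ⟨x, hx, rfl⟩)

lemma sep_forall_le_eq_of_forall_exists_lt [Preorder β] (hXY : X ⊆ Y)
    (h : ∀ y ∈ Y \ X, ∃ x ∈ X, f x < f y) :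
    {x ∈ Y | ∀ y ∈ Y, f x ≤ f y} = {x ∈ X | ∀ y ∈ X, f x ≤ f y} := by
  ext x
  constructor
  · rintro ⟨hxY, hmin⟩
    have hxX : x ∈ X := by
      by_contra hxX
      obtain ⟨z, hzX, hlt⟩ := h x ⟨hxY, hxX⟩
      exact (hlt.trans_le (hmin z (hXY hzX))).false
    exact ⟨hxX, fun y hy => hmin y (hXY hy)⟩
  · rintro ⟨hxX, hmin⟩
    refine ⟨hXY hxX, fun y hy => ?_⟩
    by_cases hyX : y ∈ X
    · exact hmin y hyX
    · obtain ⟨z, hzX, hlt⟩ := h y ⟨hy, hyX⟩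
      exact (hmin z hzX).trans hlt.le

lemma csInf_image_eq_of_forall_exists_le [ConditionallyCompleteLinearOrder β] (hXY : X ⊆ Y)
    (hY : Y.Nonempty) (hbdd : BddBelow (f '' Y)) (h : ∀ y ∈ Y, ∃ x ∈ X, f x ≤ f y) :
    sInf (f '' Y) = sInf (f '' X) := by
  obtain ⟨x₀, hx₀, -⟩ := h hY.some hY.some_mem
  apply le_antisymm
  · exact csInf_le_csInf hbdd ⟨f x₀, x₀, hx₀, rfl⟩ (Set.image_mono hXY)
  · refine le_csInf (hY.image f) ?_
    rintro _ ⟨y, hy, rfl⟩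
    obtain ⟨x, hx, hle⟩ := h y hy
    exact (csInf_le (hbdd.mono (Set.image_mono hXY)) ⟨x, hx, rfl⟩).trans hle

end Minimisers

section LeftCoordinates

variable {ι κ : Type*}

def scaleLeft (t : ℝ) (x : ι ⊕ κ → ℝ) : ι ⊕ κ → ℝ := Sum.elim (t • (x ∘ Sum.inl)) (x ∘ Sum.inr)

lemma scaleLeft_one (x : ι ⊕ κ → ℝ) : scaleLeft 1 x = x := by
  simp [scaleLeft]

lemma scaleLeft_zero (x : ι ⊕ κ → ℝ) : scaleLeft 0 x = Sum.elim (0 : ι → ℝ) (x ∘ Sum.inr) := by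
  simp [scaleLeft]

lemma continuous_scaleLeft (x : ι ⊕ κ → ℝ) : Continuous fun t => scaleLeft t x := by
  refine continuous_pi fun i => ?_
  cases i <;> simp only [scaleLeft, Sum.elim_inl, Sum.elim_inr] <;> fun_prop

lemma exists_scaleLeft_eq_zero {Q : (ι ⊕ κ → ℝ) → ℝ} (hQ : Continuous Q)
    (hpos : ∀ x₀, 0 < Q (Sum.elim (0 : ι → ℝ) x₀)) {x : ι ⊕ κ → ℝ} (hx : Q x ≤ 0) :
    ∃ t ∈ Set.Icc (0 : ℝ) 1, Q (scaleLeft t x) = 0 := by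
  have hcont : ContinuousOn (fun t => Q (scaleLeft t x)) (Set.Icc 0 1) :=
    (hQ.comp (continuous_scaleLeft x)).continuousOn
  refine intermediate_value_Icc' zero_le_one hcont ⟨?_, ?_⟩
  · simpa [scaleLeft_one] using hx
  · simpa [scaleLeft_zero] using (hpos _).le

variable [Fintype ι]

def leftSqNorm (x : ι ⊕ κ → ℝ) : ℝ := (x ∘ Sum.inl) ⬝ᵥ (x ∘ Sum.inl)

lemma leftSqNorm_nonneg (x : ι ⊕ κ → ℝ) : 0 ≤ leftSqNorm x :=
  Finset.sum_nonneg fun i _ => mul_self_nonneg (x (Sum.inl i))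

lemma leftSqNorm_eq_zero_iff {x : ι ⊕ κ → ℝ} :
    leftSqNorm x = 0 ↔ ∃ x₀, x = Sum.elim (0 : ι → ℝ) x₀ := by
  refine ⟨fun h => ⟨x ∘ Sum.inr, ?_⟩, ?_⟩
  · rw [← dotProduct_self_eq_zero.mp h]
    exact (Sum.elim_comp_inl_inr x).symm
  · rintro ⟨x₀, rfl⟩
    simp [leftSqNorm]

lemma leftSqNorm_scaleLeft (t : ℝ) (x : ι ⊕ κ → ℝ) :
    leftSqNorm (scaleLeft t x) = t ^ 2 * leftSqNorm x := by
  simp [leftSqNorm, scaleLeft, smul_dotProduct, dotProduct_smul, sq, mul_assoc]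

lemma zero_mem_lowerBounds_leftSqNorm_image (S : Set (ι ⊕ κ → ℝ)) :
    0 ∈ lowerBounds (leftSqNorm '' S) := by
  rintro _ ⟨x, -, rfl⟩
  exact leftSqNorm_nonneg x

lemma isLeast_leftSqNorm_image {S : Set (ι ⊕ κ → ℝ)} {x₀ : κ → ℝ}
    (h : Sum.elim (0 : ι → ℝ) x₀ ∈ S) : IsLeast (leftSqNorm '' S) 0 :=
  ⟨⟨_, h, leftSqNorm_eq_zero_iff.mpr ⟨x₀, rfl⟩⟩, zero_mem_lowerBounds_leftSqNorm_image S⟩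

lemma sep_forall_leftSqNorm_le_eq {S : Set (ι ⊕ κ → ℝ)} {x₀ : κ → ℝ}
    (h : Sum.elim (0 : ι → ℝ) x₀ ∈ S) :
    {x ∈ S | ∀ y ∈ S, leftSqNorm x ≤ leftSqNorm y} =
      {x | ∃ y₀, Sum.elim (0 : ι → ℝ) y₀ ∈ S ∧ x = Sum.elim (0 : ι → ℝ) y₀} := by
  rw [sep_forall_le_eq_of_isLeast (isLeast_leftSqNorm_image h)]
  ext x
  constructor
  · rintro ⟨hx, hLx⟩
    obtain ⟨y₀, rfl⟩ := leftSqNorm_eq_zero_iff.mp hLx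
    exact ⟨y₀, hx, rfl⟩
  · rintro ⟨y₀, hy₀, rfl⟩
    exact ⟨hy₀, leftSqNorm_eq_zero_iff.mpr ⟨y₀, rfl⟩⟩

lemma exists_eq_zero_leftSqNorm_lt {Q : (ι ⊕ κ → ℝ) → ℝ} (hQ : Continuous Q)
    (hpos : ∀ x₀, 0 < Q (Sum.elim (0 : ι → ℝ) x₀)) {x : ι ⊕ κ → ℝ} (hx : Q x < 0) :
    ∃ z, Q z = 0 ∧ leftSqNorm z < leftSqNorm x := by
  obtain ⟨t, ⟨ht₀, ht₁⟩, hzero⟩ := exists_scaleLeft_eq_zero hQ hpos hx.le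
  have ht : t < 1 := ht₁.lt_of_ne fun h => by
    rw [h, scaleLeft_one] at hzero
    exact hx.ne hzero
  have hLx : 0 < leftSqNorm x := (leftSqNorm_nonneg x).lt_of_ne fun h => by
    obtain ⟨x₀, rfl⟩ := leftSqNorm_eq_zero_iff.mp h.symm
    exact (hpos x₀).not_gt hx
  refine ⟨scaleLeft t x, hzero, ?_⟩
  rw [leftSqNorm_scaleLeft]
  have : t ^ 2 < 1 := by nlinarith
  nlinarith

end LeftCoordinates

lemma continuous_quadratic {n : Type*} [Fintype n] (B : Matrix n n ℝ) (b : n → ℝ) (k : ℝ) :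
    Continuous fun x : n → ℝ => x ⬝ᵥ B *ᵥ x + 2 * (b ⬝ᵥ x) - k := by
  have hmul : Continuous fun x : n → ℝ => B *ᵥ x := continuous_const.matrix_mulVec continuous_id
  fun_prop

theorem stmt5_general {r m : ℕ}
    (B : Matrix (Fin r ⊕ Fin m) (Fin r ⊕ Fin m) ℝ)
    (b : Fin r ⊕ Fin m → ℝ) (k : ℝ) :
    let Q : (Fin r ⊕ Fin m → ℝ) → ℝ := fun x => x ⬝ᵥ B.mulVec x + 2 * (b ⬝ᵥ x) - k
    let L : (Fin r ⊕ Fin m → ℝ) → ℝ := fun x => (x ∘ Sum.inl) ⬝ᵥ (x ∘ Sum.inl)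
    let X : Set (Fin r ⊕ Fin m → ℝ) := {x | Q x = 0}
    let Xle : Set (Fin r ⊕ Fin m → ℝ) := {x | Q x ≤ 0}
    let X0le : Set (Fin m → ℝ) := {x0 | Q (Sum.elim (0 : Fin r → ℝ) x0) ≤ 0}
    Xle.Nonempty →
      ((X0le.Nonempty →
          sInf (L '' Xle) = 0 ∧
          {x ∈ Xle | ∀ y ∈ Xle, L x ≤ L y} = {x | ∃ x0 ∈ X0le, x = Sum.elim (0 : Fin r → ℝ) x0}) ∧
       (X0le = ∅ →
          X.Nonempty ∧
          sInf (L '' Xle) = sInf (L '' X) ∧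
          {x ∈ Xle | ∀ y ∈ Xle, L x ≤ L y} = {x ∈ X | ∀ y ∈ X, L x ≤ L y})) := by
  intro Q L X Xle X0le hne
  refine ⟨fun ⟨x₀, hx₀⟩ =>
    ⟨(isLeast_leftSqNorm_image hx₀).csInf_eq, sep_forall_leftSqNorm_le_eq hx₀⟩, fun hempty => ?_⟩
  have hpos : ∀ x₀, 0 < Q (Sum.elim (0 : Fin r → ℝ) x₀) := fun x₀ =>
    not_le.mp (Set.eq_empty_iff_forall_notMem.mp hempty x₀)
  have hXY : X ⊆ Xle := fun x hx => hx.le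
  have hlt : ∀ y ∈ Xle \ X, ∃ x ∈ X, L x < L y := fun y ⟨hy, hyX⟩ =>
    exists_eq_zero_leftSqNorm_lt (continuous_quadratic B b k) hpos (hy.lt_of_ne hyX)
  have hle : ∀ y ∈ Xle, ∃ x ∈ X, L x ≤ L y := fun y hy => by
    by_cases hyX : y ∈ X
    · exact ⟨y, hyX, le_rfl⟩
    · obtain ⟨x, hx, hxy⟩ := hlt y ⟨hy, hyX⟩
      exact ⟨x, hx, hxy.le⟩
  obtain ⟨z, hz, -⟩ := hle hne.some hne.some_mem
  have hbdd : BddBelow (L '' Xle) := ⟨0, zero_mem_lowerBounds_leftSqNorm_image Xle⟩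
  exact ⟨⟨z, hz⟩, csInf_image_eq_of_forall_exists_le hXY hne hbdd hle,
    sep_forall_le_eq_of_forall_exists_lt hXY hlt⟩

/-- Inequality-constrained variant of a centred least-squares problem with
`A = diag(I_r, O_{n−r})`: variables are indexed by `Fin r ⊕ Fin m` (`m = n − r`),
the loss is `‖x₁‖²` where `x₁ = x ∘ Sum.inl`, the constraint is
`Q(x) = xᵀBx + 2bᵀx − k ≤ 0` with `X_≤` nonempty, and
`X₀,≤ = {x₀ | Q(0, x₀) ≤ 0}`. (1) If `X₀,≤` is nonempty the infimum is `0`,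
attained exactly on `{(0, x₀) : x₀ ∈ X₀,≤}`; (2) otherwise `X = {Q = 0}` is nonempty,
the infima over `X_≤` and `X` agree, and the minimiser sets agree. -/
theorem stmt5 {r m : ℕ} (hr : 1 ≤ r) (hm : 1 ≤ m)
    (B : Matrix (Fin r ⊕ Fin m) (Fin r ⊕ Fin m) ℝ) (hB : B.IsSymm)
    (b : Fin r ⊕ Fin m → ℝ) (k : ℝ) :
    let Q : (Fin r ⊕ Fin m → ℝ) → ℝ := fun x => x ⬝ᵥ B.mulVec x + 2 * (b ⬝ᵥ x) - k
    let L : (Fin r ⊕ Fin m → ℝ) → ℝ := fun x => (x ∘ Sum.inl) ⬝ᵥ (x ∘ Sum.inl)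
    let X : Set (Fin r ⊕ Fin m → ℝ) := {x | Q x = 0}
    let Xle : Set (Fin r ⊕ Fin m → ℝ) := {x | Q x ≤ 0}
    let X0le : Set (Fin m → ℝ) := {x0 | Q (Sum.elim (0 : Fin r → ℝ) x0) ≤ 0}
    Xle.Nonempty →
      ((X0le.Nonempty →
          sInf (L '' Xle) = 0 ∧
          {x ∈ Xle | ∀ y ∈ Xle, L x ≤ L y} = {x | ∃ x0 ∈ X0le, x = Sum.elim (0 : Fin r → ℝ) x0}) ∧
       (X0le = ∅ →
          X.Nonempty ∧
          sInf (L '' Xle) = sInf (L '' X) ∧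
          {x ∈ Xle | ∀ y ∈ Xle, L x ≤ L y} = {x ∈ X | ∀ y ∈ X, L x ≤ L y})) :=
  stmt5_general B b k
end

section
/- Let A be an n×n real symmetric positive semidefinite matrix of rank r with 1 ≤ r < n, and let B be any n×n real symmetric matrix. Then there exists an invertible n×n real matrix T such that simultaneously TᵀAT = diag(I_r, O_{n−r}) and TᵀBT has the 4-block form [[O_{r−s₁}, O, E₁₀, O],[O, Γ₁, F₁₀, O],[E₁₀ᵀ, F₁₀ᵀ, O_{n−r−s₀}, O],[O, O, O, Γ₀]], where Γ₁ is a nonsingular diagonal s₁×s₁ matrix, Γ₀ is a nonsingular diagonal s₀×s₀ matrix, and E₁₀, F₁₀ are real matrices of the indicated sizes (0 ≤ s₁ ≤ r, 0 ≤ s₀ ≤ n−r). -/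
/-! Any congruence by `[[X, 0], [Y, W]]` with `X` orthogonal keeps `diag(I_r, 0)` fixed, so once
`A` is brought to that form (orthogonal diagonalisation, then rescaling the positive eigenvalues)
only such congruences are applied to `B = [[B₁₁, B₁₂], [B₁₂ᵀ, B₂₂]]`. First diagonalise `B₂₂`
orthogonally as `diag(0, Γ₀)`. The invertible block `Γ₀` lets the shear `[[1, 0], [Z, 1]]` clear
the columns of `B₁₂` facing `Γ₀`. Finally diagonalise the new upper-left block orthogonally as
`diag(0, Γ₁)`; what remains of `B₁₂` is the coupling `[E₁₀; F₁₀]`. -/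

open Matrix

namespace Matrix

variable {R : Type*} [CommRing R]

theorem fromBlocks_zero_zero_transpose_mul_mul {m n p q : Type*} [Fintype m] [Fintype n]
    (X : Matrix m p R) (W : Matrix n q R) (P : Matrix m m R) (Q : Matrix m n R)
    (S : Matrix n m R) (T : Matrix n n R) :
    (fromBlocks X 0 0 W)ᵀ * fromBlocks P Q S T * fromBlocks X 0 0 W =
      fromBlocks (Xᵀ * P * X) (Xᵀ * Q * W) (Wᵀ * S * X) (Wᵀ * T * W) := by
  simp [fromBlocks_transpose, fromBlocks_multiply]

theorem fromBlocks_shear_transpose_mul_mul {m n : Type*} [Fintype m] [Fintype n]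
    [DecidableEq m] [DecidableEq n] (Z : Matrix n m R) (K : Matrix m m R) (V : Matrix m n R)
    {D : Matrix n n R} (hD : D.IsSymm) :
    (fromBlocks 1 0 Z 1)ᵀ * fromBlocks K V Vᵀ D * fromBlocks 1 0 Z 1 =
      fromBlocks (K + Zᵀ * Vᵀ + (V + Zᵀ * D) * Z) (V + Zᵀ * D) (V + Zᵀ * D)ᵀ D := by
  simp [fromBlocks_transpose, fromBlocks_multiply, transpose_add, transpose_mul, hD.eq]

theorem fromBlocks_submatrix_sumCongr {l m n o l' m' n' o' α : Type*} (A : Matrix n l α)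
    (B : Matrix n m α) (C : Matrix o l α) (D : Matrix o m α) (f : n' ≃ n) (g : o' ≃ o)
    (h : l' ≃ l) (k : m' ≃ m) :
    (fromBlocks A B C D).submatrix (Equiv.sumCongr f g) (Equiv.sumCongr h k) =
      fromBlocks (A.submatrix f h) (B.submatrix f k) (C.submatrix g h) (D.submatrix g k) := by
  ext (i | i) (j | j) <;> rfl

theorem transpose_submatrix_mul_mul_submatrix {ι κ κ' : Type*} [Fintype ι] (C : Matrix ι κ R)
    (X : Matrix ι ι R) (e : κ' ≃ κ) :
    (C.submatrix id e)ᵀ * X * C.submatrix id e = (Cᵀ * X * C).submatrix e e := by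
  ext i j
  simp [mul_apply, transpose_submatrix]

/-- `C` may change the index type, so that block decompositions live in the types; it is only
required to have a right inverse, which for square `C` means invertibility. -/
def SimulCongr {ι κ : Type*} [Fintype ι] [Fintype κ] [DecidableEq ι]
    (A B : Matrix ι ι R) (A' B' : Matrix κ κ R) : Prop :=
  ∃ C : Matrix ι κ R, (∃ N : Matrix κ ι R, C * N = 1) ∧ Cᵀ * A * C = A' ∧ Cᵀ * B * C = B'

namespace SimulCongr

variable {ι κ ν : Type*} [Fintype ι] [Fintype κ] [DecidableEq ι]
  {A B : Matrix ι ι R} {A' B' : Matrix κ κ R}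

theorem trans [Fintype ν] [DecidableEq κ] {A'' B'' : Matrix ν ν R} (h : SimulCongr A B A' B')
    (h' : SimulCongr A' B' A'' B'') : SimulCongr A B A'' B'' := by
  obtain ⟨C, ⟨N, hN⟩, rfl, rfl⟩ := h
  obtain ⟨C', ⟨N', hN'⟩, rfl, rfl⟩ := h'
  refine ⟨C * C', ⟨N' * N, ?_⟩, ?_, ?_⟩
  · rw [Matrix.mul_assoc, ← Matrix.mul_assoc C', hN', Matrix.one_mul, hN]
  all_goals simp only [transpose_mul, Matrix.mul_assoc]

theorem isSymm_right (h : SimulCongr A B A' B') (hB : B.IsSymm) : B'.IsSymm := by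
  obtain ⟨C, -, -, rfl⟩ := h
  simp only [IsSymm, transpose_mul, transpose_transpose, hB.eq, Matrix.mul_assoc]

end SimulCongr

theorem simulCongr_submatrix {ι κ : Type*} [Fintype ι] [Fintype κ] [DecidableEq ι]
    (A B : Matrix ι ι R) (e : κ ≃ ι) :
    SimulCongr A B (A.submatrix e e) (B.submatrix e e) := by
  refine ⟨(1 : Matrix ι ι R).submatrix id e, ⟨(1 : Matrix ι ι R).submatrix e id, ?_⟩, ?_, ?_⟩
  · rw [submatrix_mul_equiv _ _ _ e, Matrix.one_mul, submatrix_id_id]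
  all_goals
    rw [transpose_submatrix_mul_mul_submatrix, transpose_one, Matrix.one_mul, Matrix.mul_one]

theorem SimulCongr.exists_isUnit_det {ι κ : Type*} [Fintype ι] [Fintype κ] [DecidableEq ι]
    [DecidableEq κ] {A B : Matrix ι ι R} {A' B' : Matrix κ κ R} (h : SimulCongr A B A' B')
    (e : κ ≃ ι) :
    ∃ T : Matrix ι ι R, IsUnit T.det ∧
      (Tᵀ * A * T).submatrix e e = A' ∧ (Tᵀ * B * T).submatrix e e = B' := by
  obtain ⟨T, ⟨N, hN⟩, hA, hB⟩ := h.trans (simulCongr_submatrix A' B' e.symm)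
  refine ⟨T, isUnit_det_of_right_inverse hN, ?_, ?_⟩ <;> simp [hA, hB]

theorem simulCongr_fromBlocks_one_zero_of_lowerTriangular {m n p q : Type*} [Fintype m]
    [Fintype n] [Fintype p] [Fintype q] [DecidableEq m] [DecidableEq n] [DecidableEq p]
    {X : Matrix m p R} (Y : Matrix n p R) {W : Matrix n q R}
    (hX : Xᵀ * X = 1) {X' : Matrix p m R} (hXX' : X * X' = 1) {W' : Matrix q n R}
    (hWW' : W * W' = 1) (B : Matrix (m ⊕ n) (m ⊕ n) R) :
    SimulCongr (fromBlocks 1 0 0 0) B (fromBlocks 1 0 0 0)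
      ((fromBlocks X 0 Y W)ᵀ * B * fromBlocks X 0 Y W) := by
  refine ⟨_, ⟨fromBlocks X' 0 (-(W' * Y * X')) W', ?_⟩, ?_, rfl⟩
  · simp [fromBlocks_multiply, hXX', hWW', ← Matrix.mul_assoc]
  · simp [fromBlocks_transpose, fromBlocks_multiply, hX]

theorem exists_finSum_equiv_of_card_subtype {m s : ℕ} (p : Fin m → Prop) [DecidablePred p]
    (h : Fintype.card {i // p i} = s) :
    ∃ φ : Fin (m - s) ⊕ Fin s ≃ Fin m, (∀ j, ¬ p (φ (Sum.inl j))) ∧ ∀ j, p (φ (Sum.inr j)) := by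
  have hcompl : Fintype.card {i // ¬ p i} = m - s := by
    rw [Fintype.card_subtype_compl, Fintype.card_fin, h]
  let e₀ := (Fintype.equivFinOfCardEq hcompl).symm
  let e₁ := (Fintype.equivFinOfCardEq h).symm
  exact ⟨(Equiv.sumCongr e₀ e₁).trans ((Equiv.sumComm _ _).trans (Equiv.sumCompl p)),
    fun j => (e₀ j).2, fun j => (e₁ j).2⟩

theorem exists_orthogonal_transpose_mul_mul_eq_fromBlocks_of_isSymm {m : ℕ}
    {M : Matrix (Fin m) (Fin m) ℝ} (hMs : M.IsSymm) :
    ∃ (Q : Matrix (Fin m) (Fin (m - M.rank) ⊕ Fin M.rank) ℝ) (g : Fin M.rank → ℝ),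
      (∀ i, g i ≠ 0) ∧ Qᵀ * Q = 1 ∧ Q * Qᵀ = 1 ∧
        Qᵀ * M * Q = fromBlocks 0 0 0 (diagonal g) := by
  have hM : M.IsHermitian := isHermitian_iff_isSymm.mpr hMs
  obtain ⟨φ, hφ₀, hφ₁⟩ := exists_finSum_equiv_of_card_subtype (fun i => hM.eigenvalues i ≠ 0)
    hM.rank_eq_card_non_zero_eigs.symm
  set U : Matrix (Fin m) (Fin m) ℝ := (hM.eigenvectorUnitary : Matrix (Fin m) (Fin m) ℝ)
  have hU : Uᵀ * U = 1 := by
    simpa [U, star_eq_conjTranspose] using hM.eigenvectorUnitary.2.1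
  have hUM : Uᵀ * M * U = diagonal hM.eigenvalues := by
    simpa [U, star_eq_conjTranspose] using hM.conjStarAlgAut_star_eigenvectorUnitary
  refine ⟨U.submatrix id φ, fun j => hM.eigenvalues (φ (.inr j)), hφ₁, ?_, ?_, ?_⟩
  · rw [transpose_submatrix, ← submatrix_mul _ _ _ _ _ Function.bijective_id, hU,
      submatrix_one_equiv]
  · rw [transpose_submatrix, submatrix_mul_equiv, submatrix_id_id, mul_eq_one_comm.mp hU]
  · rw [transpose_submatrix_mul_mul_submatrix, hUM, submatrix_diagonal_equiv, ← diagonal_zero,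
      fromBlocks_diagonal]
    congr 1
    ext (j | j)
    · simpa using hφ₀ j
    · rfl

theorem PosSemidef.exists_simulCongr_fromBlocks_one_zero {n r : ℕ}
    {A : Matrix (Fin n) (Fin n) ℝ} (hA : A.PosSemidef) (hrank : A.rank = r)
    (B : Matrix (Fin n) (Fin n) ℝ) :
    ∃ B', SimulCongr A B (fromBlocks 1 0 0 0 : Matrix (Fin r ⊕ Fin (n - r)) _ ℝ) B' := by
  subst hrank
  obtain ⟨Q, g, hg, -, hQQ', hQA⟩ := exists_orthogonal_transpose_mul_mul_eq_fromBlocks_of_isSymm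
    (isHermitian_iff_isSymm.mp hA.1)
  have hg_pos : ∀ i, 0 < g i := fun i => (hg i).symm.lt_of_le <| by
    simpa [hQA, conjTranspose_eq_transpose_of_trivial] using
      (hA.conjTranspose_mul_mul_same Q).diag_nonneg (i := .inr i)
  have hQ : SimulCongr A B _ _ := ⟨Q, ⟨Qᵀ, hQQ'⟩, hQA, rfl⟩
  set S : Matrix (Fin (n - A.rank) ⊕ Fin A.rank) (Fin (n - A.rank) ⊕ Fin A.rank) ℝ :=
    fromBlocks 1 0 0 (diagonal fun i => (√(g i))⁻¹)
  have hS : SimulCongr (fromBlocks 0 0 0 (diagonal g)) (Qᵀ * B * Q) (fromBlocks 0 0 0 1)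
      (Sᵀ * (Qᵀ * B * Q) * S) := by
    refine ⟨S, ⟨fromBlocks 1 0 0 (diagonal fun i => √(g i)), ?_⟩, ?_, rfl⟩
    · have hsqrt : ∀ i, √(g i) ≠ 0 := fun i => (Real.sqrt_pos.mpr (hg_pos i)).ne'
      simp [S, fromBlocks_multiply, hsqrt]
    · have hsqrt : ∀ i, (√(g i))⁻¹ * g i * (√(g i))⁻¹ = 1 := fun i => by
        rw [mul_right_comm, ← mul_inv, Real.mul_self_sqrt (hg_pos i).le, inv_mul_cancel₀ (hg i)]
      simp [S, fromBlocks_zero_zero_transpose_mul_mul, hsqrt]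
  have h := (hQ.trans hS).trans (simulCongr_submatrix _ _ (Equiv.sumComm (Fin A.rank) _))
  rw [Equiv.sumComm_apply, fromBlocks_submatrix_sum_swap_sum_swap] at h
  exact ⟨_, h⟩

theorem exists_simulCongr_fromBlocks_diagonalize₂₂ {ρ : Type*} [Fintype ρ] [DecidableEq ρ]
    {m : ℕ} (P : Matrix ρ ρ ℝ) (Y : Matrix ρ (Fin m) ℝ) {S : Matrix (Fin m) (Fin m) ℝ}
    (hS : S.IsSymm) :
    ∃ (s : ℕ) (_ : s ≤ m) (V : Matrix ρ (Fin (m - s)) ℝ) (W : Matrix ρ (Fin s) ℝ)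
      (g : Fin s → ℝ), (∀ i, g i ≠ 0) ∧
      SimulCongr (fromBlocks 1 0 0 0) (fromBlocks P Y Yᵀ S) (fromBlocks 1 0 0 0)
        (fromBlocks P (fromCols V W) (fromCols V W)ᵀ (fromBlocks 0 0 0 (diagonal g))) := by
  obtain ⟨Q, g, hg, -, hQQ', hQS⟩ := exists_orthogonal_transpose_mul_mul_eq_fromBlocks_of_isSymm hS
  have h := simulCongr_fromBlocks_one_zero_of_lowerTriangular (X := 1) (W := Q) 0
    (by rw [transpose_one, Matrix.mul_one]) (Matrix.mul_one 1) hQQ' (fromBlocks P Y Yᵀ S)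
  rw [fromBlocks_zero_zero_transpose_mul_mul, hQS, ← transpose_mul] at h
  simp only [transpose_one, Matrix.one_mul, Matrix.mul_one] at h
  rw [← fromCols_toCols (Y * Q)] at h
  exact ⟨_, rank_le_width S, _, _, g, hg, h⟩

theorem exists_simulCongr_fromBlocks_clear_fromCols₂ {𝕜 : Type*} [Field 𝕜] {ρ α β : Type*}
    [Fintype ρ] [Fintype α] [Fintype β] [DecidableEq ρ] [DecidableEq α] [DecidableEq β]
    (M : Matrix ρ ρ 𝕜) (V : Matrix ρ α 𝕜) (W : Matrix ρ β 𝕜) {g : β → 𝕜} (hg : ∀ i, g i ≠ 0) :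
    ∃ M' : Matrix ρ ρ 𝕜, SimulCongr (fromBlocks 1 0 0 0)
      (fromBlocks M (fromCols V W) (fromCols V W)ᵀ (fromBlocks 0 0 0 (diagonal g)))
      (fromBlocks 1 0 0 0)
      (fromBlocks M' (fromCols V 0) (fromCols V 0)ᵀ (fromBlocks 0 0 0 (diagonal g))) := by
  set D : Matrix (α ⊕ β) (α ⊕ β) 𝕜 := fromBlocks 0 0 0 (diagonal g)
  set Z : Matrix (α ⊕ β) ρ 𝕜 := fromRows 0 (-(W * diagonal g⁻¹)ᵀ)
  have hD : D.IsSymm := by simp [D, IsSymm, fromBlocks_transpose]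
  have hZ : fromCols V W + Zᵀ * D = fromCols V 0 := by
    ext i (j | j) <;>
      simp [Z, D, transpose_fromRows, fromCols_mul_fromBlocks, Matrix.mul_assoc, hg]
  have h := simulCongr_fromBlocks_one_zero_of_lowerTriangular Z
    (by rw [transpose_one, Matrix.mul_one]) (Matrix.mul_one 1) (Matrix.mul_one 1)
    (fromBlocks M (fromCols V W) (fromCols V W)ᵀ D)
  rw [fromBlocks_shear_transpose_mul_mul _ _ _ hD, hZ] at h
  exact ⟨_, h⟩

theorem exists_simulCongr_fromBlocks_diagonalize₁₁ {r : ℕ} {α β : Type*} [Fintype α]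
    [Fintype β] [DecidableEq α] [DecidableEq β] {M : Matrix (Fin r) (Fin r) ℝ} (hM : M.IsSymm)
    (V : Matrix (Fin r) α ℝ) (D : Matrix (α ⊕ β) (α ⊕ β) ℝ) :
    ∃ (s : ℕ) (_ : s ≤ r) (g : Fin s → ℝ) (E : Matrix (Fin (r - s)) α ℝ)
      (F : Matrix (Fin s) α ℝ), (∀ i, g i ≠ 0) ∧
      SimulCongr (fromBlocks 1 0 0 0) (fromBlocks M (fromCols V 0) (fromCols V 0)ᵀ D)
        (fromBlocks 1 0 0 0)
        (fromBlocks (fromBlocks 0 0 0 (diagonal g)) (fromBlocks E 0 F 0)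
          (fromBlocks Eᵀ Fᵀ 0 0) D) := by
  obtain ⟨Q, g, hg, hQQ, hQQ', hQM⟩ :=
    exists_orthogonal_transpose_mul_mul_eq_fromBlocks_of_isSymm hM
  have h := simulCongr_fromBlocks_one_zero_of_lowerTriangular (X := Q) (W := 1) 0 hQQ hQQ'
    (Matrix.mul_one 1) (fromBlocks M (fromCols V 0) (fromCols V 0)ᵀ D)
  have hQV : Qᵀ * fromCols V (0 : Matrix (Fin r) β ℝ) =
      fromBlocks (Qᵀ * V).toRows₁ 0 (Qᵀ * V).toRows₂ 0 := by
    rw [mul_fromCols, Matrix.mul_zero, ← fromRows_toRows (Qᵀ * V), ← fromRows_zero,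
      fromCols_fromRows_eq_fromBlocks, toRows₁_fromRows, toRows₂_fromRows]
  rw [fromBlocks_zero_zero_transpose_mul_mul, hQM, transpose_one, Matrix.one_mul,
    Matrix.mul_one, Matrix.mul_one, ← transpose_transpose Q, ← transpose_mul, transpose_transpose,
    hQV, fromBlocks_transpose] at h
  exact ⟨_, rank_le_width M, g, _, _, hg, by simpa using h⟩

theorem exists_simulCongr_fromBlocks_one_zero_normalForm {r m : ℕ}
    {B : Matrix (Fin r ⊕ Fin m) (Fin r ⊕ Fin m) ℝ} (hB : B.IsSymm) :
    ∃ (s₁ : ℕ) (_ : s₁ ≤ r) (s₀ : ℕ) (_ : s₀ ≤ m) (G₁ : Fin s₁ → ℝ) (G₀ : Fin s₀ → ℝ)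
      (E : Matrix (Fin (r - s₁)) (Fin (m - s₀)) ℝ) (F : Matrix (Fin s₁) (Fin (m - s₀)) ℝ),
      (∀ i, G₁ i ≠ 0) ∧ (∀ i, G₀ i ≠ 0) ∧
      SimulCongr (fromBlocks 1 0 0 0) B (fromBlocks 1 0 0 0)
        (fromBlocks (fromBlocks 0 0 0 (diagonal G₁)) (fromBlocks E 0 F 0)
          (fromBlocks Eᵀ Fᵀ 0 0) (fromBlocks 0 0 0 (diagonal G₀))) := by
  obtain ⟨-, hB₁₂, -, hB₂₂⟩ := isSymm_fromBlocks_iff.mp (B.fromBlocks_toBlocks.symm ▸ hB)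
  have hB_eq : B = fromBlocks B.toBlocks₁₁ B.toBlocks₁₂ B.toBlocks₁₂ᵀ B.toBlocks₂₂ := by
    rw [hB₁₂, fromBlocks_toBlocks]
  rw [hB_eq] at hB ⊢
  obtain ⟨s₀, hs₀, V, W, G₀, hG₀, h₁⟩ :=
    exists_simulCongr_fromBlocks_diagonalize₂₂ B.toBlocks₁₁ B.toBlocks₁₂ hB₂₂
  obtain ⟨M, h₂⟩ := exists_simulCongr_fromBlocks_clear_fromCols₂ B.toBlocks₁₁ V W hG₀
  have hM : M.IsSymm := (isSymm_fromBlocks_iff.mp ((h₁.trans h₂).isSymm_right hB)).1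
  obtain ⟨s₁, hs₁, G₁, E, F, hG₁, h₃⟩ := exists_simulCongr_fromBlocks_diagonalize₁₁ hM V
    (fromBlocks 0 0 0 (diagonal G₀))
  exact ⟨s₁, hs₁, s₀, hs₀, G₁, G₀, E, F, hG₁, hG₀, (h₁.trans h₂).trans h₃⟩

end Matrix

theorem stmt7_general {n r : ℕ} (hrn : r < n)
    (A B : Matrix (Fin n) (Fin n) ℝ) (hA : A.PosSemidef) (hrank : A.rank = r)
    (hB : B.IsSymm) :
    ∃ (T : Matrix (Fin n) (Fin n) ℝ) (_ : IsUnit T.det)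
      (s1 : ℕ) (hs1 : s1 ≤ r) (s0 : ℕ) (hs0 : s0 ≤ n - r)
      (G1 : Fin s1 → ℝ) (G0 : Fin s0 → ℝ)
      (E : Matrix (Fin (r - s1)) (Fin (n - r - s0)) ℝ)
      (F : Matrix (Fin s1) (Fin (n - r - s0)) ℝ),
      (∀ i, G1 i ≠ 0) ∧ (∀ i, G0 i ≠ 0) ∧
      (Tᵀ * A * T).submatrix
          (finSumFinEquiv.trans (finCongr (Nat.add_sub_cancel' hrn.le)) :
            Fin r ⊕ Fin (n - r) ≃ Fin n)
          (finSumFinEquiv.trans (finCongr (Nat.add_sub_cancel' hrn.le)))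
        = Matrix.fromBlocks 1 0 0 0 ∧
      (Tᵀ * B * T).submatrix
          ((Equiv.sumCongr
              (finSumFinEquiv.trans (finCongr (Nat.sub_add_cancel hs1)) :
                Fin (r - s1) ⊕ Fin s1 ≃ Fin r)
              (finSumFinEquiv.trans (finCongr (Nat.sub_add_cancel hs0)) :
                Fin (n - r - s0) ⊕ Fin s0 ≃ Fin (n - r))).trans
            (finSumFinEquiv.trans (finCongr (Nat.add_sub_cancel' hrn.le))))
          ((Equiv.sumCongr
              (finSumFinEquiv.trans (finCongr (Nat.sub_add_cancel hs1)))
              (finSumFinEquiv.trans (finCongr (Nat.sub_add_cancel hs0)))).trans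
            (finSumFinEquiv.trans (finCongr (Nat.add_sub_cancel' hrn.le))))
        = Matrix.fromBlocks
            (Matrix.fromBlocks 0 0 0 (Matrix.diagonal G1))
            (Matrix.fromBlocks E 0 F 0)
            (Matrix.fromBlocks Eᵀ Fᵀ 0 0)
            (Matrix.fromBlocks 0 0 0 (Matrix.diagonal G0)) := by
  obtain ⟨B', hAB⟩ := hA.exists_simulCongr_fromBlocks_one_zero hrank B
  obtain ⟨s1, hs1, s0, hs0, G1, G0, E, F, hG1, hG0, hNF⟩ :=
    exists_simulCongr_fromBlocks_one_zero_normalForm (hAB.isSymm_right hB)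
  set e : Fin r ⊕ Fin (n - r) ≃ Fin n :=
    finSumFinEquiv.trans (finCongr (Nat.add_sub_cancel' hrn.le))
  set σ := Equiv.sumCongr (finSumFinEquiv.trans (finCongr (Nat.sub_add_cancel hs1)))
    (finSumFinEquiv.trans (finCongr (Nat.sub_add_cancel hs0)))
  obtain ⟨T, hT, hTA, hTB⟩ := (hAB.trans hNF).exists_isUnit_det (σ.trans e)
  refine ⟨T, hT, s1, hs1, s0, hs0, G1, G0, E, F, hG1, hG0, ?_, hTB⟩
  calc (Tᵀ * A * T).submatrix e e
      = ((Tᵀ * A * T).submatrix (σ.trans e) (σ.trans e)).submatrix σ.symm σ.symm := by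
        rw [submatrix_submatrix]
        congr 1 <;> ext i <;> simp
    _ = fromBlocks 1 0 0 0 := by
        rw [hTA, Equiv.sumCongr_symm, fromBlocks_submatrix_sumCongr, submatrix_one_equiv]
        rfl

/-- Simultaneous congruence normal form for a pair of real symmetric matrices, the first
positive semidefinite of rank `r` with `1 ≤ r < n`: there is an invertible `T` with
`TᵀAT = diag(I_r, O_{n−r})` and `TᵀBT` in the 4-block form
`[[O_{r−s₁}, O, E₁₀, O],[O, Γ₁, F₁₀, O],[E₁₀ᵀ, F₁₀ᵀ, O_{n−r−s₀}, O],[O, O, O, Γ₀]]`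
with `Γ₁`, `Γ₀` nonsingular diagonal. -/
theorem stmt7 {n r : ℕ} (hr : 1 ≤ r) (hrn : r < n)
    (A B : Matrix (Fin n) (Fin n) ℝ) (hA : A.PosSemidef) (hrank : A.rank = r)
    (hB : B.IsSymm) :
    ∃ (T : Matrix (Fin n) (Fin n) ℝ) (_ : IsUnit T.det)
      (s1 : ℕ) (hs1 : s1 ≤ r) (s0 : ℕ) (hs0 : s0 ≤ n - r)
      (G1 : Fin s1 → ℝ) (G0 : Fin s0 → ℝ)
      (E : Matrix (Fin (r - s1)) (Fin (n - r - s0)) ℝ)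
      (F : Matrix (Fin s1) (Fin (n - r - s0)) ℝ),
      (∀ i, G1 i ≠ 0) ∧ (∀ i, G0 i ≠ 0) ∧
      (Tᵀ * A * T).submatrix
          (finSumFinEquiv.trans (finCongr (Nat.add_sub_cancel' hrn.le)) :
            Fin r ⊕ Fin (n - r) ≃ Fin n)
          (finSumFinEquiv.trans (finCongr (Nat.add_sub_cancel' hrn.le)))
        = Matrix.fromBlocks 1 0 0 0 ∧
      (Tᵀ * B * T).submatrix
          ((Equiv.sumCongr
              (finSumFinEquiv.trans (finCongr (Nat.sub_add_cancel hs1)) :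
                Fin (r - s1) ⊕ Fin s1 ≃ Fin r)
              (finSumFinEquiv.trans (finCongr (Nat.sub_add_cancel hs0)) :
                Fin (n - r - s0) ⊕ Fin s0 ≃ Fin (n - r))).trans
            (finSumFinEquiv.trans (finCongr (Nat.add_sub_cancel' hrn.le))))
          ((Equiv.sumCongr
              (finSumFinEquiv.trans (finCongr (Nat.sub_add_cancel hs1)))
              (finSumFinEquiv.trans (finCongr (Nat.sub_add_cancel hs0)))).trans
            (finSumFinEquiv.trans (finCongr (Nat.add_sub_cancel' hrn.le))))
        = Matrix.fromBlocks
            (Matrix.fromBlocks 0 0 0 (Matrix.diagonal G1))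
            (Matrix.fromBlocks E 0 F 0)
            (Matrix.fromBlocks Eᵀ Fᵀ 0 0)
            (Matrix.fromBlocks 0 0 0 (Matrix.diagonal G0)) :=
  stmt7_general hrn A B hA hrank hB
end

section
/- Let 1 ≤ r < n, write x = (x₁, x₀) ∈ ℝʳ × ℝ^{n−r}, and consider the constraint Q(x) := x₁ᵀB₁₁x₁ + x₀ᵀΓ₀x₀ + 2b₁ᵀx₁ + 2d₀ᵀx₀ − k = 0, where B₁₁ is an r×r real symmetric matrix, Γ₀ is a nonsingular diagonal (n−r)×(n−r) real matrix, b₁ ∈ ℝʳ, d₀ ∈ ℝ^{n−r}, k ∈ ℝ, and X := {x : Q(x) = 0} is nonempty. Set k₁ := k + d₀ᵀΓ₀⁻¹d₀, Q₁(x₁) := x₁ᵀB₁₁x₁ + 2b₁ᵀx₁ − k₁, and X₁ := {x₁ ∈ ℝʳ : ∃ x₀, Q(x₁, x₀) = 0}. Then: (a) there exists x ∈ X with x₁ = 0_r if and only if k₁ = 0 or k₁·Γ₀ has a positive eigenvalue; (b) it is impossible that inf{‖x₁‖² : x ∈ X} = 0 while the infimum is not attained; (c) inf{‖x₁‖² :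 x ∈ X} > 0 if and only if −k₁·Γ₀ is positive definite, in which case X₁ = {x₁ ∈ ℝʳ : k₁·Q₁(x₁) ≥ 0} and, for each x₁ ∈ X₁, the set of feasible x₀ is {x₀ : (x₀ + Γ₀⁻¹d₀)ᵀΓ₀(x₀ + Γ₀⁻¹d₀) = −Q₁(x₁)}. -/
open Matrix

lemma sumF_exists {m : ℕ} (γ : Fin m → ℝ) (hγ : ∀ i, γ i ≠ 0) (t : ℝ) :
    (∃ y : Fin m → ℝ, ∑ i, γ i * y i ^ 2 = t) ↔ (t = 0 ∨ ∃ i, 0 < t * γ i) := by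
  constructor
  · rintro ⟨y, rfl⟩
    by_cases h0 : (∑ i, γ i * y i ^ 2) = 0
    · exact Or.inl h0
    right
    by_contra hc
    push_neg at hc
    have hsq : 0 < (∑ i, γ i * y i ^ 2) * (∑ i, γ i * y i ^ 2) :=
      mul_self_pos.mpr h0
    have : (∑ i, γ i * y i ^ 2) * (∑ i, γ i * y i ^ 2)
        = ∑ i, ((∑ j, γ j * y j ^ 2) * γ i) * y i ^ 2 := by
      rw [Finset.mul_sum]
      exact Finset.sum_congr rfl fun i _ => by ring
    rw [this] at hsq
    have : ∀ i ∈ Finset.univ, ((∑ j, γ j * y j ^ 2) * γ i) * y i ^ 2 ≤ 0 :=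
      fun i _ => mul_nonpos_of_nonpos_of_nonneg (hc i) (sq_nonneg _)
    exact absurd hsq (not_lt.mpr (Finset.sum_nonpos this))
  · rintro (rfl | ⟨i, hi⟩)
    · exact ⟨0, by simp⟩
    · refine ⟨Pi.single i (Real.sqrt (t / γ i)), ?_⟩
      have hdiv : 0 < t / γ i := by
        rcases (hγ i).lt_or_gt with h | h
        · have ht : t < 0 := by nlinarith
          exact div_pos_of_neg_of_neg ht h
        · have ht : 0 < t := by nlinarith
          exact div_pos ht h
      rw [Finset.sum_eq_single i]
      · rw [Pi.single_eq_same, Real.sq_sqrt hdiv.le]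
        exact mul_div_cancel₀ t (hγ i)
      · intro j _ hj
        rw [Pi.single_eq_of_ne hj]; ring
      · intro h; exact absurd (Finset.mem_univ i) h


/-- The case `s₀ = n − r` of a centred least-squares problem in simplified form:
`Q(x₁,x₀) = x₁ᵀB₁₁x₁ + x₀ᵀΓ₀x₀ + 2b₁ᵀx₁ + 2d₀ᵀx₀ − k` with `Γ₀` nonsingular diagonal,
`k₁ = k + d₀ᵀΓ₀⁻¹d₀`, `Q₁(x₁) = x₁ᵀB₁₁x₁ + 2b₁ᵀx₁ − k₁`, `X = {Q = 0}` nonempty.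
(a) a feasible point with `x₁ = 0` exists iff `k₁ = 0` or `k₁Γ₀` has a positive eigenvalue;
(b) the infimum of `‖x₁‖²` over `X` cannot be `0` without being attained;
(c) the infimum is `> 0` iff `−k₁Γ₀ ≻ O`, in which case the projection `X₁` equals
`{x₁ : k₁Q₁(x₁) ≥ 0}` and for each `x₁ ∈ X₁` the feasible `x₀` are exactly
`{x₀ : (x₀ + Γ₀⁻¹d₀)ᵀΓ₀(x₀ + Γ₀⁻¹d₀) = −Q₁(x₁)}`. -/
theorem stmt9 {r m : ℕ} (hr : 1 ≤ r) (hm : 1 ≤ m)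
    (B11 : Matrix (Fin r) (Fin r) ℝ) (hB11 : B11.IsSymm)
    (γ : Fin m → ℝ) (hγ : ∀ i, γ i ≠ 0)
    (b1 : Fin r → ℝ) (d0 : Fin m → ℝ) (k : ℝ) :
    let Γ0 : Matrix (Fin m) (Fin m) ℝ := Matrix.diagonal γ
    let Q : (Fin r → ℝ) → (Fin m → ℝ) → ℝ := fun x1 x0 =>
      x1 ⬝ᵥ B11.mulVec x1 + x0 ⬝ᵥ Γ0.mulVec x0 + 2 * (b1 ⬝ᵥ x1) + 2 * (d0 ⬝ᵥ x0) - k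
    let X : Set ((Fin r → ℝ) × (Fin m → ℝ)) := {p | Q p.1 p.2 = 0}
    let k1 : ℝ := k + d0 ⬝ᵥ Γ0⁻¹.mulVec d0
    let Q1 : (Fin r → ℝ) → ℝ := fun x1 => x1 ⬝ᵥ B11.mulVec x1 + 2 * (b1 ⬝ᵥ x1) - k1
    let X1 : Set (Fin r → ℝ) := {x1 | ∃ x0, Q x1 x0 = 0}
    let L : ((Fin r → ℝ) × (Fin m → ℝ)) → ℝ := fun p => p.1 ⬝ᵥ p.1
    X.Nonempty →
      ((∃ p ∈ X, p.1 = 0) ↔ (k1 = 0 ∨ ∃ i, 0 < k1 * γ i)) ∧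
      (sInf (L '' X) = 0 → ∃ p ∈ X, L p = 0) ∧
      (0 < sInf (L '' X) ↔ ((-k1) • Γ0).PosDef) ∧
      (((-k1) • Γ0).PosDef →
        X1 = {x1 | 0 ≤ k1 * Q1 x1} ∧
        ∀ x1 ∈ X1, {x0 | Q x1 x0 = 0} =
          {x0 | (x0 + Γ0⁻¹.mulVec d0) ⬝ᵥ Γ0.mulVec (x0 + Γ0⁻¹.mulVec d0) = - Q1 x1}) := by
  intro Γ0 Q X k1 Q1 X1 L hX
  have i0 : Fin m := ⟨0, hm⟩
  -- inverse of the diagonal matrix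
  have hΓinv : Γ0⁻¹ = diagonal (fun i => (γ i)⁻¹) := by
    apply Matrix.inv_eq_right_inv
    rw [show Γ0 = diagonal γ from rfl, diagonal_mul_diagonal]
    have : (fun i => γ i * (γ i)⁻¹) = fun _ => (1 : ℝ) :=
      funext fun i => mul_inv_cancel₀ (hγ i)
    rw [this, diagonal_one]
  have hinv : Γ0⁻¹.mulVec d0 = fun i => d0 i / γ i := by
    funext i
    rw [hΓinv, mulVec_diagonal]
    rw [div_eq_inv_mul]
  -- quadratic form as a sum
  have hquad : ∀ v : Fin m → ℝ, v ⬝ᵥ Γ0.mulVec v = ∑ i, γ i * v i ^ 2 := by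
    intro v
    simp only [dotProduct, show Γ0 = diagonal γ from rfl, mulVec_diagonal]
    exact Finset.sum_congr rfl fun i _ => by ring
  have hd0 : d0 ⬝ᵥ Γ0⁻¹.mulVec d0 = ∑ i, d0 i ^ 2 / γ i := by
    simp only [dotProduct, hinv]
    exact Finset.sum_congr rfl fun i _ => by ring
  -- completing the square
  have key : ∀ x1 x0, Q x1 x0 = Q1 x1 + ∑ i, γ i * (x0 i + d0 i / γ i) ^ 2 := by
    intro x1 x0
    have expand : ∑ i, γ i * (x0 i + d0 i / γ i) ^ 2
        = ∑ i, γ i * x0 i ^ 2 + ∑ i, 2 * (d0 i * x0 i) + ∑ i, d0 i ^ 2 / γ i := by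
      rw [← Finset.sum_add_distrib, ← Finset.sum_add_distrib]
      refine Finset.sum_congr rfl fun i _ => ?_
      have h := hγ i
      field_simp
      ring
    show x1 ⬝ᵥ B11.mulVec x1 + x0 ⬝ᵥ Γ0.mulVec x0 + 2 * (b1 ⬝ᵥ x1) + 2 * (d0 ⬝ᵥ x0) - k
      = (x1 ⬝ᵥ B11.mulVec x1 + 2 * (b1 ⬝ᵥ x1) - (k + d0 ⬝ᵥ Γ0⁻¹.mulVec d0))
        + ∑ i, γ i * (x0 i + d0 i / γ i) ^ 2
    rw [expand, hquad x0, hd0]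
    have h2 : ∑ i, 2 * (d0 i * x0 i) = 2 * (d0 ⬝ᵥ x0) := by
      rw [show d0 ⬝ᵥ x0 = ∑ i, d0 i * x0 i from rfl, Finset.mul_sum]
    rw [h2]
    ring
  have hQ10 : Q1 0 = -k1 := by
    show (0 : Fin r → ℝ) ⬝ᵥ B11.mulVec 0 + 2 * (b1 ⬝ᵥ 0) - k1 = -k1
    rw [zero_dotProduct, dotProduct_zero, mul_zero, add_zero, zero_sub]
  -- part (a)
  have parta : (∃ p ∈ X, p.1 = 0) ↔ (k1 = 0 ∨ ∃ i, 0 < k1 * γ i) := by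
    rw [← sumF_exists γ hγ k1]
    constructor
    · rintro ⟨⟨x1, x0⟩, hp, h1⟩
      have h1' : x1 = 0 := h1
      subst h1'
      have hq : Q 0 x0 = 0 := hp
      rw [key, hQ10] at hq
      exact ⟨fun i => x0 i + d0 i / γ i, by linarith⟩
    · rintro ⟨y, hy⟩
      refine ⟨(0, fun i => y i - d0 i / γ i), ?_, rfl⟩
      show Q 0 _ = 0
      rw [key, hQ10]
      have : ∀ i, γ i * ((y i - d0 i / γ i) + d0 i / γ i) ^ 2 = γ i * y i ^ 2 := by
        intro i; ring_nf
      rw [Finset.sum_congr rfl fun i _ => this i, hy]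
      ring
  -- positive definiteness characterization
  have hpd_iff : ((-k1) • Γ0).PosDef ↔ ∀ i, 0 < -k1 * γ i := by
    rw [show (-k1) • Γ0 = diagonal (fun i => -k1 * γ i) from by
      rw [show (fun i => -k1 * γ i) = (-k1) • γ from rfl, diagonal_smul]]
    exact posDef_diagonal_iff
  have hnot : ¬((-k1) • Γ0).PosDef ↔ (k1 = 0 ∨ ∃ i, 0 < k1 * γ i) := by
    rw [hpd_iff]
    push_neg
    constructor
    · rintro ⟨i, hi⟩
      rcases lt_trichotomy (k1 * γ i) 0 with h | h | h
      · exact absurd hi (by push_neg; nlinarith)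
      · rcases mul_eq_zero.mp h with h' | h'
        · exact Or.inl h'
        · exact absurd h' (hγ i)
      · exact Or.inr ⟨i, h⟩
    · rintro (h | ⟨i, hi⟩)
      · exact ⟨i0, by rw [h]; simp⟩
      · exact ⟨i, by nlinarith⟩
  -- basic facts about L
  have hLnonneg : ∀ p : (Fin r → ℝ) × (Fin m → ℝ), 0 ≤ L p := by
    intro p
    show 0 ≤ p.1 ⬝ᵥ p.1
    simp only [dotProduct]
    exact Finset.sum_nonneg fun i _ => mul_self_nonneg _
  have hbdd : BddBelow (L '' X) := ⟨0, by rintro v ⟨p, _, rfl⟩; exact hLnonneg p⟩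
  -- sign fact under positive definiteness
  have hsign : (∀ i, 0 < -k1 * γ i) → ∀ x1 x0, Q x1 x0 = 0 → 0 ≤ k1 * Q1 x1 := by
    intro hpd x1 x0 hq
    rw [key] at hq
    have hQ1 : Q1 x1 = -∑ i, γ i * (x0 i + d0 i / γ i) ^ 2 := by linarith
    have h1 : 0 ≤ (-k1) * ∑ i, γ i * (x0 i + d0 i / γ i) ^ 2 := by
      rw [Finset.mul_sum]
      refine Finset.sum_nonneg fun i _ => ?_
      have := mul_nonneg (hpd i).le (sq_nonneg (x0 i + d0 i / γ i))
      nlinarith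
    rw [hQ1, mul_neg, ← neg_mul]
    exact h1
  -- infimum positivity
  have hinf_le : ¬((-k1) • Γ0).PosDef → sInf (L '' X) ≤ 0 := by
    intro hnpd
    obtain ⟨p, hpX, hp1⟩ := parta.mpr (hnot.mp hnpd)
    have hLp : L p = 0 := by
      show p.1 ⬝ᵥ p.1 = 0
      rw [hp1, zero_dotProduct]
    exact csInf_le hbdd ⟨p, hpX, hLp⟩
  have hpos : ((-k1) • Γ0).PosDef → 0 < sInf (L '' X) := by
    intro hpd'
    have hpd := hpd_iff.mp hpd'
    have hk1ne : k1 ≠ 0 := by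
      intro h
      have := hpd i0
      rw [h] at this
      simp at this
    have hcont : Continuous fun x1 : Fin r → ℝ => k1 * Q1 x1 := by
      simp only [show (fun x1 : Fin r → ℝ => k1 * Q1 x1)
          = fun x1 => k1 * (x1 ⬝ᵥ B11.mulVec x1 + 2 * (b1 ⬝ᵥ x1) - k1) from rfl,
        dotProduct, Matrix.mulVec]
      fun_prop
    have hneg : k1 * Q1 0 < 0 := by
      rw [hQ10]
      have := mul_self_pos.mpr hk1ne
      nlinarith
    have hopen : IsOpen {x1 : Fin r → ℝ | k1 * Q1 x1 < 0} :=
      isOpen_lt hcont continuous_const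
    obtain ⟨δ, hδ, hball⟩ := Metric.isOpen_iff.mp hopen 0 hneg
    refine lt_of_lt_of_le (mul_pos hδ hδ) (le_csInf (hX.image L) ?_)
    rintro v ⟨p, hpX, rfl⟩
    have hQge : 0 ≤ k1 * Q1 p.1 := hsign hpd p.1 p.2 hpX
    have hp1 : p.1 ∉ Metric.ball (0 : Fin r → ℝ) δ :=
      fun hmem => absurd (hball hmem) (not_lt.mpr hQge)
    rw [Metric.mem_ball, dist_pi_lt_iff hδ] at hp1
    push_neg at hp1
    obtain ⟨i, hi⟩ := hp1
    simp only [Real.dist_eq, Pi.zero_apply, sub_zero] at hi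
    calc δ * δ ≤ |p.1 i| * |p.1 i| := mul_le_mul hi hi hδ.le (abs_nonneg _)
      _ = p.1 i * p.1 i := abs_mul_abs_self _
      _ ≤ L p := by
          show _ ≤ p.1 ⬝ᵥ p.1
          simp only [dotProduct]
          exact Finset.single_le_sum (fun j _ => mul_self_nonneg (p.1 j))
            (Finset.mem_univ i)
  refine ⟨parta, ?_, ⟨fun h => by_contra fun hnpd => absurd (hinf_le hnpd) (by linarith), hpos⟩, ?_⟩
  · -- part (b)
    intro h0
    have hnpd : ¬((-k1) • Γ0).PosDef := fun hpd => by
      have := hpos hpd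
      rw [h0] at this
      exact lt_irrefl 0 this
    obtain ⟨p, hpX, hp1⟩ := parta.mpr (hnot.mp hnpd)
    exact ⟨p, hpX, by show p.1 ⬝ᵥ p.1 = 0; rw [hp1, zero_dotProduct]⟩
  · -- part (c), second half
    intro hpd'
    have hpd := hpd_iff.mp hpd'
    have hk1ne : k1 ≠ 0 := by
      intro h
      have := hpd i0
      rw [h] at this
      simp at this
    constructor
    · ext x1
      simp only [Set.mem_setOf_eq]
      constructor
      · rintro ⟨x0, hq⟩
        exact hsign hpd x1 x0 hq
      · intro hge
        have hy : ∃ y : Fin m → ℝ, ∑ i, γ i * y i ^ 2 = -Q1 x1 := by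
          apply (sumF_exists γ hγ _).mpr
          by_cases hq : Q1 x1 = 0
          · exact Or.inl (by rw [hq, neg_zero])
          · refine Or.inr ⟨i0, ?_⟩
            have h1 : 0 < k1 * Q1 x1 :=
              lt_of_le_of_ne hge (Ne.symm (mul_ne_zero hk1ne hq))
            have h2 := hpd i0
            nlinarith [mul_pos h1 h2, mul_self_pos.mpr hk1ne]
        obtain ⟨y, hy⟩ := hy
        refine ⟨fun i => y i - d0 i / γ i, ?_⟩
        rw [key]
        have : ∀ i, γ i * ((y i - d0 i / γ i) + d0 i / γ i) ^ 2 = γ i * y i ^ 2 := by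
          intro i; ring_nf
        rw [Finset.sum_congr rfl fun i _ => this i, hy]
        ring
    · intro x1 _
      ext x0
      simp only [Set.mem_setOf_eq]
      rw [key, hquad, hinv]
      have : ∀ i, γ i * ((x0 + fun i => d0 i / γ i) i) ^ 2
          = γ i * (x0 i + d0 i / γ i) ^ 2 := fun i => rfl
      rw [Finset.sum_congr rfl fun i _ => this i]
      constructor <;> intro h <;> linarith
end

section
/- Let 1 ≤ r < n, write x = (x₁, x₀) ∈ ℝʳ × ℝ^{n−r}, let B be an n×n real symmetric matrix that is either positive semidefinite or negative semidefinite (i.e. not indefinite), b ∈ ℝⁿ, k ∈ ℝ, and suppose X := {x : xᵀBx + 2bᵀx − k = 0} is nonempty. If inf{‖x₁‖² : x ∈ X} = 0, then there exists x ∈ X with x₁ = 0_r; that is, a hyperbolic (indefinite) quadratic constraint is necessary for the infimum 0 to fail to be attained. -/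
/-!
Write `q(x) = xᵀBx + 2bᵀx − k`; replacing `(B, b, k)` by `(−B, −b, −k)` we may assume `B ⪰ 0`,
so `q` is convex. The hypothesis on the infimum says that `0` lies in the closure of the
`x₁`-parts of feasible points. By the intermediate value theorem on the subspace `x₁ = 0` it
suffices to find points there with `q ≤ 0` and with `q ≥ 0`.

If `q < 0` on the whole subspace, convexity forces `q` to be invariant under it, so `q`
factors continuously through `x₁`, and the closure condition gives `q(0) = 0`, a
contradiction. For the other sign, either `b₀` is not orthogonal to `ker B₀₀`, and `q` is
affine and nonconstant on a line in the subspace, or `B₀₀ p = −b₀` is solvable; then `(0, p)`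
is critical in the `x₀`-directions and convexity gives `q(x) ≥ q(0, p) + 2 d·x₁` for a fixed
`d`, whence `q(0, p) ≤ 0`.
-/

open Matrix Set

theorem Matrix.IsHermitian.exists_mulVec_eq_or_exists_dotProduct_ne_zero {κ : Type*} [Fintype κ]
    {S : Matrix κ κ ℝ} (hS : S.IsHermitian) (c : κ → ℝ) :
    (∃ p, S *ᵥ p = c) ∨ ∃ w, S *ᵥ w = 0 ∧ c ⬝ᵥ w ≠ 0 := by
  classical
  by_cases h : ∃ w, S *ᵥ w = 0 ∧ c ⬝ᵥ w ≠ 0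
  · exact .inr h
  push Not at h
  left
  have hc : WithLp.toLp 2 c ∈ (LinearMap.ker S.toEuclideanLin)ᗮ := by
    rw [Submodule.mem_orthogonal]
    intro w hw
    rw [LinearMap.mem_ker] at hw
    simpa [EuclideanSpace.inner_eq_star_dotProduct] using h _ (congrArg WithLp.ofLp hw)
  rw [← (isSymmetric_toEuclideanLin_iff.mpr hS).orthogonal_range,
    Submodule.orthogonal_orthogonal] at hc
  obtain ⟨p, hp⟩ := hc
  exact ⟨WithLp.ofLp p, congrArg WithLp.ofLp hp⟩

theorem quadratic_coeffs_eq_zero_of_forall_neg {a b c : ℝ} (ha : 0 ≤ a)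
    (h : ∀ t : ℝ, a * t ^ 2 + b * t + c < 0) : a = 0 ∧ b = 0 := by
  have hc : c < 0 := by simpa using h 0
  have hdisc : discrim (-a) (-b) (-c) ≤ 0 := discrim_le_zero fun t => by nlinarith [h t]
  rw [discrim] at hdisc
  constructor <;> nlinarith [sq_nonneg b]

theorem sq_le_dotProduct_self {ι : Type*} [Fintype ι] (u : ι → ℝ) (i : ι) :
    u i ^ 2 ≤ u ⬝ᵥ u := by
  rw [sq]
  exact Finset.single_le_sum (f := fun j => u j * u j) (fun j _ => mul_self_nonneg _)
    (Finset.mem_univ i)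

theorem zero_mem_closure_of_sInf_dotProduct_self_eq_zero {ι : Type*} [Fintype ι]
    {S : Set (ι → ℝ)} (hS : S.Nonempty) (h : sInf ((fun u => u ⬝ᵥ u) '' S) = 0) :
    (0 : ι → ℝ) ∈ closure S := by
  rw [Metric.mem_closure_iff]
  intro ε hε
  obtain ⟨_, ⟨u, hu, rfl⟩, hlt⟩ :=
    exists_lt_of_csInf_lt (hS.image _) (h ▸ pow_pos hε 2 : sInf _ < ε ^ 2)
  refine ⟨u, hu, ?_⟩
  rw [dist_zero_left, pi_norm_lt_iff hε]
  intro i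
  exact abs_lt_of_sq_lt_sq ((sq_le_dotProduct_self u i).trans_lt hlt) hε.le

section QuadConstraint

variable {n : Type*} [Fintype n]

def quadConstraint (B : Matrix n n ℝ) (b : n → ℝ) (k : ℝ) (x : n → ℝ) : ℝ :=
  x ⬝ᵥ B *ᵥ x + 2 * (b ⬝ᵥ x) - k

variable {B : Matrix n n ℝ} {b : n → ℝ} {k : ℝ}

theorem quadConstraint_neg (B : Matrix n n ℝ) (b : n → ℝ) (k : ℝ) (x : n → ℝ) :
    quadConstraint (-B) (-b) (-k) x = -quadConstraint B b k x := by
  simp only [quadConstraint, neg_mulVec, dotProduct_neg, neg_dotProduct]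
  ring

theorem continuous_quadConstraint (B : Matrix n n ℝ) (b : n → ℝ) (k : ℝ) :
    Continuous (quadConstraint B b k) := by
  unfold quadConstraint
  fun_prop

theorem quadConstraint_smul (t : ℝ) (y : n → ℝ) :
    quadConstraint B b k (t • y) = (y ⬝ᵥ B *ᵥ y) * t ^ 2 + 2 * (b ⬝ᵥ y) * t - k := by
  simp only [quadConstraint, mulVec_smul, dotProduct_smul, smul_dotProduct, smul_eq_mul]
  ring

theorem Matrix.IsHermitian.dotProduct_mulVec_comm (hB : B.IsHermitian) (x y : n → ℝ) :
    x ⬝ᵥ B *ᵥ y = y ⬝ᵥ B *ᵥ x := by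
  rw [dotProduct_mulVec, ← mulVec_transpose, ← conjTranspose_eq_transpose_of_trivial, hB.eq,
    dotProduct_comm]

theorem quadConstraint_add (hB : B.IsHermitian) (x y : n → ℝ) :
    quadConstraint B b k (x + y) =
      quadConstraint B b k x + 2 * ((B *ᵥ x + b) ⬝ᵥ y) + y ⬝ᵥ B *ᵥ y := by
  simp only [quadConstraint, mulVec_add, dotProduct_add, add_dotProduct,
    hB.dotProduct_mulVec_comm x y, dotProduct_comm (B *ᵥ x) y]
  ring

theorem add_le_quadConstraint_add (hB : B.PosSemidef) (x y : n → ℝ) :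
    quadConstraint B b k x + 2 * ((B *ᵥ x + b) ⬝ᵥ y) ≤ quadConstraint B b k (x + y) := by
  rw [quadConstraint_add hB.isHermitian]
  have := hB.dotProduct_mulVec_nonneg y
  simp only [star_trivial] at this
  linarith

theorem quadConstraint_add_eq_of_forall_smul_neg (hB : B.PosSemidef) {y : n → ℝ}
    (hy : ∀ t : ℝ, quadConstraint B b k (t • y) < 0) (x : n → ℝ) :
    quadConstraint B b k (x + y) = quadConstraint B b k x := by
  have hQ := hB.dotProduct_mulVec_nonneg y
  rw [star_trivial] at hQ
  obtain ⟨hQ0, hb0⟩ := quadratic_coeffs_eq_zero_of_forall_neg (b := 2 * (b ⬝ᵥ y)) (c := -k) hQ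
    fun t => by linarith [quadConstraint_smul (B := B) (b := b) (k := k) t y, hy t]
  have hBy : B *ᵥ y = 0 := (hB.dotProduct_mulVec_zero_iff y).1 (by simpa using hQ0)
  rw [quadConstraint_add hB.isHermitian, hQ0, add_dotProduct, dotProduct_comm,
    hB.isHermitian.dotProduct_mulVec_comm, hBy, dotProduct_zero]
  linarith

end QuadConstraint

section Blocks

variable {ι κ : Type*}

theorem Sum.elim_zero_smul (t : ℝ) (w : κ → ℝ) :
    Sum.elim (0 : ι → ℝ) (t • w) = t • Sum.elim (0 : ι → ℝ) w := by
  ext i; cases i <;> simp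

variable [Fintype ι] [Fintype κ]

theorem Matrix.mulVec_sumElim_zero_comp_inr (B : Matrix (ι ⊕ κ) (ι ⊕ κ) ℝ) (w : κ → ℝ) :
    (B *ᵥ Sum.elim 0 w) ∘ Sum.inr = B.submatrix Sum.inr Sum.inr *ᵥ w := by
  ext i; simp [mulVec, dotProduct, Fintype.sum_sum_type]

theorem Matrix.dotProduct_sumElim_zero (z : ι ⊕ κ → ℝ) (w : κ → ℝ) :
    z ⬝ᵥ Sum.elim 0 w = z ∘ Sum.inr ⬝ᵥ w := by
  simp [dotProduct, Fintype.sum_sum_type]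

theorem Matrix.dotProduct_eq_of_comp_inr_eq_zero {g : ι ⊕ κ → ℝ} (hg : g ∘ Sum.inr = 0)
    (z : ι ⊕ κ → ℝ) : g ⬝ᵥ z = g ∘ Sum.inl ⬝ᵥ z ∘ Sum.inl := by
  simp [dotProduct, Fintype.sum_sum_type, show ∀ i, g (Sum.inr i) = 0 from congrFun hg]

variable {B : Matrix (ι ⊕ κ) (ι ⊕ κ) ℝ} {b : ι ⊕ κ → ℝ} {k : ℝ}

theorem exists_quadConstraint_sumElim_zero_nonpos (hB : B.PosSemidef)
    (hX0 : (0 : ι → ℝ) ∈ closure ((· ∘ Sum.inl) '' {x | quadConstraint B b k x = 0})) :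
    ∃ w : κ → ℝ, quadConstraint B b k (Sum.elim 0 w) ≤ 0 := by
  rcases (hB.isHermitian.submatrix Sum.inr).exists_mulVec_eq_or_exists_dotProduct_ne_zero
    (-(b ∘ Sum.inr)) with ⟨p, hp⟩ | ⟨w, hw, hbw⟩
  · refine ⟨p, ?_⟩
    set g := B *ᵥ Sum.elim 0 p + b
    have hg : g ∘ Sum.inr = 0 := by
      rw [Pi.add_comp, mulVec_sumElim_zero_comp_inr, hp, neg_add_cancel]
    have hmaps : MapsTo (· ∘ Sum.inl) {x | quadConstraint B b k x = 0}
        {u : ι → ℝ | quadConstraint B b k (Sum.elim 0 p) + 2 * (g ∘ Sum.inl ⬝ᵥ u) ≤ 0} := by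
      intro x hx
      have hconvex := add_le_quadConstraint_add (b := b) (k := k) hB (Sum.elim 0 p)
        (x - (Sum.elim 0 p : ι ⊕ κ → ℝ))
      rwa [add_sub_cancel, hx, dotProduct_eq_of_comp_inr_eq_zero hg, Pi.sub_comp,
        Sum.elim_comp_inl, sub_zero] at hconvex
    simpa using (isClosed_le (by fun_prop) continuous_const).closure_subset_iff.2
      hmaps.image_subset hX0
  · refine ⟨(k / (2 * (b ∘ Sum.inr ⬝ᵥ w))) • w, le_of_eq ?_⟩
    rw [neg_dotProduct, neg_ne_zero] at hbw
    have hQ : Sum.elim 0 w ⬝ᵥ B *ᵥ Sum.elim 0 w = 0 := by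
      rw [dotProduct_comm, dotProduct_sumElim_zero, mulVec_sumElim_zero_comp_inr, hw,
        zero_dotProduct]
    rw [Sum.elim_zero_smul, quadConstraint_smul, hQ, dotProduct_sumElim_zero]
    field_simp
    ring

theorem exists_quadConstraint_sumElim_zero_nonneg (hB : B.PosSemidef)
    (hX0 : (0 : ι → ℝ) ∈ closure ((· ∘ Sum.inl) '' {x | quadConstraint B b k x = 0})) :
    ∃ w : κ → ℝ, 0 ≤ quadConstraint B b k (Sum.elim 0 w) := by
  by_contra! hneg
  have hfactor (x : ι ⊕ κ → ℝ) :
      quadConstraint B b k x = quadConstraint B b k (Sum.elim (x ∘ Sum.inl) 0) := by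
    have hsplit : x = Sum.elim (x ∘ Sum.inl) 0 + Sum.elim (0 : ι → ℝ) (x ∘ Sum.inr) := by
      rw [← Sum.elim_add_add, add_zero, zero_add, Sum.elim_comp_inl_inr]
    conv_lhs => rw [hsplit]
    exact quadConstraint_add_eq_of_forall_smul_neg hB
      (fun t => by rw [← Sum.elim_zero_smul]; exact hneg _) _
  have hmaps : MapsTo (· ∘ Sum.inl) {x | quadConstraint B b k x = 0}
      {u : ι → ℝ | quadConstraint B b k (Sum.elim u 0) = 0} := fun x hx =>
    (hfactor x).symm.trans hx
  have hcont : Continuous fun u : ι → ℝ => quadConstraint B b k (Sum.elim u 0) :=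
    (continuous_quadConstraint B b k).comp
      (continuous_pi (Sum.rec continuous_apply fun _ => continuous_const))
  have h0 := (isClosed_eq hcont continuous_const).closure_subset_iff.2 hmaps.image_subset hX0
  exact (hneg 0).ne h0

theorem exists_quadConstraint_eq_zero_comp_inl_eq_zero (hB : B.PosSemidef)
    (hX0 : (0 : ι → ℝ) ∈ closure ((· ∘ Sum.inl) '' {x | quadConstraint B b k x = 0})) :
    ∃ x, quadConstraint B b k x = 0 ∧ x ∘ Sum.inl = 0 := by
  obtain ⟨w₁, h₁⟩ := exists_quadConstraint_sumElim_zero_nonpos hB hX0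
  obtain ⟨w₂, h₂⟩ := exists_quadConstraint_sumElim_zero_nonneg hB hX0
  obtain ⟨w, hw⟩ := intermediate_value_univ w₁ w₂
    ((continuous_quadConstraint B b k).comp
      (continuous_pi (Sum.rec (fun _ => continuous_const) continuous_apply))) ⟨h₁, h₂⟩
  exact ⟨Sum.elim 0 w, hw, Sum.elim_comp_inl _ _⟩

end Blocks

theorem stmt11_general {r m : ℕ}
    (B : Matrix (Fin r ⊕ Fin m) (Fin r ⊕ Fin m) ℝ)
    (hB : B.PosSemidef ∨ (-B).PosSemidef)
    (b : Fin r ⊕ Fin m → ℝ) (k : ℝ)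
    (hX : {x : Fin r ⊕ Fin m → ℝ | x ⬝ᵥ B.mulVec x + 2 * (b ⬝ᵥ x) - k = 0}.Nonempty)
    (hinf : sInf ((fun x => (x ∘ Sum.inl) ⬝ᵥ (x ∘ Sum.inl)) ''
        {x : Fin r ⊕ Fin m → ℝ | x ⬝ᵥ B.mulVec x + 2 * (b ⬝ᵥ x) - k = 0}) = 0) :
    ∃ x ∈ {x : Fin r ⊕ Fin m → ℝ | x ⬝ᵥ B.mulVec x + 2 * (b ⬝ᵥ x) - k = 0},
      x ∘ Sum.inl = 0 := by
  change ∃ x, quadConstraint B b k x = 0 ∧ x ∘ Sum.inl = 0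
  have hX0 : (0 : Fin r → ℝ) ∈ closure ((· ∘ Sum.inl) '' {x | quadConstraint B b k x = 0}) :=
    zero_mem_closure_of_sInf_dotProduct_self_eq_zero (hX.image _) (by rwa [image_image])
  rcases hB with hB | hB
  · exact exists_quadConstraint_eq_zero_comp_inl_eq_zero hB hX0
  · have hneg :
        {x | quadConstraint (-B) (-b) (-k) x = 0} = {x | quadConstraint B b k x = 0} := by
      ext x; simp [quadConstraint_neg]
    rw [← hneg] at hX0
    simpa [quadConstraint_neg] using exists_quadConstraint_eq_zero_comp_inl_eq_zero hB hX0

/-- A hyperbolic (indefinite) constraint is necessary for an essentially perfect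
solution: if `B` is positive or negative semidefinite, `X = {xᵀBx + 2bᵀx − k = 0}`
is nonempty, and `inf{‖x₁‖² : x ∈ X} = 0`, then the infimum is attained, i.e. there
is a feasible `x` with `x₁ = 0`. -/
theorem stmt11 {r m : ℕ} (hr : 1 ≤ r) (hm : 1 ≤ m)
    (B : Matrix (Fin r ⊕ Fin m) (Fin r ⊕ Fin m) ℝ)
    (hB : B.PosSemidef ∨ (-B).PosSemidef)
    (b : Fin r ⊕ Fin m → ℝ) (k : ℝ)
    (hX : {x : Fin r ⊕ Fin m → ℝ | x ⬝ᵥ B.mulVec x + 2 * (b ⬝ᵥ x) - k = 0}.Nonempty)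
    (hinf : sInf ((fun x => (x ∘ Sum.inl) ⬝ᵥ (x ∘ Sum.inl)) ''
        {x : Fin r ⊕ Fin m → ℝ | x ⬝ᵥ B.mulVec x + 2 * (b ⬝ᵥ x) - k = 0}) = 0) :
    ∃ x ∈ {x : Fin r ⊕ Fin m → ℝ | x ⬝ᵥ B.mulVec x + 2 * (b ⬝ᵥ x) - k = 0},
      x ∘ Sum.inl = 0 :=
  stmt11_general B hB b k hX hinf
end

section
/- Let B be an n×n real symmetric matrix having at least one positive eigenvalue, b ∈ ℝⁿ and k ∈ ℝ. Let γ₁ > ⋯ > γ_q be the distinct nonzero eigenvalues of B (so γ₁ > 0), with multiplicities m₁, …, m_q, let m₀ := n − (m₁ + ⋯ + m_q) be the dimension of the null space of B, let lᵢ ≥ 0 be the Euclidean norm of the orthogonal projection of b onto the γᵢ-eigenspace of B (i = 1, …, q), and l₀ ≥ 0 that of the projection of b onto the null space of B. Set δᵢ := lᵢ/|γᵢ|, ε := l₀ and k* := k + Σᵢ₌₁^q lᵢ²/γᵢ. Then there exist an orthogonal n×n matrix V and a vector a ∈ ℝⁿ such that: VᵀBV = blockdiag(O_{m₀}, γ₁I_{m₁},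 …, γ_qI_{m_q}); Vᵀ(b + Ba) = ε·e, where e is the standard basis vector whose single nonzero coordinate is the first coordinate of the O_{m₀} block; −Vᵀa equals the vector which is zero on the null-space block and whose component in the γᵢ block is δᵢ times the first standard basis vector of that block, for each i = 1, …, q; and k − aᵀ(2b + Ba) = k*. -/
/-!
After conjugating by `U`, the matrix `B` is the diagonal `d = (0, γᵢ)` and `b` becomes
`c = Uᵀb`. On every eigenvalue block (the kernel included) a Householder reflection moves the
block of `c` onto a multiple of the first basis vector of that block, with the same length and
with sign `sgn γᵢ` on the `γᵢ`-blocks. The resulting block-orthogonal `P` commutes with the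
diagonal, so `V = U Pᵀ` still diagonalises `B`, and now `Vᵀb = z` is concentrated on the first
coordinate of each block. Translating by `a = V y` with `yₚ = -zₚ / dₚ` completes the square in
every coordinate of nonzero eigenvalue: it removes these coordinates from the linear term, leaves
`y = -(δᵢ e)` and shifts the constant by `Σ zₚ² / dₚ = Σ lᵢ² / γᵢ`.
-/

open Matrix

theorem Matrix.exists_mem_orthogonalGroup_mulVec_eq {ι : Type*} [Fintype ι] [DecidableEq ι]
    {x y : ι → ℝ} (h : ∑ i, x i ^ 2 = ∑ i, y i ^ 2) :
    ∃ P ∈ orthogonalGroup ι ℝ, P *ᵥ x = y := by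
  let b := EuclideanSpace.basisFun ι ℝ
  let f := Submodule.reflection (ℝ ∙ (WithLp.toLp 2 x - WithLp.toLp 2 y))ᗮ
  refine ⟨f.toMatrix b.toBasis b.toBasis, f.toMatrix_mem_unitaryGroup b b, ?_⟩
  have hxy : ‖WithLp.toLp 2 x‖ = ‖WithLp.toLp 2 y‖ := by
    simp [EuclideanSpace.norm_eq, h]
  have hrepr (v : EuclideanSpace ℝ ι) : ⇑(b.toBasis.repr v) = v.ofLp := rfl
  simpa [hrepr, f, Submodule.reflection_sub hxy] using
    LinearMap.toMatrix_mulVec_repr b.toBasis b.toBasis f.toLinearMap (WithLp.toLp 2 x)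

theorem Matrix.mul_diagonal_eq_diagonal_mul {n R : Type*} [DecidableEq n] [Fintype n]
    [CommSemiring R] {P : Matrix n n R} {d : n → R} (h : ∀ i j, d i ≠ d j → P i j = 0) :
    P * diagonal d = diagonal d * P := by
  ext i j
  rw [mul_diagonal, diagonal_mul]
  by_cases hij : d i = d j
  · rw [hij, mul_comm]
  · simp [h i j hij]

theorem Matrix.blockDiagonal'_mulVec {κ R : Type*} [Fintype κ] [DecidableEq κ] [CommSemiring R]
    {m : κ → Type*} [∀ i, Fintype (m i)] (M : ∀ i, Matrix (m i) (m i) R)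
    (v : (Σ i, m i) → R) :
    blockDiagonal' M *ᵥ v = fun p => (M p.1 *ᵥ fun j => v ⟨p.1, j⟩) p.2 := by
  ext ⟨i, j⟩
  simp only [mulVec, dotProduct, ← Finset.univ_sigma_univ, Finset.sum_sigma]
  rw [Finset.sum_eq_single i]
  · simp [blockDiagonal'_apply_eq]
  · intro i' _ hi'
    exact Finset.sum_eq_zero fun j' _ => by rw [blockDiagonal'_apply_ne _ _ _ hi'.symm, zero_mul]
  · simp

theorem exists_mem_orthogonalGroup_mulVec_eq_of_blockwise {n₀ κ : Type*} [Fintype n₀]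
    [DecidableEq n₀] [Fintype κ] [DecidableEq κ] {m : κ → Type*} [∀ i, Fintype (m i)]
    [∀ i, DecidableEq (m i)] {c z : n₀ ⊕ (Σ i, m i) → ℝ}
    (h₀ : ∑ j, c (.inl j) ^ 2 = ∑ j, z (.inl j) ^ 2)
    (h : ∀ i, ∑ j, c (.inr ⟨i, j⟩) ^ 2 = ∑ j, z (.inr ⟨i, j⟩) ^ 2) (g : κ → ℝ) :
    ∃ P ∈ orthogonalGroup (n₀ ⊕ (Σ i, m i)) ℝ, P *ᵥ c = z ∧
      P * diagonal (Sum.elim (fun _ => (0 : ℝ)) (fun p => g p.1)) =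
        diagonal (Sum.elim (fun _ => (0 : ℝ)) (fun p => g p.1)) * P := by
  obtain ⟨P₀, hP₀, hP₀c⟩ := exists_mem_orthogonalGroup_mulVec_eq h₀
  choose Q hQ hQc using fun i => exists_mem_orthogonalGroup_mulVec_eq (h i)
  refine ⟨fromBlocks P₀ 0 0 (blockDiagonal' Q), ?_, ?_, ?_⟩
  · simp only [mem_orthogonalGroup_iff'] at hP₀ hQ ⊢
    simp only [fromBlocks_transpose, transpose_zero, blockDiagonal'_transpose,
      fromBlocks_multiply, hP₀, Matrix.mul_zero, add_zero, Matrix.zero_mul, ← blockDiagonal'_mul,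
      hQ, zero_add]
    rw [← Pi.one_def, blockDiagonal'_one, fromBlocks_one]
  · ext (j | p)
    · simp only [fromBlocks_mulVec, zero_mulVec, add_zero, Sum.elim_inl]
      exact congrFun hP₀c j
    · simp [fromBlocks_mulVec, blockDiagonal'_mulVec, hQc]
  · refine mul_diagonal_eq_diagonal_mul ?_
    rintro (j | ⟨i, j⟩) (j' | ⟨i', j'⟩) hne
    · exact absurd rfl hne
    · rfl
    · rfl
    · exact blockDiagonal'_apply_ne Q _ _ fun hii' => hne (by subst hii'; rfl)

theorem sum_sq_ite_val_eq_zero {n : ℕ} {t : ℝ} {x : Fin n → ℝ} (ht : t ^ 2 = ∑ j, x j ^ 2) :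
    ∑ j : Fin n, (if (j : ℕ) = 0 then t else 0) ^ 2 = ∑ j, x j ^ 2 := by
  cases n with
  | zero => simp
  | succ n => simp [Fin.sum_univ_succ, ht]

section

variable {ι : Type*} [Fintype ι]

theorem mul_transpose_transpose_mul_self [DecidableEq ι] {U P : Matrix ι ι ℝ}
    (hU : Uᵀ * U = 1) (hP : P ∈ orthogonalGroup ι ℝ) : (U * Pᵀ)ᵀ * (U * Pᵀ) = 1 := by
  rw [transpose_mul, transpose_transpose, Matrix.mul_assoc, ← Matrix.mul_assoc Uᵀ, hU,
    Matrix.one_mul]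
  exact (mem_orthogonalGroup_iff _ _).mp hP

theorem mul_transpose_conj_eq_of_commute [DecidableEq ι] {U P D : Matrix ι ι ℝ}
    (hU : Uᵀ * U = 1) (hP : P ∈ orthogonalGroup ι ℝ) (hPD : P * D = D * P) :
    (U * Pᵀ)ᵀ * (U * D * Uᵀ) * (U * Pᵀ) = D := by
  rw [mem_orthogonalGroup_iff] at hP
  calc (U * Pᵀ)ᵀ * (U * D * Uᵀ) * (U * Pᵀ) = P * (Uᵀ * U) * D * (Uᵀ * U) * Pᵀ := by
        simp only [transpose_mul, transpose_transpose, Matrix.mul_assoc]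
    _ = D * (P * Pᵀ) := by rw [hU, Matrix.mul_one, Matrix.mul_one, hPD, Matrix.mul_assoc]
    _ = D := by rw [hP, Matrix.mul_one]

theorem transpose_mulVec_mulVec_mulVec {V B D : Matrix ι ι ℝ} (hVBV : Vᵀ * B * V = D)
    (y : ι → ℝ) : Vᵀ *ᵥ (B *ᵥ (V *ᵥ y)) = D *ᵥ y := by
  rw [mulVec_mulVec, mulVec_mulVec, hVBV]

theorem mulVec_dotProduct (V : Matrix ι ι ℝ) (y w : ι → ℝ) :
    V *ᵥ y ⬝ᵥ w = y ⬝ᵥ Vᵀ *ᵥ w := by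
  rw [dotProduct_comm, dotProduct_mulVec, ← mulVec_transpose, dotProduct_comm]

-- Division by zero makes the translation vanish on the kernel of `diagonal d`.
theorem add_diagonal_mulVec_neg_div [DecidableEq ι] (d z : ι → ℝ) :
    z + diagonal d *ᵥ (fun p => -(z p / d p)) = fun p => if d p = 0 then z p else 0 := by
  ext p
  by_cases hp : d p = 0
  · simp [mulVec_diagonal, hp]
  · simp [mulVec_diagonal, hp, mul_div_cancel₀]

theorem neg_div_dotProduct_two_smul_add [DecidableEq ι] (d z : ι → ℝ) :
    (fun p => -(z p / d p)) ⬝ᵥ ((2 : ℝ) • z + diagonal d *ᵥ fun p => -(z p / d p)) =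
      -∑ p, z p ^ 2 / d p := by
  rw [dotProduct, ← Finset.sum_neg_distrib]
  refine Finset.sum_congr rfl fun p _ => ?_
  by_cases hp : d p = 0
  · simp [hp]
  · simp only [Pi.add_apply, Pi.smul_apply, mulVec_diagonal, smul_eq_mul]
    field_simp
    ring

end

theorem stmt13_general {m0 q : ℕ} (m : Fin q → ℕ)
    (γ : Fin q → ℝ) (hne : ∀ i, γ i ≠ 0)
    (B : Matrix (Fin m0 ⊕ ((i : Fin q) × Fin (m i))) (Fin m0 ⊕ ((i : Fin q) × Fin (m i))) ℝ)
    (b : Fin m0 ⊕ ((i : Fin q) × Fin (m i)) → ℝ) (k : ℝ)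
    (U : Matrix (Fin m0 ⊕ ((i : Fin q) × Fin (m i))) (Fin m0 ⊕ ((i : Fin q) × Fin (m i))) ℝ)
    (hU : Uᵀ * U = 1)
    (hB : B = U * Matrix.diagonal (Sum.elim (fun _ => (0 : ℝ)) (fun p => γ p.1)) * Uᵀ) :
    let c : Fin m0 ⊕ ((i : Fin q) × Fin (m i)) → ℝ := Uᵀ.mulVec b
    let l : Fin q → ℝ := fun i => Real.sqrt (∑ j : Fin (m i), (c (Sum.inr ⟨i, j⟩)) ^ 2)
    let l0 : ℝ := Real.sqrt (∑ j : Fin m0, (c (Sum.inl j)) ^ 2)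
    let δ : Fin q → ℝ := fun i => l i / |γ i|
    let ε : ℝ := l0
    let kstar : ℝ := k + ∑ i : Fin q, (l i) ^ 2 / γ i
    ∃ (V : Matrix (Fin m0 ⊕ ((i : Fin q) × Fin (m i)))
          (Fin m0 ⊕ ((i : Fin q) × Fin (m i))) ℝ)
      (a : Fin m0 ⊕ ((i : Fin q) × Fin (m i)) → ℝ),
      Vᵀ * V = 1 ∧
      Vᵀ * B * V = Matrix.diagonal (Sum.elim (fun _ => (0 : ℝ)) (fun p => γ p.1)) ∧
      Vᵀ.mulVec (b + B.mulVec a)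
        = ε • (Sum.elim (fun j : Fin m0 => if (j : ℕ) = 0 then (1 : ℝ) else 0)
            (fun _ => (0 : ℝ))) ∧
      -(Vᵀ.mulVec a)
        = Sum.elim (fun _ => (0 : ℝ))
            (fun p : (i : Fin q) × Fin (m i) => if (p.2 : ℕ) = 0 then δ p.1 else 0) ∧
      k - a ⬝ᵥ ((2 : ℝ) • b + B.mulVec a) = kstar := by
  intro c l l0 δ ε kstar
  set d := Sum.elim (fun _ : Fin m0 => (0 : ℝ)) (fun p : (i : Fin q) × Fin (m i) => γ p.1)
  set z := Sum.elim (fun j : Fin m0 => if (j : ℕ) = 0 then l0 else 0)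
    (fun p : (i : Fin q) × Fin (m i) => if (p.2 : ℕ) = 0 then γ p.1 / |γ p.1| * l p.1 else 0)
  have hl (i) : l i ^ 2 = ∑ j, c (.inr ⟨i, j⟩) ^ 2 := Real.sq_sqrt (by positivity)
  have hzl (i) : ∑ j, z (.inr ⟨i, j⟩) ^ 2 = l i ^ 2 := by
    show ∑ j : Fin (m i), (if (j : ℕ) = 0 then γ i / |γ i| * l i else 0) ^ 2 = _
    rw [hl, sum_sq_ite_val_eq_zero]
    rw [mul_pow, div_pow, sq_abs, div_self (pow_ne_zero 2 (hne i)), one_mul, hl]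
  obtain ⟨P, hP, hPc, hPD⟩ := exists_mem_orthogonalGroup_mulVec_eq_of_blockwise (c := c) (z := z)
    (sum_sq_ite_val_eq_zero (Real.sq_sqrt (by positivity))).symm
    (fun i => ((hzl i).trans (hl i)).symm) γ
  set V := U * Pᵀ
  have hVBV : Vᵀ * B * V = diagonal d := hB ▸ mul_transpose_conj_eq_of_commute hU hP hPD
  have hVb : Vᵀ *ᵥ b = z := by rw [transpose_mul, transpose_transpose, ← mulVec_mulVec, hPc]
  set y := fun p => -(z p / d p)
  refine ⟨V, V *ᵥ y, mul_transpose_transpose_mul_self hU hP, hVBV, ?_, ?_, ?_⟩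
  · rw [mulVec_add, hVb, transpose_mulVec_mulVec_mulVec hVBV, add_diagonal_mulVec_neg_div]
    ext (j | p) <;> simp [z, d, ε, hne]
  · rw [mulVec_mulVec, mul_transpose_transpose_mul_self hU hP, one_mulVec]
    ext (j | ⟨i, j⟩)
    · simp [y, z, d]
    · simp only [y, z, d, δ, Pi.neg_apply, Sum.elim_inr, ite_div, zero_div, neg_neg]
      field_simp [hne i]
  · rw [mulVec_dotProduct, mulVec_add, mulVec_smul, hVb, transpose_mulVec_mulVec_mulVec hVBV,
      neg_div_dotProduct_two_smul_add]
    simp [kstar, Fintype.sum_sum_type, Fintype.sum_sigma, d, ← Finset.sum_div, hzl]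

/-- Existence of the canonical form. Coordinates are indexed by
`Fin m₀ ⊕ Σ i : Fin q, Fin (m i)`: the null-space block of `B` and one block per
distinct nonzero eigenvalue `γ i` (strictly decreasing, `γ 0 > 0`). The hypothesis
`B = U · diag(0, γᵢ) · Uᵀ` with `U` orthogonal expresses the spectral structure; the
lengths `lᵢ`, `l₀` of the projections of `b` onto the eigenspaces are computed from
`c = Uᵀb`. With `δᵢ = lᵢ/|γᵢ|`, `ε = l₀`, `k* = k + Σ lᵢ²/γᵢ`, there exist an orthogonal
`V` and `a` with `VᵀBV` the same block diagonal, `Vᵀ(b + Ba) = ε·e` (`e` the first unit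
vector of the null block), `−Vᵀa` having component `δᵢ` on the first coordinate of the
`γᵢ` block and zero elsewhere, and `k − aᵀ(2b + Ba) = k*`. -/
theorem stmt13 {m0 q : ℕ} (hq : 0 < q) (m : Fin q → ℕ) (hm : ∀ i, 1 ≤ m i)
    (γ : Fin q → ℝ) (hanti : StrictAnti γ) (hne : ∀ i, γ i ≠ 0)
    (hpos : 0 < γ ⟨0, hq⟩)
    (B : Matrix (Fin m0 ⊕ ((i : Fin q) × Fin (m i))) (Fin m0 ⊕ ((i : Fin q) × Fin (m i))) ℝ)
    (b : Fin m0 ⊕ ((i : Fin q) × Fin (m i)) → ℝ) (k : ℝ)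
    (U : Matrix (Fin m0 ⊕ ((i : Fin q) × Fin (m i))) (Fin m0 ⊕ ((i : Fin q) × Fin (m i))) ℝ)
    (hU : Uᵀ * U = 1)
    (hB : B = U * Matrix.diagonal (Sum.elim (fun _ => (0 : ℝ)) (fun p => γ p.1)) * Uᵀ) :
    let c : Fin m0 ⊕ ((i : Fin q) × Fin (m i)) → ℝ := Uᵀ.mulVec b
    let l : Fin q → ℝ := fun i => Real.sqrt (∑ j : Fin (m i), (c (Sum.inr ⟨i, j⟩)) ^ 2)
    let l0 : ℝ := Real.sqrt (∑ j : Fin m0, (c (Sum.inl j)) ^ 2)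
    let δ : Fin q → ℝ := fun i => l i / |γ i|
    let ε : ℝ := l0
    let kstar : ℝ := k + ∑ i : Fin q, (l i) ^ 2 / γ i
    ∃ (V : Matrix (Fin m0 ⊕ ((i : Fin q) × Fin (m i)))
          (Fin m0 ⊕ ((i : Fin q) × Fin (m i))) ℝ)
      (a : Fin m0 ⊕ ((i : Fin q) × Fin (m i)) → ℝ),
      Vᵀ * V = 1 ∧
      Vᵀ * B * V = Matrix.diagonal (Sum.elim (fun _ => (0 : ℝ)) (fun p => γ p.1)) ∧
      Vᵀ.mulVec (b + B.mulVec a)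
        = ε • (Sum.elim (fun j : Fin m0 => if (j : ℕ) = 0 then (1 : ℝ) else 0)
            (fun _ => (0 : ℝ))) ∧
      -(Vᵀ.mulVec a)
        = Sum.elim (fun _ => (0 : ℝ))
            (fun p : (i : Fin q) × Fin (m i) => if (p.2 : ℕ) = 0 then δ p.1 else 0) ∧
      k - a ⬝ᵥ ((2 : ℝ) • b + B.mulVec a) = kstar :=
  stmt13_general m γ hne B b k U hU hB
end

section
/- Adopt the canonical-form data: γ₁ > ⋯ > γ_q nonzero with γ₁ > 0, multiplicities m₁, …, m_q ≥ 1, m₀ ≥ 0, δ = (δ₁, …, δ_q) with δᵢ ≥ 0, ε ≥ 0, and k* ∈ ℝ. Write x = (x₀, x₁, …, x_q) with x₀ ∈ ℝ^{m₀}, xᵢ ∈ ℝ^{mᵢ}, and let P* be the problem of minimising ‖x − t*‖² subject to Σᵢ γᵢ‖xᵢ‖² + 2ε(x₀)₁ = k*, where t* has block components 0 on the x₀ block and δᵢ·u_{mᵢ} on the xᵢ block (u_m the first standard basis vector of ℝ^m). Let P** be the dimension-reduced problem of minimising ‖w − w₀‖² subject to wᵀΔw + 2dᵀw = k*, where, if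 m₀ > 0, w = (y, z) ∈ ℝ^{1+q}, w₀ = (0, δ), Δ = diag(0, γ₁, …, γ_q), d = ε·e₁, and if m₀ = 0, w = z ∈ ℝ^q, w₀ = δ, Δ = diag(γ₁, …, γ_q), d = 0. Then x̂ = (x̂₀, x̂₁, …, x̂_q) is a global minimiser of P* if and only if there is a global minimiser ŵ = (ŷ, ẑ₁, …, ẑ_q) of P** (the ŷ-component absent when m₀ = 0) such that x̂₀ = ŷ·u_{m₀} and, for each i = 1, …, q: x̂ᵢ = ẑᵢ·u_{mᵢ} if δᵢ > 0, and ‖x̂ᵢ‖² = ẑᵢ² if δᵢ = 0. In particular the minimum values of P* and P** coincide. -/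
/-!
`P**` is `P*` with every block collapsed to one coordinate. Embedding `w ↦ (ŷ·u, ẑᵢ·u)` maps
feasible points of `P**` to feasible points of `P*` with the same objective value. Conversely
`x ↦ ((x₀)₁, ‖xᵢ‖)` maps feasible points of `P*` to feasible points of `P**` without increasing
the objective: dropping the other coordinates of `x₀` only lowers `‖x₀‖²`, and
`‖xᵢ - δᵢu‖² = ‖xᵢ‖² - 2δᵢ(xᵢ)₁ + δᵢ² ≥ (‖xᵢ‖ - δᵢ)²` because `(xᵢ)₁ ≤ ‖xᵢ‖` and `δᵢ ≥ 0`.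
So the infima agree, a minimiser of `P*` reduces to a minimiser of `P**` with equality in both
estimates, and equality says exactly that `x₀` lives on its first coordinate and, when `δᵢ > 0`,
that `xᵢ = ‖xᵢ‖·u`.
-/

open Matrix

section Reduction

variable {α β : Type*} {X : Set α} {W : Set β} {f : α → ℝ} {g : β → ℝ} {R : α → β → Prop}

theorem minimizer_iff_exists_related_and_sInf_image_eq (Φ : β → α) (Ψ : α → β)
    (hΦ : ∀ b, R (Φ b) b) (hR_mem : ∀ a b, R a b → b ∈ W → a ∈ X)
    (hR_eq : ∀ a b, R a b → f a = g b) (hΨ_mem : ∀ a ∈ X, Ψ a ∈ W)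
    (hΨ_le : ∀ a ∈ X, g (Ψ a) ≤ f a) (hΨ_rel : ∀ a ∈ X, g (Ψ a) = f a → R a (Ψ a))
    (hX : X.Nonempty) (hf : BddBelow (f '' X)) :
    (∀ a, (a ∈ X ∧ ∀ x ∈ X, f a ≤ f x) ↔ ∃ b, (b ∈ W ∧ ∀ w ∈ W, g b ≤ g w) ∧ R a b) ∧
      sInf (f '' X) = sInf (g '' W) := by
  have hΦ_mem : ∀ b ∈ W, Φ b ∈ X := fun b hb => hR_mem _ _ (hΦ b) hb
  have hΦ_eq : ∀ b, f (Φ b) = g b := fun b => hR_eq _ _ (hΦ b)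
  have hgf : g '' W ⊆ f '' X := by
    rintro _ ⟨b, hb, rfl⟩
    exact ⟨Φ b, hΦ_mem b hb, hΦ_eq b⟩
  refine ⟨fun a => ⟨?_, ?_⟩, le_antisymm ?_ ?_⟩
  · rintro ⟨ha, hmin⟩
    have hfg : f a ≤ g (Ψ a) := hΦ_eq (Ψ a) ▸ hmin _ (hΦ_mem _ (hΨ_mem a ha))
    refine ⟨Ψ a, ⟨hΨ_mem a ha, fun w hw => ?_⟩, hΨ_rel a ha (le_antisymm (hΨ_le a ha) hfg)⟩
    calc g (Ψ a) ≤ f a := hΨ_le a ha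
      _ ≤ f (Φ w) := hmin _ (hΦ_mem w hw)
      _ = g w := hΦ_eq w
  · rintro ⟨b, ⟨hb, hmin⟩, hab⟩
    refine ⟨hR_mem a b hab hb, fun x hx => ?_⟩
    calc f a = g b := hR_eq a b hab
      _ ≤ g (Ψ x) := hmin _ (hΨ_mem x hx)
      _ ≤ f x := hΨ_le x hx
  · obtain ⟨x, hx⟩ := hX
    exact csInf_le_csInf hf ⟨_, Ψ x, hΨ_mem x hx, rfl⟩ hgf
  · refine le_csInf (hX.image f) ?_
    rintro _ ⟨x, hx, rfl⟩
    exact (csInf_le (hf.mono hgf) ⟨Ψ x, hΨ_mem x hx, rfl⟩).trans (hΨ_le x hx)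

end Reduction

namespace Fin

instance subsingleton_min_one (n : ℕ) : Subsingleton (Fin (min n 1)) :=
  subsingleton_iff_le_one.mpr (min_le_right n 1)

instance isEmpty_min_zero_one : IsEmpty (Fin (min 0 1)) := ⟨fun j => Nat.not_lt_zero _ j.isLt⟩

theorem sum_ite_val_eq_zero {M : Type*} [AddCommMonoid M] {n : ℕ} {j : Fin n}
    (hj : (j : ℕ) = 0) (f : Fin n → M) :
    ∑ k : Fin n, (if (k : ℕ) = 0 then f k else 0) = f j := by
  rw [Fintype.sum_eq_single j fun k hk => if_neg fun h => hk (Fin.ext (h.trans hj.symm))]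
  exact if_pos hj

theorem sum_ite_val_eq_zero_eq_sum_castLE {M : Type*} [AddCommMonoid M] {n : ℕ} (f : Fin n → M) :
    ∑ j : Fin n, (if (j : ℕ) = 0 then f j else 0)
      = ∑ j : Fin (min n 1), f (castLE (min_le_left n 1) j) := by
  rcases n with _ | n
  · simp
  · rw [sum_ite_val_eq_zero (j := ⟨0, n.succ_pos⟩) rfl, Fintype.sum_subsingleton _ ⟨0, by simp⟩]
    rfl

theorem sum_ite_val_eq_zero_sum {M N : Type*} [AddCommMonoid M] [AddCommMonoid N] {n : ℕ}
    (φ : M → N) (v : Fin (min n 1) → M) :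
    ∑ j : Fin n, (if (j : ℕ) = 0 then φ (∑ k, v k) else 0) = ∑ k, φ (v k) := by
  rcases n with _ | n
  · simp
  · rw [sum_ite_val_eq_zero (j := ⟨0, n.succ_pos⟩) rfl, Fintype.sum_subsingleton _ ⟨0, by simp⟩,
      Fintype.sum_subsingleton _ ⟨0, by simp⟩]

theorem sum_ite_val_eq_zero_sq_le {n : ℕ} (u : Fin n → ℝ) :
    ∑ j : Fin n, (if (j : ℕ) = 0 then u j ^ 2 else 0) ≤ ∑ j, u j ^ 2 :=
  Finset.sum_le_sum fun j _ => by split_ifs; exacts [le_rfl, sq_nonneg _]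

theorem eq_ite_of_sum_ite_val_eq_zero_sq_eq {n : ℕ} {u : Fin n → ℝ}
    (h : ∑ j : Fin n, (if (j : ℕ) = 0 then u j ^ 2 else 0) = ∑ j, u j ^ 2) (j : Fin n) :
    u j = if (j : ℕ) = 0 then u j else 0 := by
  have hj := (Finset.sum_eq_sum_iff_of_le fun j _ => by
    split_ifs; exacts [le_rfl, sq_nonneg _]).mp h j (Finset.mem_univ j)
  split_ifs at hj ⊢ with h0
  · rfl
  · exact pow_eq_zero_iff two_ne_zero |>.mp hj.symm

theorem sum_sub_ite_sq {n : ℕ} (hn : 0 < n) (v : Fin n → ℝ) (δ : ℝ) :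
    ∑ j : Fin n, (v j - if (j : ℕ) = 0 then δ else 0) ^ 2
      = ∑ j, v j ^ 2 - 2 * δ * v ⟨0, hn⟩ + δ ^ 2 := by
  have hterm : ∀ j : Fin n, (v j - if (j : ℕ) = 0 then δ else 0) ^ 2
      = v j ^ 2 + if (j : ℕ) = 0 then δ ^ 2 - 2 * δ * v j else 0 := by
    intro j; split_ifs <;> ring
  rw [Finset.sum_congr rfl fun j _ => hterm j, Finset.sum_add_distrib,
    sum_ite_val_eq_zero (j := ⟨0, hn⟩) rfl]
  ring

theorem sqrt_sum_sq_sub_sq_le {n : ℕ} (hn : 0 < n) (v : Fin n → ℝ) {δ : ℝ} (hδ : 0 ≤ δ) :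
    (√(∑ j, v j ^ 2) - δ) ^ 2 ≤ ∑ j : Fin n, (v j - if (j : ℕ) = 0 then δ else 0) ^ 2 := by
  have hS : 0 ≤ ∑ j, v j ^ 2 := by positivity
  have hv₀ : v ⟨0, hn⟩ ≤ √(∑ j, v j ^ 2) :=
    (le_abs_self _).trans (Real.abs_le_sqrt (Finset.single_le_sum (fun j _ => sq_nonneg (v j))
      (Finset.mem_univ _)))
  rw [sum_sub_ite_sq hn, sub_sq, Real.sq_sqrt hS]
  nlinarith

end Fin

namespace CanonicalForm

section Block

variable {n : ℕ}

def BlockRelated (δ : ℝ) (v : Fin n → ℝ) (z : ℝ) : Prop :=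
  (0 < δ → ∀ j, v j = if (j : ℕ) = 0 then z else 0) ∧ (δ = 0 → ∑ j, v j ^ 2 = z ^ 2)

theorem blockRelated_ite (hn : 0 < n) (δ z : ℝ) :
    BlockRelated δ (fun j : Fin n => if (j : ℕ) = 0 then z else 0) z := by
  refine ⟨fun _ _ => rfl, fun _ => ?_⟩
  simp only [ite_pow, ne_eq, OfNat.ofNat_ne_zero, not_false_eq_true, zero_pow]
  exact Fin.sum_ite_val_eq_zero (j := ⟨0, hn⟩) rfl _

theorem blockRelated_sqrt_of_eq (hn : 0 < n) {v : Fin n → ℝ} {δ : ℝ}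
    (h : (√(∑ j, v j ^ 2) - δ) ^ 2 = ∑ j : Fin n, (v j - if (j : ℕ) = 0 then δ else 0) ^ 2) :
    BlockRelated δ v √(∑ j, v j ^ 2) := by
  have hS : 0 ≤ ∑ j, v j ^ 2 := by positivity
  refine ⟨fun hδ_pos j => ?_, fun _ => (Real.sq_sqrt hS).symm⟩
  have hv₀ : v ⟨0, hn⟩ = √(∑ j, v j ^ 2) := by
    rw [Fin.sum_sub_ite_sq hn, sub_sq, Real.sq_sqrt hS] at h
    nlinarith
  have hsupp := Fin.eq_ite_of_sum_ite_val_eq_zero_sq_eq (u := v) (by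
    rw [Fin.sum_ite_val_eq_zero (j := ⟨0, hn⟩) rfl (fun j => v j ^ 2), hv₀, Real.sq_sqrt hS]) j
  split_ifs at hsupp ⊢ with hj
  · rw [← hv₀]; exact congrArg v (Fin.ext hj)
  · exact hsupp

variable {δ z : ℝ} {v : Fin n → ℝ}

theorem BlockRelated.sum_sq (h : BlockRelated δ v z) (hn : 0 < n) (hδ : 0 ≤ δ) :
    ∑ j, v j ^ 2 = z ^ 2 := by
  rcases hδ.eq_or_lt with hδ0 | hδ_pos
  · exact h.2 hδ0.symm
  · rw [funext (h.1 hδ_pos)]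
    exact (blockRelated_ite hn 0 z).2 rfl

theorem BlockRelated.sum_sub_ite_sq (h : BlockRelated δ v z) (hn : 0 < n) (hδ : 0 ≤ δ) :
    ∑ j : Fin n, (v j - if (j : ℕ) = 0 then δ else 0) ^ 2 = (z - δ) ^ 2 := by
  rcases hδ.eq_or_lt with hδ0 | hδ_pos
  · subst hδ0
    simpa using h.sum_sq hn le_rfl
  · rw [Fin.sum_sub_ite_sq hn, h.sum_sq hn hδ, h.1 hδ_pos, if_pos rfl]
    ring

end Block

/- `Fin (min m0 1)` indexes the coordinate `y` of `P**`, which is present exactly when `m0 > 0`;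
`∑ j', w (Sum.inl j')` is `y`, or `0` when it is absent. -/
variable {m0 q : ℕ} {m : Fin q → ℕ}

def target (δ : Fin q → ℝ) : Fin m0 ⊕ ((i : Fin q) × Fin (m i)) → ℝ :=
  Sum.elim (fun _ => 0) (fun p => if (p.2 : ℕ) = 0 then δ p.1 else 0)

def obj (δ : Fin q → ℝ) (x : Fin m0 ⊕ ((i : Fin q) × Fin (m i)) → ℝ) : ℝ :=
  (x - target δ) ⬝ᵥ (x - target δ)

def feas (γ : Fin q → ℝ) (ε k : ℝ) : Set (Fin m0 ⊕ ((i : Fin q) × Fin (m i)) → ℝ) :=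
  {x | (∑ p : (i : Fin q) × Fin (m i), γ p.1 * x (Sum.inr p) ^ 2)
    + 2 * ε * (∑ j : Fin m0, if (j : ℕ) = 0 then x (Sum.inl j) else 0) = k}

def reducedObj (δ : Fin q → ℝ) (w : Fin (min m0 1) ⊕ Fin q → ℝ) : ℝ :=
  (w - Sum.elim (fun _ => 0) δ) ⬝ᵥ (w - Sum.elim (fun _ => 0) δ)

def reducedFeas (γ : Fin q → ℝ) (ε k : ℝ) : Set (Fin (min m0 1) ⊕ Fin q → ℝ) :=
  {w | w ⬝ᵥ (diagonal (Sum.elim (fun _ => 0) γ)).mulVec w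
    + 2 * (Sum.elim (fun _ => ε) (fun _ => 0) ⬝ᵥ w) = k}

def embed (w : Fin (min m0 1) ⊕ Fin q → ℝ) : Fin m0 ⊕ ((i : Fin q) × Fin (m i)) → ℝ :=
  Sum.elim (fun j => if (j : ℕ) = 0 then ∑ j', w (Sum.inl j') else 0)
    (fun p => if (p.2 : ℕ) = 0 then w (Sum.inr p.1) else 0)

noncomputable def reduce (x : Fin m0 ⊕ ((i : Fin q) × Fin (m i)) → ℝ) :
    Fin (min m0 1) ⊕ Fin q → ℝ :=
  Sum.elim (fun j => x (Sum.inl (Fin.castLE (min_le_left m0 1) j)))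
    (fun i => √(∑ jj, x (Sum.inr ⟨i, jj⟩) ^ 2))

def Related (δ : Fin q → ℝ) (x : Fin m0 ⊕ ((i : Fin q) × Fin (m i)) → ℝ)
    (w : Fin (min m0 1) ⊕ Fin q → ℝ) : Prop :=
  (∀ j : Fin m0, x (Sum.inl j) = if (j : ℕ) = 0 then ∑ j', w (Sum.inl j') else 0) ∧
    ∀ i, BlockRelated (δ i) (fun jj => x (Sum.inr ⟨i, jj⟩)) (w (Sum.inr i))

theorem obj_eq (δ : Fin q → ℝ) (x : Fin m0 ⊕ ((i : Fin q) × Fin (m i)) → ℝ) :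
    obj δ x = ∑ j, x (Sum.inl j) ^ 2
      + ∑ i, ∑ jj : Fin (m i), (x (Sum.inr ⟨i, jj⟩) - if (jj : ℕ) = 0 then δ i else 0) ^ 2 := by
  simp only [obj, dotProduct, Fintype.sum_sum_type, Fintype.sum_sigma, Pi.sub_apply, target,
    Sum.elim_inl, Sum.elim_inr, sub_zero, sq]

theorem reducedObj_eq (δ : Fin q → ℝ) (w : Fin (min m0 1) ⊕ Fin q → ℝ) :
    reducedObj δ w = ∑ j, w (Sum.inl j) ^ 2 + ∑ i, (w (Sum.inr i) - δ i) ^ 2 := by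
  simp only [reducedObj, dotProduct, Fintype.sum_sum_type, Pi.sub_apply, Sum.elim_inl,
    Sum.elim_inr, sub_zero, sq]

theorem obj_nonneg (δ : Fin q → ℝ) (x : Fin m0 ⊕ ((i : Fin q) × Fin (m i)) → ℝ) :
    0 ≤ obj δ x := by
  rw [obj_eq]
  positivity

theorem reducedObj_reduce (δ : Fin q → ℝ) (x : Fin m0 ⊕ ((i : Fin q) × Fin (m i)) → ℝ) :
    reducedObj δ (reduce x) = ∑ j : Fin m0, (if (j : ℕ) = 0 then x (Sum.inl j) ^ 2 else 0)
      + ∑ i, (√(∑ jj, x (Sum.inr ⟨i, jj⟩) ^ 2) - δ i) ^ 2 := by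
  rw [reducedObj_eq, Fin.sum_ite_val_eq_zero_eq_sum_castLE]
  rfl

theorem mem_feas {γ : Fin q → ℝ} {ε k : ℝ} {x : Fin m0 ⊕ ((i : Fin q) × Fin (m i)) → ℝ} :
    x ∈ feas γ ε k ↔ ∑ i, γ i * ∑ jj : Fin (m i), x (Sum.inr ⟨i, jj⟩) ^ 2
      + 2 * ε * (∑ j : Fin m0, if (j : ℕ) = 0 then x (Sum.inl j) else 0) = k := by
  simp only [feas, Set.mem_ofPred_eq, Fintype.sum_sigma, Finset.mul_sum]

theorem mem_reducedFeas {γ : Fin q → ℝ} {ε k : ℝ} {w : Fin (min m0 1) ⊕ Fin q → ℝ} :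
    w ∈ reducedFeas γ ε k ↔ ∑ i, γ i * w (Sum.inr i) ^ 2 + 2 * ε * ∑ j, w (Sum.inl j) = k := by
  simp only [reducedFeas, Set.mem_ofPred_eq, dotProduct, mulVec_diagonal, Fintype.sum_sum_type,
    Sum.elim_inl, Sum.elim_inr, zero_mul, mul_zero, zero_add, Finset.sum_const_zero, add_zero,
    Finset.mul_sum]
  refine Eq.congr_left (congrArg₂ _ ?_ ?_) <;> exact Finset.sum_congr rfl fun _ _ => by ring

variable {δ : Fin q → ℝ} {x : Fin m0 ⊕ ((i : Fin q) × Fin (m i)) → ℝ}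
  {w : Fin (min m0 1) ⊕ Fin q → ℝ}

theorem related_embed (hm : ∀ i, 0 < m i) (w : Fin (min m0 1) ⊕ Fin q → ℝ) :
    Related δ (embed (m := m) w) w :=
  ⟨fun _ => rfl, fun i => blockRelated_ite (hm i) (δ i) (w (Sum.inr i))⟩

theorem Related.obj_eq_reducedObj (h : Related δ x w) (hm : ∀ i, 0 < m i) (hδ : ∀ i, 0 ≤ δ i) :
    obj δ x = reducedObj δ w := by
  rw [obj_eq, reducedObj_eq]
  congr 1
  · have hsq : ∀ j, x (Sum.inl j) ^ 2
        = if (j : ℕ) = 0 then (∑ j', w (Sum.inl j')) ^ 2 else 0 := fun j => by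
      rw [h.1 j]; split_ifs <;> simp
    rw [Finset.sum_congr rfl fun j _ => hsq j]
    exact Fin.sum_ite_val_eq_zero_sum (· ^ 2) _
  · exact Finset.sum_congr rfl fun i _ => (h.2 i).sum_sub_ite_sq (hm i) (hδ i)

theorem Related.mem_feas_of_mem_reducedFeas {γ : Fin q → ℝ} {ε k : ℝ} (h : Related δ x w) (hm : ∀ i, 0 < m i)
    (hδ : ∀ i, 0 ≤ δ i) (hw : w ∈ reducedFeas γ ε k) : x ∈ feas γ ε k := by
  rw [mem_reducedFeas] at hw
  rw [mem_feas]
  have hinl : ∑ j : Fin m0, (if (j : ℕ) = 0 then x (Sum.inl j) else 0) = ∑ j', w (Sum.inl j') := by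
    refine (Finset.sum_congr rfl fun j _ => ?_).trans (Fin.sum_ite_val_eq_zero_sum id _)
    rw [h.1 j]; split_ifs <;> rfl
  rw [hinl, ← hw]
  congr 1
  exact Finset.sum_congr rfl fun i _ => by rw [(h.2 i).sum_sq (hm i) (hδ i)]

theorem reduce_mem_reducedFeas {γ : Fin q → ℝ} {ε k : ℝ} (hx : x ∈ feas γ ε k) :
    reduce x ∈ reducedFeas γ ε k := by
  rw [mem_feas] at hx
  rw [mem_reducedFeas, ← hx, Fin.sum_ite_val_eq_zero_eq_sum_castLE]
  congr 1
  exact Finset.sum_congr rfl fun i _ => by rw [reduce, Sum.elim_inr, Real.sq_sqrt (by positivity)]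

theorem reducedObj_reduce_le (hm : ∀ i, 0 < m i) (hδ : ∀ i, 0 ≤ δ i)
    (x : Fin m0 ⊕ ((i : Fin q) × Fin (m i)) → ℝ) : reducedObj δ (reduce x) ≤ obj δ x := by
  rw [reducedObj_reduce, obj_eq]
  exact add_le_add (Fin.sum_ite_val_eq_zero_sq_le _)
    (Finset.sum_le_sum fun i _ => Fin.sqrt_sum_sq_sub_sq_le (hm i) _ (hδ i))

theorem related_reduce_of_eq (hm : ∀ i, 0 < m i) (hδ : ∀ i, 0 ≤ δ i)
    (h : reducedObj δ (reduce x) = obj δ x) : Related δ x (reduce x) := by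
  rw [reducedObj_reduce, obj_eq, add_eq_add_iff_eq_and_eq
    (Fin.sum_ite_val_eq_zero_sq_le _)
    (Finset.sum_le_sum fun i _ => Fin.sqrt_sum_sq_sub_sq_le (hm i) _ (hδ i)),
    Finset.sum_eq_sum_iff_of_le fun i _ => Fin.sqrt_sum_sq_sub_sq_le (hm i) _ (hδ i)] at h
  obtain ⟨hinl, hinr⟩ := h
  refine ⟨fun j => ?_, fun i => blockRelated_sqrt_of_eq (hm i) (hinr i (Finset.mem_univ i))⟩
  have hsupp := Fin.eq_ite_of_sum_ite_val_eq_zero_sq_eq hinl j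
  have hy : ∑ j', reduce x (Sum.inl j') = ∑ j : Fin m0, if (j : ℕ) = 0 then x (Sum.inl j) else 0 :=
    (Fin.sum_ite_val_eq_zero_eq_sum_castLE (fun j => x (Sum.inl j))).symm
  rw [hy]
  split_ifs at hsupp ⊢ with hj
  · exact (Fin.sum_ite_val_eq_zero hj fun k => x (Sum.inl k)).symm
  · exact hsupp

end CanonicalForm

theorem stmt14_general {m0 q : ℕ} (m : Fin q → ℕ) (hm : ∀ i, 1 ≤ m i)
    (γ : Fin q → ℝ)
    (δ : Fin q → ℝ) (hδ : ∀ i, 0 ≤ δ i) (ε : ℝ) (kstar : ℝ) :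
    let tstar : Fin m0 ⊕ ((i : Fin q) × Fin (m i)) → ℝ :=
      Sum.elim (fun _ => (0 : ℝ))
        (fun p : (i : Fin q) × Fin (m i) => if (p.2 : ℕ) = 0 then δ p.1 else 0)
    let Ls : (Fin m0 ⊕ ((i : Fin q) × Fin (m i)) → ℝ) → ℝ :=
      fun x => (x - tstar) ⬝ᵥ (x - tstar)
    let Xs : Set (Fin m0 ⊕ ((i : Fin q) × Fin (m i)) → ℝ) :=
      {x | (∑ p : (i : Fin q) × Fin (m i), γ p.1 * (x (Sum.inr p)) ^ 2)
            + 2 * ε * (∑ j : Fin m0, if (j : ℕ) = 0 then x (Sum.inl j) else 0) = kstar}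
    let Δ : Matrix (Fin (min m0 1) ⊕ Fin q) (Fin (min m0 1) ⊕ Fin q) ℝ :=
      Matrix.diagonal (Sum.elim (fun _ => (0 : ℝ)) γ)
    let d : Fin (min m0 1) ⊕ Fin q → ℝ := Sum.elim (fun _ => ε) (fun _ => 0)
    let w0 : Fin (min m0 1) ⊕ Fin q → ℝ := Sum.elim (fun _ => (0 : ℝ)) δ
    let W : Set (Fin (min m0 1) ⊕ Fin q → ℝ) :=
      {w | w ⬝ᵥ Δ.mulVec w + 2 * (d ⬝ᵥ w) = kstar}
    let Lw : (Fin (min m0 1) ⊕ Fin q → ℝ) → ℝ := fun w => (w - w0) ⬝ᵥ (w - w0)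
    Xs.Nonempty → W.Nonempty →
      (∀ xh : Fin m0 ⊕ ((i : Fin q) × Fin (m i)) → ℝ,
        (xh ∈ Xs ∧ ∀ x ∈ Xs, Ls xh ≤ Ls x) ↔
        (∃ wh : Fin (min m0 1) ⊕ Fin q → ℝ,
          (wh ∈ W ∧ ∀ w ∈ W, Lw wh ≤ Lw w) ∧
          (∀ j : Fin m0, xh (Sum.inl j)
              = if (j : ℕ) = 0 then (∑ j' : Fin (min m0 1), wh (Sum.inl j')) else 0) ∧
          (∀ i : Fin q,
            (0 < δ i → ∀ jj : Fin (m i),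
              xh (Sum.inr ⟨i, jj⟩) = if (jj : ℕ) = 0 then wh (Sum.inr i) else 0) ∧
            (δ i = 0 →
              (∑ jj : Fin (m i), (xh (Sum.inr ⟨i, jj⟩)) ^ 2) = (wh (Sum.inr i)) ^ 2)))) ∧
      sInf (Ls '' Xs) = sInf (Lw '' W) := by
  intro tstar Ls Xs Δ d w0 W Lw hXs _
  open CanonicalForm in
  exact minimizer_iff_exists_related_and_sInf_image_eq (R := Related δ) embed reduce
    (related_embed hm) (fun _ _ h => h.mem_feas_of_mem_reducedFeas hm hδ)
    (fun _ _ h => h.obj_eq_reducedObj hm hδ)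
    (fun _ => reduce_mem_reducedFeas) (fun x _ => reducedObj_reduce_le hm hδ x)
    (fun _ _ => related_reduce_of_eq hm hδ) hXs
    ⟨0, by rintro _ ⟨x, -, rfl⟩; exact obj_nonneg δ x⟩

/-- Correspondence between the canonical form `P*` (coordinates indexed by
`Fin m₀ ⊕ Σ i : Fin q, Fin (m i)`) and its dimension-reduced canonical form `P**`
(coordinates indexed by `Fin (min m₀ 1) ⊕ Fin q`, so the scalar `y` variable is
present exactly when `m₀ > 0`): `x̂` is a global minimiser of `P*` iff there is a
global minimiser `ŵ` of `P**` with `x̂₀ = ŷ·u_{m₀}` and, for each `i`,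
`x̂ᵢ = ẑᵢ·u_{mᵢ}` when `δᵢ > 0` and `‖x̂ᵢ‖² = ẑᵢ²` when `δᵢ = 0`. In particular the
minimum values coincide. -/
theorem stmt14 {m0 q : ℕ} (hq : 0 < q) (m : Fin q → ℕ) (hm : ∀ i, 1 ≤ m i)
    (γ : Fin q → ℝ) (hanti : StrictAnti γ) (hne : ∀ i, γ i ≠ 0)
    (hpos : 0 < γ ⟨0, hq⟩)
    (δ : Fin q → ℝ) (hδ : ∀ i, 0 ≤ δ i) (ε : ℝ) (hε : 0 ≤ ε) (kstar : ℝ) :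
    let tstar : Fin m0 ⊕ ((i : Fin q) × Fin (m i)) → ℝ :=
      Sum.elim (fun _ => (0 : ℝ))
        (fun p : (i : Fin q) × Fin (m i) => if (p.2 : ℕ) = 0 then δ p.1 else 0)
    let Ls : (Fin m0 ⊕ ((i : Fin q) × Fin (m i)) → ℝ) → ℝ :=
      fun x => (x - tstar) ⬝ᵥ (x - tstar)
    let Xs : Set (Fin m0 ⊕ ((i : Fin q) × Fin (m i)) → ℝ) :=
      {x | (∑ p : (i : Fin q) × Fin (m i), γ p.1 * (x (Sum.inr p)) ^ 2)
            + 2 * ε * (∑ j : Fin m0, if (j : ℕ) = 0 then x (Sum.inl j) else 0) = kstar}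
    let Δ : Matrix (Fin (min m0 1) ⊕ Fin q) (Fin (min m0 1) ⊕ Fin q) ℝ :=
      Matrix.diagonal (Sum.elim (fun _ => (0 : ℝ)) γ)
    let d : Fin (min m0 1) ⊕ Fin q → ℝ := Sum.elim (fun _ => ε) (fun _ => 0)
    let w0 : Fin (min m0 1) ⊕ Fin q → ℝ := Sum.elim (fun _ => (0 : ℝ)) δ
    let W : Set (Fin (min m0 1) ⊕ Fin q → ℝ) :=
      {w | w ⬝ᵥ Δ.mulVec w + 2 * (d ⬝ᵥ w) = kstar}
    let Lw : (Fin (min m0 1) ⊕ Fin q → ℝ) → ℝ := fun w => (w - w0) ⬝ᵥ (w - w0)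
    Xs.Nonempty → W.Nonempty →
      (∀ xh : Fin m0 ⊕ ((i : Fin q) × Fin (m i)) → ℝ,
        (xh ∈ Xs ∧ ∀ x ∈ Xs, Ls xh ≤ Ls x) ↔
        (∃ wh : Fin (min m0 1) ⊕ Fin q → ℝ,
          (wh ∈ W ∧ ∀ w ∈ W, Lw wh ≤ Lw w) ∧
          (∀ j : Fin m0, xh (Sum.inl j)
              = if (j : ℕ) = 0 then (∑ j' : Fin (min m0 1), wh (Sum.inl j')) else 0) ∧
          (∀ i : Fin q,
            (0 < δ i → ∀ jj : Fin (m i),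
              xh (Sum.inr ⟨i, jj⟩) = if (jj : ℕ) = 0 then wh (Sum.inr i) else 0) ∧
            (δ i = 0 →
              (∑ jj : Fin (m i), (xh (Sum.inr ⟨i, jj⟩)) ^ 2) = (wh (Sum.inr i)) ^ 2)))) ∧
      sInf (Ls '' Xs) = sInf (Lw '' W) :=
  stmt14_general m hm γ δ hδ ε kstar
end

section
/- Let q ≥ 1, let γ₁ > ⋯ > γ_q be nonzero reals with γ₁ > 0, let δ₁, …, δ_q ≥ 0, ε ≥ 0 and k* ∈ ℝ, and define f(λ) := Σᵢ₌₁^q γᵢδᵢ²/(1 − λγᵢ)² + 2ε²λ − k* on the open interval Λ° := (−∞, 1/γ₁) if γ_q > 0 and Λ° := (1/γ_q, 1/γ₁) if γ_q < 0. If δ = 0 and ε = 0, then f is constantly −k* on Λ°. Otherwise f is continuous and strictly increasing on Λ°, and its supremum and infimum over Λ° are: sup f = f₁ := Σᵢ₌₂^q γᵢδᵢ²/(1 − γᵢ/γ₁)² + 2ε²/γ₁ − k* if δ₁ = 0, and sup f = +∞ if δ₁ > 0; if γ_q < 0, inf f = f_q := Σᵢ₌₁^{q−1} γᵢδᵢ²/(1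 − γᵢ/γ_q)² + 2ε²/γ_q − k* if δ_q = 0, and inf f = −∞ if δ_q > 0; if γ_q > 0, inf f = −k* if ε = 0 and inf f = −∞ if ε > 0. -/
/-!
On `Λ°` every `1 - λγᵢ` is positive, so `f' = Σ 2γᵢ²δᵢ²/(1 - λγᵢ)³ + 2ε²` is positive unless
`δ = 0` and `ε = 0`. Near the right end `1/γ₁` only the first term is singular: it tends to `+∞`
when `δ₁ > 0` and vanishes identically when `δ₁ = 0`, in which case `f` is continuous at `1/γ₁`
with value `f₁`; the left end `1/γ_q` for `γ_q < 0` is symmetric. When all `γᵢ > 0` the sum tends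
to `0` as `λ → -∞`, leaving the linear part `2ε²λ - k*`.
-/

open Filter Topology Set Finset

section OrderTopology

variable {α β : Type*} [TopologicalSpace β] [Preorder β] [OrderClosedTopology β]
  {f : α → β} {S : Set α} {L : Filter α} [L.NeBot] {M : β}

theorem isLUB_image_of_tendsto (hS : S ∈ L) (hub : ∀ x ∈ S, ∀ᶠ y in L, f x ≤ f y)
    (hlim : Tendsto f L (𝓝 M)) : IsLUB (f '' S) M := by
  refine ⟨?_, fun b hb => le_of_tendsto hlim (mem_of_superset hS fun y hy => hb ⟨y, hy, rfl⟩)⟩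
  rintro _ ⟨x, hx, rfl⟩
  exact ge_of_tendsto hlim (hub x hx)

theorem isGLB_image_of_tendsto (hS : S ∈ L) (hlb : ∀ x ∈ S, ∀ᶠ y in L, f y ≤ f x)
    (hlim : Tendsto f L (𝓝 M)) : IsGLB (f '' S) M :=
  isLUB_image_of_tendsto (β := βᵒᵈ) hS hlb hlim

end OrderTopology

theorem not_bddAbove_image_of_tendsto_atTop {α β : Type*} [Preorder β] [NoMaxOrder β]
    {f : α → β} {S : Set α} {L : Filter α} [L.NeBot] (hS : S ∈ L) (h : Tendsto f L atTop) :
    ¬BddAbove (f '' S) := by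
  rintro ⟨b, hb⟩
  obtain ⟨y, hy, hyS⟩ := ((h.eventually_gt_atTop b).and hS).exists
  exact hy.not_ge (hb (mem_image_of_mem f hyS))

theorem not_bddBelow_image_of_tendsto_atBot {α β : Type*} [Preorder β] [NoMinOrder β]
    {f : α → β} {S : Set α} {L : Filter α} [L.NeBot] (hS : S ∈ L) (h : Tendsto f L atBot) :
    ¬BddBelow (f '' S) :=
  not_bddAbove_image_of_tendsto_atTop (β := βᵒᵈ) hS h

theorem tendsto_inv_one_sub_mul_sq_nhdsNE {b : ℝ} (hb : b ≠ 0) :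
    Tendsto (fun x => ((1 - x * b) ^ 2)⁻¹) (𝓝[≠] b⁻¹) atTop := by
  refine (tendsto_inv_nhdsGT_zero (𝕜 := ℝ)).comp (tendsto_nhdsWithin_iff.2 ⟨?_, ?_⟩)
  · have : Continuous fun x : ℝ => (1 - x * b) ^ 2 := by fun_prop
    simpa [inv_mul_cancel₀ hb] using this.continuousWithinAt (s := {b⁻¹}ᶜ) (x := b⁻¹) |>.tendsto
  · filter_upwards [self_mem_nhdsWithin] with x hx
    show 0 < (1 - x * b) ^ 2
    refine sq_pos_of_ne_zero fun h => hx ?_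
    exact eq_inv_of_mul_eq_one_left (by linarith)

section SecularFunction

variable {ι : Type*} (γ δ : ι → ℝ) (ε k : ℝ)

def secularDomain : Set ℝ := {lam | ∀ i, 0 < 1 - lam * γ i}

theorem convex_secularDomain : Convex ℝ (secularDomain γ) := by
  refine convex_iff_ordConnected.2 ⟨fun x hx y hy z hz i => ?_⟩
  rcases le_total 0 (γ i) with h | h
  · nlinarith [hy i, mul_le_mul_of_nonneg_right hz.2 h]
  · nlinarith [hx i, mul_le_mul_of_nonpos_right hz.1 h]

variable [Fintype ι]

noncomputable def secularFn (lam : ℝ) : ℝ :=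
  (∑ i, γ i * δ i ^ 2 / (1 - lam * γ i) ^ 2) + 2 * ε ^ 2 * lam - k

variable {γ δ ε k}

theorem continuousAt_secularFn {lam : ℝ} (h : ∀ i, δ i ≠ 0 → 1 - lam * γ i ≠ 0) :
    ContinuousAt (secularFn γ δ ε k) lam := by
  have hterm : ∀ i, ContinuousAt (fun x => γ i * δ i ^ 2 / (1 - x * γ i) ^ 2) lam := fun i => by
    by_cases hδi : δ i = 0
    · simpa [hδi] using continuousAt_const
    · exact continuousAt_const.div (by fun_prop) (pow_ne_zero 2 (h i hδi))
  unfold secularFn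
  fun_prop

theorem continuousOn_secularFn : ContinuousOn (secularFn γ δ ε k) (secularDomain γ) :=
  fun _ hlam => (continuousAt_secularFn fun i _ => (hlam i).ne').continuousWithinAt

theorem hasDerivAt_secularFn {lam : ℝ} (h : ∀ i, 1 - lam * γ i ≠ 0) :
    HasDerivAt (secularFn γ δ ε k)
      ((∑ i, 2 * γ i ^ 2 * δ i ^ 2 / (1 - lam * γ i) ^ 3) + 2 * ε ^ 2) lam := by
  have hterm : ∀ i, HasDerivAt (fun x => γ i * δ i ^ 2 / (1 - x * γ i) ^ 2)
      (2 * γ i ^ 2 * δ i ^ 2 / (1 - lam * γ i) ^ 3) lam := fun i => by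
    have hsq : HasDerivAt (fun x : ℝ => (1 - x * γ i) ^ 2)
        (2 * (1 - lam * γ i) ^ 1 * -γ i) lam := by
      have hlin : HasDerivAt (fun x : ℝ => 1 - x * γ i) (-γ i) lam := by
        simpa using ((hasDerivAt_id lam).mul_const (γ i)).const_sub 1
      exact hlin.pow 2
    refine ((hasDerivAt_const lam (γ i * δ i ^ 2)).fun_div hsq (pow_ne_zero 2 (h i))).congr_deriv ?_
    field_simp [h i]
    ring
  have hsum := HasDerivAt.fun_sum (u := Finset.univ) fun i _ => hterm i
  unfold secularFn
  simpa using (hsum.add ((hasDerivAt_id lam).const_mul (2 * ε ^ 2))).sub_const k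

theorem secularFn_deriv_pos (hγ : ∀ i, γ i ≠ 0) (hδε : δ ≠ 0 ∨ ε ≠ 0) {lam : ℝ}
    (hlam : lam ∈ secularDomain γ) :
    0 < (∑ i, 2 * γ i ^ 2 * δ i ^ 2 / (1 - lam * γ i) ^ 3) + 2 * ε ^ 2 := by
  have hterm : ∀ i, 0 ≤ 2 * γ i ^ 2 * δ i ^ 2 / (1 - lam * γ i) ^ 3 := fun i =>
    div_nonneg (by positivity) (pow_pos (hlam i) 3).le
  rcases hδε with hδ | hε
  · obtain ⟨i, hi⟩ := Function.ne_iff.1 hδ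
    have hγi := hγ i
    have hpos : 0 < 2 * γ i ^ 2 * δ i ^ 2 / (1 - lam * γ i) ^ 3 :=
      div_pos (by simp only [Pi.zero_apply] at hi; positivity) (pow_pos (hlam i) 3)
    linarith [single_le_sum (fun j _ => hterm j) (mem_univ i), sq_nonneg ε]
  · have : 0 < ε ^ 2 := by positivity
    linarith [sum_nonneg fun j (_ : j ∈ Finset.univ) => hterm j]

theorem strictMonoOn_secularFn (hγ : ∀ i, γ i ≠ 0) (hδε : δ ≠ 0 ∨ ε ≠ 0) :
    StrictMonoOn (secularFn γ δ ε k) (secularDomain γ) :=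
  strictMonoOn_of_deriv_pos (convex_secularDomain γ) continuousOn_secularFn fun lam hlam => by
    have hlam := interior_subset hlam
    rw [(hasDerivAt_secularFn fun i => (hlam i).ne').deriv]
    exact secularFn_deriv_pos hγ hδε hlam

/-- The `j`-th term is `0 / 0 = 0` at the pole `(γ j)⁻¹`. -/
theorem secularFn_inv_of_eq_zero [DecidableEq ι] {j : ι} (hj : δ j = 0) :
    secularFn γ δ ε k (γ j)⁻¹ =
      (∑ i ∈ univ.erase j, γ i * δ i ^ 2 / (1 - γ i / γ j) ^ 2) + 2 * ε ^ 2 / γ j - k := by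
  rw [secularFn, ← sum_erase univ (a := j) (by simp [hj])]
  congr 2
  exact sum_congr rfl fun i _ => by rw [div_eq_inv_mul (γ i)]

theorem secularFn_eq_add_update [DecidableEq ι] (j : ι) (lam : ℝ) :
    secularFn γ δ ε k lam =
      γ j * δ j ^ 2 / (1 - lam * γ j) ^ 2 + secularFn γ (Function.update δ j 0) ε k lam := by
  have hrest : ∑ i ∈ univ.erase j, γ i * Function.update δ j 0 i ^ 2 / (1 - lam * γ i) ^ 2 =
      ∑ i ∈ univ.erase j, γ i * δ i ^ 2 / (1 - lam * γ i) ^ 2 :=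
    sum_congr rfl fun i hi => by rw [Function.update_of_ne (ne_of_mem_erase hi)]
  rw [secularFn, secularFn, ← add_sum_erase _ _ (mem_univ j), ← add_sum_erase _ _ (mem_univ j),
    Function.update_self, hrest]
  ring

theorem continuousAt_secularFn_inv {j : ι} (hsimple : ∀ i ≠ j, γ i ≠ γ j) (hγj : γ j ≠ 0)
    (hj : δ j = 0) : ContinuousAt (secularFn γ δ ε k) (γ j)⁻¹ :=
  continuousAt_secularFn fun i hi => by
    have hij : i ≠ j := by rintro rfl; exact hi hj
    rw [sub_ne_zero, ne_comm, Ne, inv_mul_eq_one₀ hγj]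
    exact (hsimple i hij).symm

theorem tendsto_secularFn_nhdsNE_atTop [DecidableEq ι] {j : ι} (hsimple : ∀ i ≠ j, γ i ≠ γ j)
    (hγj : 0 < γ j) (hj : δ j ≠ 0) :
    Tendsto (secularFn γ δ ε k) (𝓝[≠] (γ j)⁻¹) atTop := by
  have hpole := (tendsto_inv_one_sub_mul_sq_nhdsNE hγj.ne').const_mul_atTop
    (show 0 < γ j * δ j ^ 2 by positivity)
  have hrest := continuousAt_secularFn_inv (δ := Function.update δ j 0) (ε := ε) (k := k)
    hsimple hγj.ne' (Function.update_self ..)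
  refine (hpole.atTop_add (hrest.tendsto.mono_left nhdsWithin_le_nhds)).congr fun lam => ?_
  rw [secularFn_eq_add_update (δ := δ) j lam, div_eq_mul_inv]

theorem tendsto_secularFn_nhdsNE_atBot [DecidableEq ι] {j : ι} (hsimple : ∀ i ≠ j, γ i ≠ γ j)
    (hγj : γ j < 0) (hj : δ j ≠ 0) :
    Tendsto (secularFn γ δ ε k) (𝓝[≠] (γ j)⁻¹) atBot := by
  have hpole := (tendsto_inv_one_sub_mul_sq_nhdsNE hγj.ne).const_mul_atTop_of_neg
    (show γ j * δ j ^ 2 < 0 from mul_neg_of_neg_of_pos hγj (by positivity))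
  have hrest := continuousAt_secularFn_inv (δ := Function.update δ j 0) (ε := ε) (k := k)
    hsimple hγj.ne (Function.update_self ..)
  refine (hpole.atBot_add (hrest.tendsto.mono_left nhdsWithin_le_nhds)).congr fun lam => ?_
  rw [secularFn_eq_add_update (δ := δ) j lam, div_eq_mul_inv]

theorem secularFn_upper_end [DecidableEq ι] {j : ι} (hsimple : ∀ i ≠ j, γ i ≠ γ j)
    (hγj : 0 < γ j) {S : Set ℝ} (hS : S ⊆ Iio (γ j)⁻¹) (hSj : S ∈ 𝓝[<] (γ j)⁻¹)
    (hmono : MonotoneOn (secularFn γ δ ε k) S) :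
    (δ j = 0 → sSup (secularFn γ δ ε k '' S) =
      (∑ i ∈ univ.erase j, γ i * δ i ^ 2 / (1 - γ i / γ j) ^ 2) + 2 * ε ^ 2 / γ j - k) ∧
    (0 < δ j → ¬BddAbove (secularFn γ δ ε k '' S)) := by
  refine ⟨fun hj => ?_, fun hj => ?_⟩
  · have hub : ∀ x ∈ S, ∀ᶠ y in 𝓝[<] (γ j)⁻¹, secularFn γ δ ε k x ≤ secularFn γ δ ε k y :=
      fun x hx => by
        filter_upwards [hSj, Ioo_mem_nhdsLT (hS hx)] with y hy hxy using hmono hx hy hxy.1.le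
    have hlim := (continuousAt_secularFn_inv (ε := ε) (k := k) hsimple hγj.ne' hj).tendsto
    rw [← secularFn_inv_of_eq_zero hj]
    exact (isLUB_image_of_tendsto hSj hub (hlim.mono_left nhdsWithin_le_nhds)).csSup_eq
      ((Filter.nonempty_of_mem hSj).image _)
  · exact not_bddAbove_image_of_tendsto_atTop hSj
      ((tendsto_secularFn_nhdsNE_atTop hsimple hγj hj.ne').mono_left
        (nhdsLT_le_nhdsNE _))

theorem secularFn_lower_end [DecidableEq ι] {j : ι} (hsimple : ∀ i ≠ j, γ i ≠ γ j)
    (hγj : γ j < 0) {S : Set ℝ} (hS : S ⊆ Ioi (γ j)⁻¹) (hSj : S ∈ 𝓝[>] (γ j)⁻¹)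
    (hmono : MonotoneOn (secularFn γ δ ε k) S) :
    (δ j = 0 → sInf (secularFn γ δ ε k '' S) =
      (∑ i ∈ univ.erase j, γ i * δ i ^ 2 / (1 - γ i / γ j) ^ 2) + 2 * ε ^ 2 / γ j - k) ∧
    (0 < δ j → ¬BddBelow (secularFn γ δ ε k '' S)) := by
  refine ⟨fun hj => ?_, fun hj => ?_⟩
  · have hlb : ∀ x ∈ S, ∀ᶠ y in 𝓝[>] (γ j)⁻¹, secularFn γ δ ε k y ≤ secularFn γ δ ε k x :=
      fun x hx => by
        filter_upwards [hSj, Ioo_mem_nhdsGT (hS hx)] with y hy hxy using hmono hy hx hxy.2.le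
    have hlim := (continuousAt_secularFn_inv (ε := ε) (k := k) hsimple hγj.ne hj).tendsto
    rw [← secularFn_inv_of_eq_zero hj]
    exact (isGLB_image_of_tendsto hSj hlb (hlim.mono_left nhdsWithin_le_nhds)).csInf_eq
      ((Filter.nonempty_of_mem hSj).image _)
  · exact not_bddBelow_image_of_tendsto_atBot hSj
      ((tendsto_secularFn_nhdsNE_atBot hsimple hγj hj.ne').mono_left
        (nhdsGT_le_nhdsNE _))

theorem tendsto_sum_secularTerms_atBot (hγ : ∀ i, 0 < γ i) :
    Tendsto (fun lam => ∑ i, γ i * δ i ^ 2 / (1 - lam * γ i) ^ 2) atBot (𝓝 0) := by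
  rw [← sum_const_zero (s := (univ : Finset ι))]
  refine tendsto_finsetSum _ fun i _ => tendsto_const_nhds.div_atTop ?_
  have hlin : Tendsto (fun lam : ℝ => 1 - lam * γ i) atBot atTop := by
    simpa [sub_eq_add_neg] using tendsto_atTop_add_const_left atBot 1
      (tendsto_neg_atBot_atTop.comp (tendsto_id.atBot_mul_const (hγ i)))
  exact (tendsto_pow_atTop two_ne_zero).comp hlin

theorem secularFn_lower_end_of_pos (hγ : ∀ i, 0 < γ i) {c : ℝ}
    (hmono : MonotoneOn (secularFn γ δ ε k) (Iio c)) :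
    (ε = 0 → sInf (secularFn γ δ ε k '' Iio c) = -k) ∧
    (0 < ε → ¬BddBelow (secularFn γ δ ε k '' Iio c)) := by
  have hsum := tendsto_sum_secularTerms_atBot (δ := δ) hγ
  refine ⟨?_, fun hε => ?_⟩
  · rintro rfl
    have hlim : Tendsto (secularFn γ δ 0 k) atBot (𝓝 (0 - k)) :=
      (hsum.sub_const k).congr fun lam => by simp [secularFn]
    rw [zero_sub] at hlim
    have hlb : ∀ x ∈ Iio c, ∀ᶠ y in atBot, secularFn γ δ 0 k y ≤ secularFn γ δ 0 k x :=
      fun x hx => by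
        filter_upwards [Iio_mem_atBot x] with y hy using hmono (lt_trans hy hx : y < c) hx hy.le
    exact (isGLB_image_of_tendsto (Iio_mem_atBot c) hlb hlim).csInf_eq (nonempty_Iio.image _)
  · have hlin : Tendsto (fun lam : ℝ => 2 * ε ^ 2 * lam) atBot atBot :=
      tendsto_id.const_mul_atBot (by positivity)
    refine not_bddBelow_image_of_tendsto_atBot (Iio_mem_atBot c) ?_
    exact (tendsto_atBot_add_const_right _ (-k) (hsum.add_atBot hlin)).congr fun lam => by
      rw [secularFn, sub_eq_add_neg]

end SecularFunction

def admissibleInterior (γmin γmax : ℝ) : Set ℝ :=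
  if 0 < γmin then Iio γmax⁻¹ else Ioo γmin⁻¹ γmax⁻¹

theorem admissibleInterior_subset_Iio {γmin γmax : ℝ} :
    admissibleInterior γmin γmax ⊆ Iio γmax⁻¹ := by
  unfold admissibleInterior
  split_ifs
  exacts [subset_rfl, Ioo_subset_Iio_self]

theorem admissibleInterior_mem_nhdsLT {γmin γmax : ℝ} (hmax : 0 < γmax) :
    admissibleInterior γmin γmax ∈ 𝓝[<] γmax⁻¹ := by
  unfold admissibleInterior
  split_ifs with hmin
  · exact self_mem_nhdsWithin
  · exact Ioo_mem_nhdsLT ((inv_nonpos.2 (not_lt.1 hmin)).trans_lt (inv_pos.2 hmax))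

theorem admissibleInterior_subset_secularDomain {ι : Type*} {γ : ι → ℝ} {imin imax : ι}
    (hmin : ∀ i, γ imin ≤ γ i) (hmax : ∀ i, γ i ≤ γ imax) (hpos : 0 < γ imax) :
    admissibleInterior (γ imin) (γ imax) ⊆ secularDomain γ := by
  intro lam hlam
  have hlt_max : lam * γ imax < 1 := by
    have := admissibleInterior_subset_Iio hlam
    rwa [Set.mem_Iio, ← one_div, lt_div_iff₀ hpos] at this
  have hlt_min : lam < 0 → lam * γ imin < 1 := fun hlam0 => by
    unfold admissibleInterior at hlam
    split_ifs at hlam with hγmin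
    · nlinarith
    · rcases (not_lt.1 hγmin).lt_or_eq with hneg | hzero
      · have := mul_lt_mul_of_neg_right hlam.1 hneg
        rwa [inv_mul_cancel₀ hneg.ne] at this
      · simp [hzero]
  intro i
  rcases le_or_gt 0 lam with h | h
  · nlinarith [mul_le_mul_of_nonneg_left (hmax i) h]
  · nlinarith [mul_le_mul_of_nonpos_left (hmin i) h.le, hlt_min h]

theorem stmt16_general {q : ℕ} (hq : 0 < q) (γ : Fin q → ℝ) (hanti : StrictAnti γ)
    (hne : ∀ i, γ i ≠ 0) (hpos : 0 < γ ⟨0, hq⟩)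
    (δ : Fin q → ℝ) (ε : ℝ) (kstar : ℝ) :
    let i0 : Fin q := ⟨0, hq⟩
    let iq : Fin q := ⟨q - 1, Nat.sub_lt hq one_pos⟩
    let f : ℝ → ℝ := fun lam =>
      (∑ i, γ i * δ i ^ 2 / (1 - lam * γ i) ^ 2) + 2 * ε ^ 2 * lam - kstar
    let Λ : Set ℝ := if 0 < γ iq then Set.Iio (γ i0)⁻¹ else Set.Ioo (γ iq)⁻¹ (γ i0)⁻¹
    let f1 : ℝ := (∑ i ∈ Finset.univ.erase i0, γ i * δ i ^ 2 / (1 - γ i / γ i0) ^ 2)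
      + 2 * ε ^ 2 / γ i0 - kstar
    let fqq : ℝ := (∑ i ∈ Finset.univ.erase iq, γ i * δ i ^ 2 / (1 - γ i / γ iq) ^ 2)
      + 2 * ε ^ 2 / γ iq - kstar
    ((δ = 0 ∧ ε = 0) → ∀ lam ∈ Λ, f lam = -kstar) ∧
    ((δ ≠ 0 ∨ ε ≠ 0) →
      ContinuousOn f Λ ∧ StrictMonoOn f Λ ∧
      (δ i0 = 0 → sSup (f '' Λ) = f1) ∧
      (0 < δ i0 → ¬ BddAbove (f '' Λ)) ∧
      (γ iq < 0 →
        (δ iq = 0 → sInf (f '' Λ) = fqq) ∧ (0 < δ iq → ¬ BddBelow (f '' Λ))) ∧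
      (0 < γ iq →
        (ε = 0 → sInf (f '' Λ) = -kstar) ∧ (0 < ε → ¬ BddBelow (f '' Λ)))) := by
  intro i0 iq f Λ f1 fqq
  have hmax : ∀ i, γ i ≤ γ i0 := fun i => hanti.antitone (Fin.le_def.2 (Nat.zero_le _))
  have hmin : ∀ i, γ iq ≤ γ i := fun i => hanti.antitone (Fin.le_def.2 (Nat.le_pred_of_lt i.isLt))
  have hsimple : ∀ j, ∀ i ≠ j, γ i ≠ γ j := fun _ _ hij => hanti.injective.ne hij
  have hΛ : Λ = admissibleInterior (γ iq) (γ i0) := rfl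
  refine ⟨fun ⟨hδ0, hε0⟩ lam _ => by simp [f, hδ0, hε0], fun hδε => ?_⟩
  have hdom := admissibleInterior_subset_secularDomain hmin hmax hpos
  have hmono : StrictMonoOn f Λ := (strictMonoOn_secularFn hne hδε).mono hdom
  obtain ⟨hsup, hunbdd⟩ := secularFn_upper_end (hsimple i0) hpos admissibleInterior_subset_Iio
    (admissibleInterior_mem_nhdsLT hpos) hmono.monotoneOn
  refine ⟨continuousOn_secularFn.mono hdom, hmono, hsup, hunbdd, fun hneg => ?_, fun hqpos => ?_⟩
  · rw [hΛ, admissibleInterior, if_neg hneg.not_gt] at hmono ⊢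
    exact secularFn_lower_end (hsimple iq) hneg (fun _ hx => hx.1)
      (Ioo_mem_nhdsGT ((inv_lt_zero.2 hneg).trans (inv_pos.2 hpos))) hmono.monotoneOn
  · rw [hΛ, admissibleInterior, if_pos hqpos] at hmono ⊢
    exact secularFn_lower_end_of_pos (fun i => hqpos.trans_le (hmin i)) hmono.monotoneOn

/-- Key properties of `f(λ) = Σᵢ γᵢδᵢ²/(1 − λγᵢ)² + 2ε²λ − k*` on the interior `Λ°`
of the admissible region: if `δ = 0` and `ε = 0` then `f ≡ −k*`; otherwise `f` is
continuous and strictly increasing on `Λ°`, its supremum over `Λ°` is `f₁` when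
`δ₁ = 0` and `+∞` (unbounded above) when `δ₁ > 0`, and its infimum is `f_q` / `−∞`
according as `δ_q = 0` / `δ_q > 0` when `γ_q < 0`, and `−k*` / `−∞` according as
`ε = 0` / `ε > 0` when `γ_q > 0`. -/
theorem stmt16 {q : ℕ} (hq : 0 < q) (γ : Fin q → ℝ) (hanti : StrictAnti γ)
    (hne : ∀ i, γ i ≠ 0) (hpos : 0 < γ ⟨0, hq⟩)
    (δ : Fin q → ℝ) (hδ : ∀ i, 0 ≤ δ i) (ε : ℝ) (hε : 0 ≤ ε) (kstar : ℝ) :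
    let i0 : Fin q := ⟨0, hq⟩
    let iq : Fin q := ⟨q - 1, Nat.sub_lt hq one_pos⟩
    let f : ℝ → ℝ := fun lam =>
      (∑ i, γ i * δ i ^ 2 / (1 - lam * γ i) ^ 2) + 2 * ε ^ 2 * lam - kstar
    let Λ : Set ℝ := if 0 < γ iq then Set.Iio (γ i0)⁻¹ else Set.Ioo (γ iq)⁻¹ (γ i0)⁻¹
    let f1 : ℝ := (∑ i ∈ Finset.univ.erase i0, γ i * δ i ^ 2 / (1 - γ i / γ i0) ^ 2)
      + 2 * ε ^ 2 / γ i0 - kstar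
    let fqq : ℝ := (∑ i ∈ Finset.univ.erase iq, γ i * δ i ^ 2 / (1 - γ i / γ iq) ^ 2)
      + 2 * ε ^ 2 / γ iq - kstar
    ((δ = 0 ∧ ε = 0) → ∀ lam ∈ Λ, f lam = -kstar) ∧
    ((δ ≠ 0 ∨ ε ≠ 0) →
      ContinuousOn f Λ ∧ StrictMonoOn f Λ ∧
      (δ i0 = 0 → sSup (f '' Λ) = f1) ∧
      (0 < δ i0 → ¬ BddAbove (f '' Λ)) ∧
      (γ iq < 0 →
        (δ iq = 0 → sInf (f '' Λ) = fqq) ∧ (0 < δ iq → ¬ BddBelow (f '' Λ))) ∧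
      (0 < γ iq →
        (ε = 0 → sInf (f '' Λ) = -kstar) ∧ (0 < ε → ¬ BddBelow (f '' Λ)))) :=
  stmt16_general hq γ hanti hne hpos δ ε kstar
end

section
/- Let q ≥ 1, let γ₁ > ⋯ > γ_q be nonzero reals with γ₁ > 0, let δ = (δ₁, …, δ_q) with δᵢ ≥ 0, ε ≥ 0, k* ∈ ℝ, and form the regular dimension-reduced data: Δ = diag(γ₁, …, γ_q), d = 0, w₀ = δ when ε = 0, or Δ = diag(0, γ₁, …, γ_q), d = ε·e₁, w₀ = (0, δ) when ε > 0. Let W := {w : wᵀΔw + 2dᵀw = k*} be nonempty, Λ° := (−∞, 1/γ₁) if γ_q > 0 and (1/γ_q, 1/γ₁) if γ_q < 0, w(λ) := (I − λΔ)⁻¹(w₀ + λd) and f(λ) := Q*(w(λ)) for λ ∈ Λ°. Then: (a) if inf_{Λ°} f < 0 < sup_{Λ°} f, the equation f(λ) = 0 has a unique solution λ̂ ∈ Λ°, and w(λ̂) is the unique global minimiser of ‖w − w₀‖² over W; (b) if inf_{Λ°} f = 0 = sup_{Λ°} f, then f(λ) = 0 for every λ ∈ Λ° and the zero vector is the unique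 global minimiser of ‖w − w₀‖² over W; (c) in all other cases, f(λ) = 0 has no solution in Λ° and no feasible point satisfies the normal equations for any λ ∈ Λ°. -/
open Matrix

lemma auxTermLe (g dd a b : ℝ) (hab : a ≤ b) (ha : 0 < 1 - a*g) (hb : 0 < 1 - b*g) :
    g * (dd/(1-a*g))^2 ≤ g * (dd/(1-b*g))^2 := by
  rw [div_pow, div_pow, ← mul_div_assoc, ← mul_div_assoc,
    div_le_div_iff₀ (by positivity) (by positivity)]
  nlinarith [mul_nonneg (mul_nonneg (mul_nonneg (sq_nonneg dd) (sq_nonneg g))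
    (sub_nonneg.2 hab)) (by linarith : (0:ℝ) ≤ (1-a*g)+(1-b*g))]

lemma auxTermLt (g dd a b : ℝ) (hg : g ≠ 0) (hdd : dd ≠ 0) (hab : a < b)
    (ha : 0 < 1 - a*g) (hb : 0 < 1 - b*g) :
    g * (dd/(1-a*g))^2 < g * (dd/(1-b*g))^2 := by
  rw [div_pow, div_pow, ← mul_div_assoc, ← mul_div_assoc,
    div_lt_div_iff₀ (by positivity) (by positivity)]
  have hd2 : (0:ℝ) < dd^2 := lt_of_le_of_ne (sq_nonneg dd) (Ne.symm (pow_ne_zero 2 hdd))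
  have hg2 : (0:ℝ) < g^2 := lt_of_le_of_ne (sq_nonneg g) (Ne.symm (pow_ne_zero 2 hg))
  nlinarith [mul_pos (mul_pos (mul_pos hd2 hg2) (sub_pos.2 hab))
    (by linarith : (0:ℝ) < (1-a*g)+(1-b*g))]

/-- Interior (Case A) resolution for a regular dimension-reduced canonical form.
Coordinates are indexed by `Fin m' ⊕ Fin q`, where `m' = 0` iff `ε = 0` (so the
scalar `y` variable is present exactly when `ε > 0`); `Δ = diag(0, γ)`, `d = ε·e₁`,
`w₀ = (0, δ)` (these reduce to `Δ = diag γ`, `d = 0`, `w₀ = δ` when `ε = 0`).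
With `w(λ) = (I − λΔ)⁻¹(w₀ + λd)` and `f(λ) = Q*(w(λ))` on `Λ°`:
(a) if `inf f < 0 < sup f` then `f` has a unique zero `λ̂` in `Λ°` and `w(λ̂)` is the
unique global minimiser; (b) if `inf f = 0 = sup f` then `f ≡ 0` on `Λ°` and `0` is
the unique global minimiser; (c) otherwise `f` has no zero in `Λ°` and no feasible
point satisfies the normal equations for any `λ ∈ Λ°`. -/
theorem stmt17 {q : ℕ} (hq : 0 < q) (γ : Fin q → ℝ) (hanti : StrictAnti γ)
    (hne : ∀ i, γ i ≠ 0) (hpos : 0 < γ ⟨0, hq⟩)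
    (δ : Fin q → ℝ) (hδ : ∀ i, 0 ≤ δ i) (ε : ℝ) (hε : 0 ≤ ε) (kstar : ℝ)
    (m' : ℕ) (hm'le : m' ≤ 1) (hm' : ε = 0 ↔ m' = 0) :
    let i0 : Fin q := ⟨0, hq⟩
    let iq : Fin q := ⟨q - 1, Nat.sub_lt hq one_pos⟩
    let Δ : Matrix (Fin m' ⊕ Fin q) (Fin m' ⊕ Fin q) ℝ :=
      Matrix.diagonal (Sum.elim (fun _ => (0 : ℝ)) γ)
    let d : Fin m' ⊕ Fin q → ℝ := Sum.elim (fun _ => ε) (fun _ => 0)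
    let w0 : Fin m' ⊕ Fin q → ℝ := Sum.elim (fun _ => (0 : ℝ)) δ
    let Qs : (Fin m' ⊕ Fin q → ℝ) → ℝ := fun w => w ⬝ᵥ Δ.mulVec w + 2 * (d ⬝ᵥ w) - kstar
    let W : Set (Fin m' ⊕ Fin q → ℝ) := {w | Qs w = 0}
    let Λ : Set ℝ := if 0 < γ iq then Set.Iio (γ i0)⁻¹ else Set.Ioo (γ iq)⁻¹ (γ i0)⁻¹
    let wfun : ℝ → (Fin m' ⊕ Fin q → ℝ) := fun lam =>
      ((1 : Matrix (Fin m' ⊕ Fin q) (Fin m' ⊕ Fin q) ℝ) - lam • Δ)⁻¹.mulVec (w0 + lam • d)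
    let f : ℝ → ℝ := fun lam => Qs (wfun lam)
    let L : (Fin m' ⊕ Fin q → ℝ) → ℝ := fun w => (w - w0) ⬝ᵥ (w - w0)
    W.Nonempty →
      ((((∃ lam ∈ Λ, f lam < 0) ∧ (∃ lam ∈ Λ, 0 < f lam)) →
          ∃ lamh ∈ Λ, f lamh = 0 ∧ (∀ lam ∈ Λ, f lam = 0 → lam = lamh) ∧
            {w ∈ W | ∀ w' ∈ W, L w ≤ L w'} = {wfun lamh}) ∧
       ((IsGLB (f '' Λ) 0 ∧ IsLUB (f '' Λ) 0) →
          (∀ lam ∈ Λ, f lam = 0) ∧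
          {w ∈ W | ∀ w' ∈ W, L w ≤ L w'} = {0}) ∧
       ((¬ ((∃ lam ∈ Λ, f lam < 0) ∧ (∃ lam ∈ Λ, 0 < f lam)) ∧
           ¬ (IsGLB (f '' Λ) 0 ∧ IsLUB (f '' Λ) 0)) →
          (∀ lam ∈ Λ, f lam ≠ 0) ∧
          (∀ lam ∈ Λ, ∀ w ∈ W,
            ¬ (((1 : Matrix (Fin m' ⊕ Fin q) (Fin m' ⊕ Fin q) ℝ) - lam • Δ).mulVec w
                = w0 + lam • d)))) := by
  intro i0 iq Δ d w0 Qs W Λ wfun f L hWne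
  -- rfl equations for the local lets
  have hΔdef : Δ = Matrix.diagonal (Sum.elim (fun _ => (0 : ℝ)) γ) := rfl
  have hddef : d = Sum.elim (fun _ => ε) (fun _ => 0) := rfl
  have hw0def : w0 = Sum.elim (fun _ => (0 : ℝ)) δ := rfl
  have hQsdef : ∀ w, Qs w = w ⬝ᵥ Δ.mulVec w + 2 * (d ⬝ᵥ w) - kstar := fun _ => rfl
  have hWdef : ∀ w, w ∈ W ↔ Qs w = 0 := fun _ => Iff.rfl
  have hΛdef : Λ = if 0 < γ iq then Set.Iio (γ i0)⁻¹ else Set.Ioo (γ iq)⁻¹ (γ i0)⁻¹ := rfl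
  have hfdef : ∀ lam, f lam = Qs (wfun lam) := fun _ => rfl
  have hLdef : ∀ w, L w = (w - w0) ⬝ᵥ (w - w0) := fun _ => rfl
  -- basic γ facts
  have hγ0 : ∀ i, γ i ≤ γ i0 := fun i =>
    hanti.antitone (by rw [Fin.le_def]; exact Nat.zero_le _)
  have hγq : ∀ i, γ iq ≤ γ i := fun i =>
    hanti.antitone (by rw [Fin.le_def]; exact Nat.le_pred_of_lt i.isLt)
  have hγ0pos : 0 < γ i0 := hpos
  -- positivity of 1 - λγᵢ on Λ
  have hupos : ∀ lam ∈ Λ, ∀ i : Fin q, 0 < 1 - lam * γ i := by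
    intro lam hlam i
    have h1 : γ i ≤ γ i0 := hγ0 i
    have h2 : γ iq ≤ γ i := hγq i
    rw [hΛdef] at hlam
    rcases (hne i).lt_or_gt with hgi | hgi
    · -- γ i < 0, so we are in the Ioo case
      have hiqneg : γ iq < 0 := lt_of_le_of_lt h2 hgi
      rw [if_neg (not_lt.mpr hiqneg.le)] at hlam
      obtain ⟨hl, _⟩ := hlam
      have ht : γ iq * (γ iq)⁻¹ = 1 := mul_inv_cancel₀ hiqneg.ne
      have htneg : (γ iq)⁻¹ < 0 := inv_lt_zero.mpr hiqneg
      have hmul : lam * γ i < (γ iq)⁻¹ * γ i := by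
        exact mul_lt_mul_of_neg_right hl hgi
      have h3 : (γ iq)⁻¹ * γ i ≤ (γ iq)⁻¹ * γ iq :=
        mul_le_mul_of_nonpos_left h2 htneg.le
      nlinarith
    · -- γ i > 0
      have hl : lam < (γ i0)⁻¹ := by
        by_cases hcase : 0 < γ iq
        · rw [if_pos hcase] at hlam; exact hlam
        · rw [if_neg hcase] at hlam; exact hlam.2
      have h4 : (γ i0)⁻¹ ≤ (γ i)⁻¹ := by
        apply inv_anti₀ hgi h1
      have hmul : lam * γ i < (γ i)⁻¹ * γ i := mul_lt_mul_of_pos_right (lt_of_lt_of_le hl h4) hgi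
      have ht : (γ i)⁻¹ * γ i = 1 := inv_mul_cancel₀ hgi.ne'
      linarith
  -- the matrix I - λΔ is the explicit diagonal matrix
  have hA : ∀ lam : ℝ, (1 : Matrix (Fin m' ⊕ Fin q) (Fin m' ⊕ Fin q) ℝ) - lam • Δ =
      Matrix.diagonal (Sum.elim (fun _ : Fin m' => (1:ℝ)) (fun i => 1 - lam * γ i)) := by
    intro lam
    rw [hΔdef, ← Matrix.diagonal_one, ← Matrix.diagonal_smul, Matrix.diagonal_sub]
    exact congrArg Matrix.diagonal (funext fun j => by cases j <;> simp)
  -- explicit formula for wfun on Λ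
  have hwfun : ∀ lam ∈ Λ, wfun lam =
      Sum.elim (fun _ : Fin m' => lam * ε) (fun i => δ i / (1 - lam * γ i)) := by
    intro lam hlam
    have hinv : (((1 : Matrix (Fin m' ⊕ Fin q) (Fin m' ⊕ Fin q) ℝ) - lam • Δ))⁻¹ =
        Matrix.diagonal (Sum.elim (fun _ : Fin m' => (1:ℝ)) (fun i => (1 - lam * γ i)⁻¹)) := by
      rw [hA lam]
      apply Matrix.inv_eq_right_inv
      rw [Matrix.diagonal_mul_diagonal]
      ext j k
      by_cases hjk : j = k
      · subst hjk
        rw [Matrix.diagonal_apply_eq, Matrix.one_apply_eq]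
        cases j with
        | inl a => simp
        | inr i => simpa using mul_inv_cancel₀ (hupos lam hlam i).ne'
      · rw [Matrix.diagonal_apply_ne _ hjk, Matrix.one_apply_ne hjk]
    show (((1 : Matrix (Fin m' ⊕ Fin q) (Fin m' ⊕ Fin q) ℝ) - lam • Δ))⁻¹.mulVec (w0 + lam • d) = _
    rw [hinv]
    funext j
    rw [Matrix.mulVec_diagonal]
    cases j with
    | inl a => simp [hw0def, hddef]
    | inr i => simp [hw0def, hddef, div_eq_inv_mul]
  -- explicit formula for f on Λ
  have hf : ∀ lam ∈ Λ, f lam =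
      (∑ i, γ i * (δ i / (1 - lam * γ i))^2) + 2 * (lam * ε^2) - kstar := by
    intro lam hlam
    rw [hfdef, hQsdef, hwfun lam hlam, hΔdef, hddef]
    simp only [dotProduct, Matrix.mulVec_diagonal, Fintype.sum_sum_type,
      Sum.elim_inl, Sum.elim_inr]
    have h1 : ∀ i : Fin q, (δ i / (1 - lam * γ i)) * (γ i * (δ i / (1 - lam * γ i)))
        = γ i * (δ i / (1 - lam * γ i))^2 := by intro i; ring
    rw [Finset.sum_congr rfl fun i _ => h1 i]
    have h2 : ∀ a : Fin m', (lam * ε) * ((0:ℝ) * (lam * ε)) = 0 := by intro a; ring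
    rw [Finset.sum_congr rfl fun a _ => h2 a, Finset.sum_const, Finset.sum_const]
    have h3 : ∀ i : Fin q, (0:ℝ) * (δ i / (1 - lam * γ i)) = 0 := by intro i; ring
    rw [Finset.sum_congr rfl fun i _ => h3 i, Finset.sum_const]
    rcases Nat.le_one_iff_eq_zero_or_eq_one.mp hm'le with h0 | h1'
    · have hε0 : ε = 0 := hm'.mpr h0
      subst h0
      simp [hε0]
    · subst h1'
      simp [Finset.card_univ]
      ring
  -- weak monotonicity of f on Λ
  have hmonoW : ∀ a ∈ Λ, ∀ b ∈ Λ, a ≤ b → f a ≤ f b := by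
    intro a ha b hb hab
    rw [hf a ha, hf b hb]
    have hsum : (∑ i, γ i * (δ i / (1 - a * γ i))^2) ≤ ∑ i, γ i * (δ i / (1 - b * γ i))^2 :=
      Finset.sum_le_sum fun i _ => auxTermLe (γ i) (δ i) a b hab (hupos a ha i) (hupos b hb i)
    have h2 : a * ε^2 ≤ b * ε^2 := mul_le_mul_of_nonneg_right hab (sq_nonneg ε)
    linarith
  -- strict monotonicity in the nondegenerate case
  have hmonoS : ∀ a ∈ Λ, ∀ b ∈ Λ, a < b → (ε ≠ 0 ∨ ∃ i, δ i ≠ 0) → f a < f b := by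
    intro a ha b hb hab hnd
    rw [hf a ha, hf b hb]
    have hsum : (∑ i, γ i * (δ i / (1 - a * γ i))^2) ≤ ∑ i, γ i * (δ i / (1 - b * γ i))^2 :=
      Finset.sum_le_sum fun i _ => auxTermLe (γ i) (δ i) a b hab.le (hupos a ha i) (hupos b hb i)
    rcases hnd with hεne | ⟨i, hi⟩
    · have hε2 : (0:ℝ) < ε^2 := lt_of_le_of_ne (sq_nonneg ε) (Ne.symm (pow_ne_zero 2 hεne))
      have h2 : a * ε^2 < b * ε^2 := mul_lt_mul_of_pos_right hab hε2
      linarith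
    · have hsum' : (∑ i, γ i * (δ i / (1 - a * γ i))^2) < ∑ i, γ i * (δ i / (1 - b * γ i))^2 :=
        Finset.sum_lt_sum
          (fun i _ => auxTermLe (γ i) (δ i) a b hab.le (hupos a ha i) (hupos b hb i))
          ⟨i, Finset.mem_univ i,
            auxTermLt (γ i) (δ i) a b (hne i) hi hab (hupos a ha i) (hupos b hb i)⟩
      have h2 : a * ε^2 ≤ b * ε^2 := mul_le_mul_of_nonneg_right hab.le (sq_nonneg ε)
      linarith
  -- degenerate case: f is constant
  have hconst : ε = 0 → (∀ i, δ i = 0) → ∀ x ∈ Λ, f x = -kstar := by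
    intro hε0 hδ0 x hx
    rw [hf x hx]
    simp [hε0, hδ0]
  -- two specific points of Λ
  have h0mem : (0:ℝ) ∈ Λ := by
    rw [hΛdef]
    have : (0:ℝ) < (γ i0)⁻¹ := inv_pos.mpr hγ0pos
    split_ifs with hcase
    · exact this
    · exact ⟨inv_lt_zero.mpr (lt_of_le_of_ne (not_lt.mp hcase) (hne iq)), this⟩
  have hpmem : (γ i0)⁻¹ / 2 ∈ Λ := by
    rw [hΛdef]
    have h1 : (0:ℝ) < (γ i0)⁻¹ := inv_pos.mpr hγ0pos
    split_ifs with hcase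
    · exact by simpa using by linarith
    · constructor
      · have : γ iq < 0 := lt_of_le_of_ne (not_lt.mp hcase) (hne iq)
        have := inv_lt_zero.mpr this
        linarith
      · show (γ i0)⁻¹ / 2 < (γ i0)⁻¹
        linarith
  have h0ltp : (0:ℝ) < (γ i0)⁻¹ / 2 := by
    have h1 : (0:ℝ) < (γ i0)⁻¹ := inv_pos.mpr hγ0pos
    linarith
  -- every point of Λ is straddled by points of Λ
  have hstraddle : ∀ x ∈ Λ, ∃ y ∈ Λ, ∃ z ∈ Λ, y < x ∧ x < z := by
    intro x hx
    rw [hΛdef] at hx ⊢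
    split_ifs at hx ⊢ with hcase
    · refine ⟨x - 1, ?_, (x + (γ i0)⁻¹)/2, ?_, by linarith, ?_⟩
      · simp only [Set.mem_Iio] at hx ⊢; linarith
      · simp only [Set.mem_Iio] at hx ⊢; linarith
      · simp only [Set.mem_Iio] at hx; linarith
    · obtain ⟨hx1, hx2⟩ := hx
      refine ⟨((γ iq)⁻¹ + x)/2, ⟨by linarith, by linarith⟩,
        (x + (γ i0)⁻¹)/2, ⟨by linarith, by linarith⟩, by linarith, by linarith⟩
  -- the minimiser characterisation at a zero of f
  have hkey : ∀ lamv ∈ Λ, f lamv = 0 →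
      {w ∈ W | ∀ w' ∈ W, L w ≤ L w'} = {wfun lamv} := by
    intro lamv hlamv hf0
    set u : Fin m' ⊕ Fin q → ℝ :=
      Sum.elim (fun _ : Fin m' => (1:ℝ)) (fun i => 1 - lamv * γ i) with hu
    set e : Fin m' ⊕ Fin q → ℝ := Sum.elim (fun _ : Fin m' => (0:ℝ)) γ with he
    have hupos' : ∀ j, 0 < u j := by
      rintro (a | i)
      · simp [hu]
      · simpa [hu] using hupos lamv hlamv i
    have hue : ∀ j, u j = 1 - lamv * e j := by
      rintro (a | i) <;> simp [hu, he]
    have hwv := hwfun lamv hlamv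
    have hnorm : ∀ j, u j * (wfun lamv) j = w0 j + lamv * d j := by
      rintro (a | i)
      · simp [hu, hwv, hw0def, hddef]
      · rw [hwv]
        simp only [hu, Sum.elim_inr, hw0def, hddef]
        rw [mul_div_cancel₀ _ (hupos lamv hlamv i).ne']
        ring
    have hwhatW : wfun lamv ∈ W := by rw [hWdef]; exact hf0
    -- key quadratic identity
    have hiden : ∀ w : Fin m' ⊕ Fin q → ℝ, L w - lamv * Qs w =
        (∑ j, u j * (w j - wfun lamv j)^2) + (L (wfun lamv) - lamv * Qs (wfun lamv)) := by
      intro w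
      rw [hLdef, hLdef, hQsdef, hQsdef, hΔdef]
      simp only [dotProduct, Matrix.mulVec_diagonal, Pi.sub_apply]
      have hsum : ∀ x : Fin m' ⊕ Fin q → ℝ,
          (∑ j, (x j - w0 j) * (x j - w0 j)) -
            lamv * ((∑ j, x j * (e j * x j)) + 2 * (∑ j, d j * x j) - kstar) =
          (∑ j, ((x j - w0 j) * (x j - w0 j) - lamv * (x j * (e j * x j))
              - 2 * lamv * (d j * x j))) + lamv * kstar := by
        intro x
        rw [Finset.sum_sub_distrib, Finset.sum_sub_distrib, ← Finset.mul_sum, ← Finset.mul_sum]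
        ring
      rw [hsum w, hsum (wfun lamv)]
      have hper : ∀ j, (w j - w0 j) * (w j - w0 j) - lamv * (w j * (e j * w j))
            - 2 * lamv * (d j * w j)
          = u j * (w j - wfun lamv j)^2 +
            ((wfun lamv j - w0 j) * (wfun lamv j - w0 j)
              - lamv * (wfun lamv j * (e j * wfun lamv j))
              - 2 * lamv * (d j * wfun lamv j)) := by
        intro j
        have h1 := hnorm j
        rw [hue j] at h1 ⊢
        linear_combination (2 * w j - 2 * wfun lamv j) * h1
      rw [Finset.sum_congr rfl fun j _ => hper j, Finset.sum_add_distrib]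
      ring
    have hLcmp : ∀ w ∈ W, L w = (∑ j, u j * (w j - wfun lamv j)^2) + L (wfun lamv) := by
      intro w hw
      have h1 := hiden w
      rw [hWdef] at hw
      rw [hw, (hWdef _).mp hwhatW] at h1
      simpa using h1
    have hSnn : ∀ w : Fin m' ⊕ Fin q → ℝ, 0 ≤ ∑ j, u j * (w j - wfun lamv j)^2 :=
      fun w => Finset.sum_nonneg fun j _ => mul_nonneg (hupos' j).le (sq_nonneg _)
    ext w
    simp only [Set.mem_setOf_eq, Set.mem_singleton_iff]
    constructor
    · rintro ⟨hwW, hmin⟩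
      have h1 : L w ≤ L (wfun lamv) := hmin _ hwhatW
      have h2 := hLcmp w hwW
      have hS0 : ∑ j, u j * (w j - wfun lamv j)^2 = 0 :=
        le_antisymm (by linarith) (hSnn w)
      funext j
      have h3 := (Finset.sum_eq_zero_iff_of_nonneg
        (fun j _ => mul_nonneg (hupos' j).le (sq_nonneg _))).mp hS0 j (Finset.mem_univ j)
      have h4 : (w j - wfun lamv j)^2 = 0 := by
        rcases mul_eq_zero.mp h3 with h | h
        · exact absurd h (hupos' j).ne'
        · exact h
      have := pow_eq_zero_iff (n := 2) (by norm_num) |>.mp h4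
      linarith [this]
    · rintro rfl
      refine ⟨hwhatW, fun w' hw' => ?_⟩
      rw [hLcmp w' hw']
      linarith [hSnn w']
  refine ⟨?_, ?_, ?_⟩
  -- case (a)
  · rintro ⟨⟨lamn, hlamn, hfn⟩, ⟨lamp, hlamp, hfp⟩⟩
    have hnd : ε ≠ 0 ∨ ∃ i, δ i ≠ 0 := by
      by_contra h
      push_neg at h
      obtain ⟨hε0, hδ0⟩ := h
      rw [hconst hε0 hδ0 lamn hlamn] at hfn
      rw [hconst hε0 hδ0 lamp hlamp] at hfp
      linarith
    have hlt : lamn < lamp := by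
      by_contra h
      push_neg at h
      have := hmonoW lamp hlamp lamn hlamn h
      linarith
    have hsub : Set.Icc lamn lamp ⊆ Λ := by
      rw [hΛdef] at hlamn hlamp ⊢
      split_ifs at hlamn hlamp ⊢ with hcase
      · intro x hx
        simp only [Set.mem_Iio] at hlamp ⊢
        exact lt_of_le_of_lt hx.2 hlamp
      · intro x hx
        exact ⟨lt_of_lt_of_le hlamn.1 hx.1, lt_of_le_of_lt hx.2 hlamp.2⟩
    have hgcont : ContinuousOn
        (fun lam => (∑ i, γ i * (δ i / (1 - lam * γ i))^2) + 2 * (lam * ε^2) - kstar) Λ := by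
      apply ContinuousOn.sub
      · apply ContinuousOn.add
        · apply continuousOn_finset_sum
          intro i _
          apply ContinuousOn.mul continuousOn_const
          apply ContinuousOn.pow
          exact ContinuousOn.div continuousOn_const (by fun_prop)
            (fun lam hlam => (hupos lam hlam i).ne')
        · fun_prop
      · exact continuousOn_const
    have hcont : ContinuousOn f (Set.Icc lamn lamp) := by
      apply ContinuousOn.congr (hgcont.mono hsub)
      exact fun x hx => hf x (hsub hx)
    have hIVT := intermediate_value_Icc hlt.le hcont
    have h0mem' : (0:ℝ) ∈ Set.Icc (f lamn) (f lamp) := ⟨hfn.le, hfp.le⟩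
    obtain ⟨lamh, hlamhIcc, hlamh0⟩ := hIVT h0mem'
    have hlamhΛ : lamh ∈ Λ := hsub hlamhIcc
    refine ⟨lamh, hlamhΛ, hlamh0, ?_, hkey lamh hlamhΛ hlamh0⟩
    intro lam hlam hflam
    rcases lt_trichotomy lam lamh with h | h | h
    · have := hmonoS lam hlam lamh hlamhΛ h hnd
      rw [hflam, hlamh0] at this
      exact absurd this (lt_irrefl 0)
    · exact h
    · have := hmonoS lamh hlamhΛ lam hlam h hnd
      rw [hflam, hlamh0] at this
      exact absurd this (lt_irrefl 0)
  -- case (b)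
  · rintro ⟨hglb, hlub⟩
    have hall : ∀ lam ∈ Λ, f lam = 0 := by
      intro lam hlam
      have h1 : f lam ≤ 0 := hlub.1 ⟨lam, hlam, rfl⟩
      have h2 : 0 ≤ f lam := hglb.1 ⟨lam, hlam, rfl⟩
      linarith
    refine ⟨hall, ?_⟩
    have hdeg : ε = 0 ∧ ∀ i, δ i = 0 := by
      by_contra h
      have hnd : ε ≠ 0 ∨ ∃ i, δ i ≠ 0 := by
        by_contra h2
        push_neg at h2
        exact h ⟨h2.1, h2.2⟩
      have := hmonoS 0 h0mem _ hpmem h0ltp hnd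
      rw [hall 0 h0mem, hall _ hpmem] at this
      exact absurd this (lt_irrefl 0)
    obtain ⟨hε0, hδ0⟩ := hdeg
    have hk0 : kstar = 0 := by
      have := hall 0 h0mem
      rw [hconst hε0 hδ0 0 h0mem] at this
      linarith
    have hw0zero : w0 = 0 := by
      rw [hw0def]
      funext j
      cases j with
      | inl a => rfl
      | inr i => exact hδ0 i
    have hdzero : d = 0 := by
      rw [hddef]
      funext j
      cases j with
      | inl a => exact hε0
      | inr i => rfl
    have h0W : (0 : Fin m' ⊕ Fin q → ℝ) ∈ W := by
      rw [hWdef, hQsdef, hk0]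
      simp
    have hL0 : L 0 = 0 := by
      rw [hLdef, hw0zero]
      simp
    have hLnn : ∀ w, 0 ≤ L w := by
      intro w
      rw [hLdef, hw0zero, sub_zero]
      exact Finset.sum_nonneg fun j _ => mul_self_nonneg _
    ext w
    simp only [Set.mem_setOf_eq, Set.mem_singleton_iff]
    constructor
    · rintro ⟨hwW, hmin⟩
      have h1 : L w ≤ 0 := hL0 ▸ hmin 0 h0W
      have h2 : L w = 0 := le_antisymm h1 (hLnn w)
      rw [hLdef, hw0zero, sub_zero] at h2
      exact dotProduct_self_eq_zero.mp h2
    · rintro rfl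
      exact ⟨h0W, fun w' hw' => hL0 ▸ hLnn w'⟩
  -- case (c)
  · rintro ⟨hn1, hn2⟩
    have hnozero : ∀ lam ∈ Λ, f lam ≠ 0 := by
      intro lam hlam h0
      by_cases hnd : ε ≠ 0 ∨ ∃ i, δ i ≠ 0
      · obtain ⟨y, hy, z, hz, hyx, hxz⟩ := hstraddle lam hlam
        apply hn1
        constructor
        · exact ⟨y, hy, by rw [← h0]; exact hmonoS y hy lam hlam hyx hnd⟩
        · exact ⟨z, hz, by rw [← h0]; exact hmonoS lam hlam z hz hxz hnd⟩
      · push_neg at hnd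
        obtain ⟨hε0, hδ0⟩ := hnd
        have hk0 : kstar = 0 := by
          rw [hconst hε0 hδ0 lam hlam] at h0
          linarith
        have hzero : ∀ x ∈ Λ, f x = 0 := by
          intro x hx
          rw [hconst hε0 hδ0 x hx, hk0, neg_zero]
        have himg : f '' Λ = {0} := by
          apply subset_antisymm
          · rintro _ ⟨x, hx, rfl⟩
            exact hzero x hx
          · rintro x hx
            rw [Set.mem_singleton_iff] at hx
            exact ⟨0, h0mem, by rw [hx]; exact hzero 0 h0mem⟩
        exact hn2 ⟨himg ▸ isGLB_singleton, himg ▸ isLUB_singleton⟩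
    refine ⟨hnozero, ?_⟩
    intro lam hlam w hwW heq
    have hweq : w = wfun lam := by
      funext j
      have hj : (((1 : Matrix (Fin m' ⊕ Fin q) (Fin m' ⊕ Fin q) ℝ) - lam • Δ).mulVec w) j
          = (w0 + lam • d) j := by rw [heq]
      rw [hA lam, Matrix.mulVec_diagonal] at hj
      rw [hwfun lam hlam]
      cases j with
      | inl a =>
        simp only [Sum.elim_inl, one_mul, Pi.add_apply, Pi.smul_apply, smul_eq_mul,
          hw0def, hddef] at hj
        simpa using hj
      | inr i =>
        simp only [Sum.elim_inr, Pi.add_apply, Pi.smul_apply, smul_eq_mul,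
          hw0def, hddef, mul_zero, add_zero] at hj
        rw [Sum.elim_inr, eq_div_iff (hupos lam hlam i).ne']
        linarith [hj]
    apply hnozero lam hlam
    rw [hfdef, ← hweq]
    exact (hWdef w).mp hwW
end

section
/- Let q ≥ 2, let γ₁ > ⋯ > γ_q be nonzero reals with γ₁ > 0, let δ = (δ₁, …, δ_q) with δᵢ ≥ 0, ε ≥ 0, k* ∈ ℝ, and form the regular dimension-reduced data: Δ = diag(γ₁, …, γ_q), d = 0, w₀ = δ when ε = 0, or Δ = diag(0, γ₁, …, γ_q), d = ε·e₁, w₀ = (0, δ) when ε > 0; write w = (y, z₁, …, z_q) with the y-coordinate present only when ε > 0. Let W := {w : wᵀΔw + 2dᵀw = k*} be nonempty, and set ŷ₁ := ε/γ₁, ẑ₍₁₎ᵢ := δᵢ/(1 − γᵢ/γ₁) for i = 2, …, q, and f₁ := Σᵢ₌₂^q γᵢδᵢ²/(1 − γᵢ/γ₁)² + 2ε²/γ₁ − k*. Then W₁ := {w ∈ W : (I − γ₁⁻¹Δ)w = w₀ + γ₁⁻¹d} is nonempty if and only if δ₁ = 0 and f₁ ≤ 0; and in that case the set of global minimisers of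 ‖w − w₀‖² over W equals {w : y = ŷ₁ (when ε > 0), zᵢ = ẑ₍₁₎ᵢ for i = 2, …, q, and z₁² = (−f₁)/γ₁}. -/
open Matrix

/-- Boundary case B₁ (`λ = 1/γ₁`) for a regular dimension-reduced canonical form
(coordinates `Fin m' ⊕ Fin q`, `m' = 0` iff `ε = 0`): the set `W₁` of feasible points
satisfying the normal equations at `λ = 1/γ₁` is nonempty iff `δ₁ = 0` and `f₁ ≤ 0`,
and in that case the set of global minimisers of `‖w − w₀‖²` over `W` is exactly
`{w : y = ε/γ₁, zᵢ = δᵢ/(1 − γᵢ/γ₁) (i ≠ 1), z₁² = (−f₁)/γ₁}`. -/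
theorem stmt18 {q : ℕ} (hq : 2 ≤ q) (γ : Fin q → ℝ) (hanti : StrictAnti γ)
    (hne : ∀ i, γ i ≠ 0) (hpos : 0 < γ ⟨0, by omega⟩)
    (δ : Fin q → ℝ) (hδ : ∀ i, 0 ≤ δ i) (ε : ℝ) (hε : 0 ≤ ε) (kstar : ℝ)
    (m' : ℕ) (hm'le : m' ≤ 1) (hm' : ε = 0 ↔ m' = 0) :
    let i0 : Fin q := ⟨0, by omega⟩
    let Δ : Matrix (Fin m' ⊕ Fin q) (Fin m' ⊕ Fin q) ℝ :=
      Matrix.diagonal (Sum.elim (fun _ => (0 : ℝ)) γ)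
    let d : Fin m' ⊕ Fin q → ℝ := Sum.elim (fun _ => ε) (fun _ => 0)
    let w0 : Fin m' ⊕ Fin q → ℝ := Sum.elim (fun _ => (0 : ℝ)) δ
    let W : Set (Fin m' ⊕ Fin q → ℝ) := {w | w ⬝ᵥ Δ.mulVec w + 2 * (d ⬝ᵥ w) = kstar}
    let L : (Fin m' ⊕ Fin q → ℝ) → ℝ := fun w => (w - w0) ⬝ᵥ (w - w0)
    let f1 : ℝ := (∑ i ∈ Finset.univ.erase i0, γ i * δ i ^ 2 / (1 - γ i / γ i0) ^ 2)
      + 2 * ε ^ 2 / γ i0 - kstar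
    let W1 : Set (Fin m' ⊕ Fin q → ℝ) :=
      {w ∈ W | ((1 : Matrix (Fin m' ⊕ Fin q) (Fin m' ⊕ Fin q) ℝ)
          - (γ i0)⁻¹ • Δ).mulVec w = w0 + (γ i0)⁻¹ • d}
    W.Nonempty →
      (W1.Nonempty ↔ (δ i0 = 0 ∧ f1 ≤ 0)) ∧
      ((δ i0 = 0 ∧ f1 ≤ 0) →
        {w ∈ W | ∀ w' ∈ W, L w ≤ L w'}
          = {w | (∀ j : Fin m', w (Sum.inl j) = ε / γ i0) ∧
              (∀ i : Fin q, i ≠ i0 → w (Sum.inr i) = δ i / (1 - γ i / γ i0)) ∧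
              (w (Sum.inr i0)) ^ 2 = (-f1) / γ i0}) := by
  intro i0 Δ d w0 W L f1 W1 hWne
  have hg0 : 0 < γ i0 := hpos
  have hgne : γ i0 ≠ 0 := ne_of_gt hg0
  have hlt : ∀ i : Fin q, i ≠ i0 → γ i < γ i0 := fun i hi =>
    hanti (lt_of_le_of_ne (by simp [i0, Fin.le_def]) (Ne.symm hi))
  have ha : ∀ i : Fin q, i ≠ i0 → 0 < 1 - γ i / γ i0 := fun i hi => by
    have := hlt i hi
    rw [sub_pos, div_lt_one hg0]; exact this
  have hane : ∀ i : Fin q, i ≠ i0 → 1 - γ i / γ i0 ≠ 0 := fun i hi => ne_of_gt (ha i hi)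
  have hf1 : f1 = (∑ i ∈ Finset.univ.erase i0, γ i * δ i ^ 2 / (1 - γ i / γ i0) ^ 2)
      + 2 * ε ^ 2 / γ i0 - kstar := rfl
  -- Q formula
  have hQ : ∀ w : Fin m' ⊕ Fin q → ℝ,
      w ⬝ᵥ Δ.mulVec w + 2 * (d ⬝ᵥ w)
        = (∑ i : Fin q, γ i * w (Sum.inr i) ^ 2) + 2 * ε * (∑ j : Fin m', w (Sum.inl j)) := by
    intro w
    show w ⬝ᵥ (Matrix.diagonal (Sum.elim (fun _ => (0:ℝ)) γ)).mulVec w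
        + 2 * ((Sum.elim (fun _ => ε) (fun _ => 0) : Fin m' ⊕ Fin q → ℝ) ⬝ᵥ w) = _
    simp only [dotProduct, Matrix.mulVec_diagonal, Fintype.sum_sum_type,
      Sum.elim_inl, Sum.elim_inr, zero_mul, mul_zero, Finset.sum_const_zero,
      add_zero, zero_add]
    rw [Finset.mul_sum, Finset.mul_sum]
    congr 1
    · exact Finset.sum_congr rfl fun i _ => by ring
    · exact Finset.sum_congr rfl fun j _ => by ring
  have hWiff : ∀ w : Fin m' ⊕ Fin q → ℝ,
      w ∈ W ↔ w ⬝ᵥ Δ.mulVec w + 2 * (d ⬝ᵥ w) = kstar := fun w => Iff.rfl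
  -- Q value on points with the fixed coordinates
  have hQS : ∀ w : Fin m' ⊕ Fin q → ℝ,
      (∀ j, w (Sum.inl j) = ε / γ i0) →
      (∀ i, i ≠ i0 → w (Sum.inr i) = δ i / (1 - γ i / γ i0)) →
      w ⬝ᵥ Δ.mulVec w + 2 * (d ⬝ᵥ w) = γ i0 * (w (Sum.inr i0)) ^ 2 + (f1 + kstar) := by
    intro w hy hz
    rw [hQ]
    have h1 : ∑ i : Fin q, γ i * w (Sum.inr i) ^ 2
        = γ i0 * w (Sum.inr i0) ^ 2
          + ∑ i ∈ Finset.univ.erase i0, γ i * δ i ^ 2 / (1 - γ i / γ i0) ^ 2 := by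
      rw [← Finset.add_sum_erase _ _ (Finset.mem_univ i0)]
      congr 1
      refine Finset.sum_congr rfl fun i hi => ?_
      rw [hz i (Finset.ne_of_mem_erase hi), div_pow, mul_div_assoc]
    have h2 : 2 * ε * (∑ j : Fin m', w (Sum.inl j)) = 2 * ε ^ 2 / γ i0 := by
      simp only [hy, Finset.sum_const, Finset.card_univ, Fintype.card_fin, nsmul_eq_mul]
      interval_cases m'
      · have h0 : ε = 0 := hm'.mpr rfl
        simp [h0]
      · field_simp; ring
    rw [h1, h2, hf1]; ring
  -- Normal equations componentwise
  have hNE : ∀ w : Fin m' ⊕ Fin q → ℝ,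
      (((1 : Matrix (Fin m' ⊕ Fin q) (Fin m' ⊕ Fin q) ℝ) - (γ i0)⁻¹ • Δ).mulVec w
          = w0 + (γ i0)⁻¹ • d) ↔
      ((∀ j, w (Sum.inl j) = ε / γ i0) ∧ δ i0 = 0 ∧
        ∀ i, i ≠ i0 → w (Sum.inr i) = δ i / (1 - γ i / γ i0)) := by
    intro w
    rw [funext_iff, Sum.forall]
    have hcomp : ∀ k, (((1 : Matrix (Fin m' ⊕ Fin q) (Fin m' ⊕ Fin q) ℝ)
        - (γ i0)⁻¹ • Δ).mulVec w) k
        = w k - (γ i0)⁻¹ * (Sum.elim (fun _ => (0:ℝ)) γ k * w k) := by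
      intro k
      rw [Matrix.sub_mulVec, Matrix.smul_mulVec, Matrix.one_mulVec]
      show w k - (γ i0)⁻¹ • ((Matrix.diagonal (Sum.elim (fun _ => (0:ℝ)) γ)).mulVec w) k = _
      rw [Matrix.mulVec_diagonal]
      simp
    have hrhs1 : ∀ j, (w0 + (γ i0)⁻¹ • d) (Sum.inl j) = (γ i0)⁻¹ * ε := by
      intro j
      show (Sum.elim (fun _ => (0:ℝ)) δ (Sum.inl j)) + (γ i0)⁻¹ * (Sum.elim (fun _ => ε) (fun _ => 0) (Sum.inl j)) = _
      simp
    have hrhs2 : ∀ i, (w0 + (γ i0)⁻¹ • d) (Sum.inr i) = δ i := by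
      intro i
      show (Sum.elim (fun _ => (0:ℝ)) δ (Sum.inr i)) + (γ i0)⁻¹ * (Sum.elim (fun _ => ε) (fun _ => 0) (Sum.inr i)) = _
      simp
    constructor
    · rintro ⟨h1, h2⟩
      refine ⟨fun j => ?_, ?_, fun i hi => ?_⟩
      · have := h1 j
        rw [hcomp, hrhs1] at this
        simp only [Sum.elim_inl, zero_mul, mul_zero, sub_zero] at this
        rw [this, div_eq_inv_mul]
      · have := h2 i0
        rw [hcomp, hrhs2] at this
        simp only [Sum.elim_inr] at this
        rw [inv_mul_cancel_left₀ hgne, sub_self] at this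
        exact this.symm
      · have := h2 i
        rw [hcomp, hrhs2] at this
        simp only [Sum.elim_inr] at this
        rw [eq_div_iff (hane i hi)]
        linear_combination this
    · rintro ⟨h1, h2, h3⟩
      constructor
      · intro j
        rw [hcomp, hrhs1]
        simp only [Sum.elim_inl, zero_mul, mul_zero, sub_zero]
        rw [h1 j, div_eq_inv_mul]
      · intro i
        rw [hcomp, hrhs2]
        simp only [Sum.elim_inr]
        by_cases hi : i = i0
        · subst hi
          rw [inv_mul_cancel_left₀ hgne, sub_self, h2]
        · rw [h3 i hi]
          have hai := hane i hi
          have hbi : γ i0 - γ i ≠ 0 := sub_ne_zero.mpr (hlt i hi).ne'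
          field_simp
  -- L value
  have hLval : ∀ w : Fin m' ⊕ Fin q → ℝ,
      L w = (∑ j : Fin m', w (Sum.inl j) ^ 2) + ∑ i : Fin q, (w (Sum.inr i) - δ i) ^ 2 := by
    intro w
    show (w - w0) ⬝ᵥ (w - w0) = _
    simp only [dotProduct, Fintype.sum_sum_type, Pi.sub_apply]
    show (∑ j : Fin m', (w (Sum.inl j) - Sum.elim (fun _ => (0:ℝ)) δ (Sum.inl j)) * (w (Sum.inl j) - Sum.elim (fun _ => (0:ℝ)) δ (Sum.inl j)))
      + (∑ i : Fin q, (w (Sum.inr i) - Sum.elim (fun _ => (0:ℝ)) δ (Sum.inr i)) * (w (Sum.inr i) - Sum.elim (fun _ => (0:ℝ)) δ (Sum.inr i))) = _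
    simp only [Sum.elim_inl, Sum.elim_inr, sub_zero]
    congr 1
    · exact Finset.sum_congr rfl fun j _ => (sq _).symm
    · exact Finset.sum_congr rfl fun i _ => (sq _).symm
  -- key decomposition
  have hdec : δ i0 = 0 → ∀ w ∈ W, L w =
      kstar / γ i0
      + ((∑ j : Fin m', (w (Sum.inl j) - ε / γ i0) ^ 2)
        + ∑ i ∈ Finset.univ.erase i0,
            (1 - γ i / γ i0) * (w (Sum.inr i) - δ i / (1 - γ i / γ i0)) ^ 2)
      + (-(m' : ℝ) * (ε / γ i0) ^ 2
        + ∑ i ∈ Finset.univ.erase i0, (δ i ^ 2 - δ i ^ 2 / (1 - γ i / γ i0))) := by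
    intro hδ0 w hw
    have hk : (∑ i : Fin q, γ i * w (Sum.inr i) ^ 2)
        + 2 * ε * (∑ j : Fin m', w (Sum.inl j)) = kstar := by
      rw [← hQ w]; exact hw
    rw [hLval]
    have e1 : ∑ j : Fin m', w (Sum.inl j) ^ 2
        = (∑ j : Fin m', (w (Sum.inl j) - ε / γ i0) ^ 2)
          + (2 * ε / γ i0) * (∑ j : Fin m', w (Sum.inl j))
          - (m' : ℝ) * (ε / γ i0) ^ 2 := by
      rw [Finset.mul_sum]
      rw [show ((m' : ℝ)) * (ε / γ i0) ^ 2
          = ∑ _j : Fin m', (ε / γ i0) ^ 2 by simp [Finset.sum_const, mul_comm]]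
      rw [← Finset.sum_add_distrib, ← Finset.sum_sub_distrib]
      exact Finset.sum_congr rfl fun j _ => by ring
    have e2 : ∑ i : Fin q, (w (Sum.inr i) - δ i) ^ 2
        = (∑ i : Fin q, (γ i / γ i0) * w (Sum.inr i) ^ 2)
          + ∑ i ∈ Finset.univ.erase i0,
              ((1 - γ i / γ i0) * (w (Sum.inr i) - δ i / (1 - γ i / γ i0)) ^ 2
                + (δ i ^ 2 - δ i ^ 2 / (1 - γ i / γ i0))) := by
      have step : ∑ i : Fin q, ((w (Sum.inr i) - δ i) ^ 2 - (γ i / γ i0) * w (Sum.inr i) ^ 2)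
          = ∑ i ∈ Finset.univ.erase i0,
              ((1 - γ i / γ i0) * (w (Sum.inr i) - δ i / (1 - γ i / γ i0)) ^ 2
                + (δ i ^ 2 - δ i ^ 2 / (1 - γ i / γ i0))) := by
        rw [← Finset.add_sum_erase _ _ (Finset.mem_univ i0)]
        rw [show (w (Sum.inr i0) - δ i0) ^ 2 - (γ i0 / γ i0) * w (Sum.inr i0) ^ 2 = 0 by
          rw [hδ0, div_self hgne]; ring]
        rw [zero_add]
        refine Finset.sum_congr rfl fun i hi => ?_
        have hai := hane i (Finset.ne_of_mem_erase hi)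
        have hbi : γ i0 - γ i ≠ 0 := sub_ne_zero.mpr (hlt i (Finset.ne_of_mem_erase hi)).ne'
        field_simp
        ring
      have := Finset.sum_sub_distrib (s := (Finset.univ : Finset (Fin q)))
        (f := fun i => (w (Sum.inr i) - δ i) ^ 2)
        (g := fun i => (γ i / γ i0) * w (Sum.inr i) ^ 2)
      rw [this] at step
      linarith [step]
    have e3 : (∑ i : Fin q, (γ i / γ i0) * w (Sum.inr i) ^ 2)
        = (∑ i : Fin q, γ i * w (Sum.inr i) ^ 2) / γ i0 := by
      rw [Finset.sum_div]
      exact Finset.sum_congr rfl fun i _ => by ring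
    rw [e1, e2, e3, Finset.sum_add_distrib]
    have : kstar / γ i0 = (∑ i : Fin q, γ i * w (Sum.inr i) ^ 2) / γ i0
        + 2 * ε / γ i0 * (∑ j : Fin m', w (Sum.inl j)) := by
      rw [← hk]; ring
    rw [this]; ring
  -- nonnegativity of the quadratic part
  have hPnn : ∀ w : Fin m' ⊕ Fin q → ℝ,
      0 ≤ (∑ j : Fin m', (w (Sum.inl j) - ε / γ i0) ^ 2)
        + ∑ i ∈ Finset.univ.erase i0,
            (1 - γ i / γ i0) * (w (Sum.inr i) - δ i / (1 - γ i / γ i0)) ^ 2 := by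
    intro w
    have h1 : 0 ≤ ∑ j : Fin m', (w (Sum.inl j) - ε / γ i0) ^ 2 :=
      Finset.sum_nonneg fun j _ => sq_nonneg _
    have h2 : 0 ≤ ∑ i ∈ Finset.univ.erase i0,
        (1 - γ i / γ i0) * (w (Sum.inr i) - δ i / (1 - γ i / γ i0)) ^ 2 :=
      Finset.sum_nonneg fun i hi =>
        mul_nonneg (ha i (Finset.ne_of_mem_erase hi)).le (sq_nonneg _)
    linarith
  -- the canonical point
  have hpoint : δ i0 = 0 → f1 ≤ 0 → ∃ w : Fin m' ⊕ Fin q → ℝ,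
      (∀ j, w (Sum.inl j) = ε / γ i0) ∧
      (∀ i, i ≠ i0 → w (Sum.inr i) = δ i / (1 - γ i / γ i0)) ∧
      (w (Sum.inr i0)) ^ 2 = (-f1) / γ i0 := by
    intro _ hle
    refine ⟨Sum.elim (fun _ => ε / γ i0)
      (fun i => if i = i0 then Real.sqrt (-f1 / γ i0) else δ i / (1 - γ i / γ i0)),
      fun j => rfl, fun i hi => by simp [hi], ?_⟩
    simp only [Sum.elim_inr, if_pos rfl]
    exact Real.sq_sqrt (div_nonneg (neg_nonneg.mpr hle) hg0.le)
  -- points with fixed coordinates: W membership iff z1^2 = -f1/γ1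
  have hWfix : ∀ w : Fin m' ⊕ Fin q → ℝ,
      (∀ j, w (Sum.inl j) = ε / γ i0) →
      (∀ i, i ≠ i0 → w (Sum.inr i) = δ i / (1 - γ i / γ i0)) →
      (w ∈ W ↔ (w (Sum.inr i0)) ^ 2 = (-f1) / γ i0) := by
    intro w hy hz
    rw [hWiff, hQS w hy hz]
    rw [eq_div_iff hgne]
    constructor
    · intro h; linarith
    · intro h; linarith [h]
  refine ⟨?_, ?_⟩
  · -- W1 nonempty iff
    constructor
    · rintro ⟨w, hwW, hweq⟩
      obtain ⟨hy, hδ0, hz⟩ := (hNE w).mp hweq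
      refine ⟨hδ0, ?_⟩
      have := (hWfix w hy hz).mp hwW
      have h2 : 0 ≤ (-f1) / γ i0 := this ▸ sq_nonneg _
      have := (div_nonneg_iff.mp h2)
      rcases this with ⟨h3, _⟩ | ⟨_, h4⟩
      · linarith
      · linarith
    · rintro ⟨hδ0, hle⟩
      obtain ⟨w, hy, hz, hz1⟩ := hpoint hδ0 hle
      exact ⟨w, (hWfix w hy hz).mpr hz1, (hNE w).mpr ⟨hy, hδ0, hz⟩⟩
  · -- minimiser set
    rintro ⟨hδ0, hle⟩
    obtain ⟨ws, hys, hzs, hz1s⟩ := hpoint hδ0 hle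
    have hwsW : ws ∈ W := (hWfix ws hys hzs).mpr hz1s
    have hs1 : ∑ j : Fin m', (ws (Sum.inl j) - ε / γ i0) ^ 2 = 0 :=
      Finset.sum_eq_zero fun j _ => by rw [hys j]; ring
    have hs2 : ∑ i ∈ Finset.univ.erase i0,
        (1 - γ i / γ i0) * (ws (Sum.inr i) - δ i / (1 - γ i / γ i0)) ^ 2 = 0 :=
      Finset.sum_eq_zero fun i hi => by rw [hzs i (Finset.ne_of_mem_erase hi)]; ring
    ext w
    simp only [Set.mem_setOf_eq, Set.mem_sep_iff]
    constructor
    · rintro ⟨hwW, hmin⟩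
      have key : L w ≤ L ws := hmin ws hwsW
      rw [hdec hδ0 w hwW, hdec hδ0 ws hwsW, hs1, hs2] at key
      have h1 : 0 ≤ ∑ j : Fin m', (w (Sum.inl j) - ε / γ i0) ^ 2 :=
        Finset.sum_nonneg fun j _ => sq_nonneg _
      have h2 : 0 ≤ ∑ i ∈ Finset.univ.erase i0,
          (1 - γ i / γ i0) * (w (Sum.inr i) - δ i / (1 - γ i / γ i0)) ^ 2 :=
        Finset.sum_nonneg fun i hi =>
          mul_nonneg (ha i (Finset.ne_of_mem_erase hi)).le (sq_nonneg _)
      have he1 : ∑ j : Fin m', (w (Sum.inl j) - ε / γ i0) ^ 2 = 0 := by linarith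
      have he2 : ∑ i ∈ Finset.univ.erase i0,
          (1 - γ i / γ i0) * (w (Sum.inr i) - δ i / (1 - γ i / γ i0)) ^ 2 = 0 := by linarith
      have hcy : ∀ j, w (Sum.inl j) = ε / γ i0 := by
        intro j
        have := (Finset.sum_eq_zero_iff_of_nonneg (fun j _ => sq_nonneg _)).mp he1 j
          (Finset.mem_univ j)
        have := pow_eq_zero_iff (n := 2) (by norm_num) |>.mp this
        linarith [this]
      have hcz : ∀ i, i ≠ i0 → w (Sum.inr i) = δ i / (1 - γ i / γ i0) := by
        intro i hi
        have hmem : i ∈ Finset.univ.erase i0 := Finset.mem_erase.mpr ⟨hi, Finset.mem_univ i⟩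
        have ht := (Finset.sum_eq_zero_iff_of_nonneg (fun i hi' =>
          mul_nonneg (ha i (Finset.ne_of_mem_erase hi')).le (sq_nonneg _))).mp he2 i hmem
        have hsq : (w (Sum.inr i) - δ i / (1 - γ i / γ i0)) ^ 2 = 0 := by
          rcases mul_eq_zero.mp ht with h | h
          · exact absurd h (hane i hi)
          · exact h
        have := pow_eq_zero_iff (n := 2) (by norm_num) |>.mp hsq
        linarith [this]
      exact ⟨hcy, hcz, (hWfix w hcy hcz).mp hwW⟩
    · rintro ⟨h1, h2, h3⟩
      have hwW : w ∈ W := (hWfix w h1 h2).mpr h3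
      refine ⟨hwW, fun w' hw' => ?_⟩
      rw [hdec hδ0 w hwW, hdec hδ0 w' hw']
      have hp1 : ∑ j : Fin m', (w (Sum.inl j) - ε / γ i0) ^ 2 = 0 :=
        Finset.sum_eq_zero fun j _ => by rw [h1 j]; ring
      have hp2 : ∑ i ∈ Finset.univ.erase i0,
          (1 - γ i / γ i0) * (w (Sum.inr i) - δ i / (1 - γ i / γ i0)) ^ 2 = 0 :=
        Finset.sum_eq_zero fun i hi => by rw [h2 i (Finset.ne_of_mem_erase hi)]; ring
      rw [hp1, hp2]
      linarith [hPnn w']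
end
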